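/- arXiv:2509.06960 — 14 statements merged into one kernel-verified Lean document; each statement's English description precedes it below -/
import Mathlib

section
/- Let (X,d) be a metric space and S, T, A : X → X. Suppose there exists φ ∈ Φ such that S, T, A satisfy the φ-contractive inequality involving rational expressions. Suppose there exists an (S,T,A)-orbit {xₙ} of some x₀ ∈ X. Then the sequence {Axₙ} is a Cauchy sequence. -/
open Filter Topology

set_option maxHeartbeats 2000000 in
/-- If `S`, `T`, `A` satisfy the φ-contractive inequality involving
rational expressions and there exists an `(S,T,A)`-orbit of some `x₀ ∈ X`, then
the sequence `{A xₙ}` is Cauchy. -/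
theorem stmt_1 {X : Type*} [MetricSpace X] (S T A : X → X) (φ : ℝ → ℝ)
    (hφc : ContinuousOn φ (Set.Ici 0))
    (hφm : MonotoneOn φ (Set.Ici 0))
    (hφ0 : ∀ t : ℝ, 0 ≤ t → 0 ≤ φ t)
    (hφlt : ∀ t : ℝ, 0 < t → φ t < t)
    (hc1 : ∀ x y : X, A x ≠ A y →
      dist (S x) (T y) ≤ φ (max (dist (A x) (A y))
        (max (dist (A x) (S x) * dist (A y) (T y) / dist (A x) (A y))
             (dist (A x) (T y) * dist (A y) (S x) / dist (A x) (A y)))))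
    (hc2 : ∀ x y : X, dist (A x) (A y) = 0 → dist (S x) (T y) = 0)
    (x : ℕ → X)
    (horb : ∀ n : ℕ, (Odd (n + 1) → A (x (n + 1)) = S (x n)) ∧
                     (Even (n + 1) → A (x (n + 1)) = T (x n))) :
    CauchySeq (fun n : ℕ => A (x (n + 1))) := by
  classical
  set y : ℕ → X := fun n => A (x (n + 1)) with hy
  -- basic orbit facts
  have hyS : ∀ n : ℕ, Even (n + 1) → y (n + 1) = S (x (n + 1)) := by
    intro n hn
    exact (horb (n + 1)).1 (by simpa using hn.add_one)
  have hyT : ∀ n : ℕ, Odd (n + 1) → y (n + 1) = T (x (n + 1)) := by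
    intro n hn
    exact (horb (n + 1)).2 (by simpa using hn.add_one)
  -- key contraction inequality along the orbit
  have key : ∀ a b : ℕ, Odd a → Even b → dist (y a) (y b) ≠ 0 →
      dist (y (a + 1)) (y (b + 1)) ≤ φ (max (dist (y a) (y b))
        (max (dist (y a) (y (a + 1)) * dist (y b) (y (b + 1)) / dist (y a) (y b))
             (dist (y a) (y (b + 1)) * dist (y b) (y (a + 1)) / dist (y a) (y b)))) := by
    intro a b ha hb hD
    have hSa : y (a + 1) = S (x (a + 1)) := hyS a (by simpa using ha.add_one)
    have hTb : y (b + 1) = T (x (b + 1)) := hyT b (by simpa using hb.add_one)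
    have hne : A (x (a + 1)) ≠ A (x (b + 1)) := by
      intro h
      apply hD
      have hyab : y a = y b := h
      rw [hyab, dist_self]
    have h := hc1 (x (a + 1)) (x (b + 1)) hne
    rw [← hSa, ← hTb] at h
    exact h
  have key0 : ∀ a b : ℕ, Odd a → Even b → dist (y a) (y b) = 0 →
      dist (y (a + 1)) (y (b + 1)) = 0 := by
    intro a b ha hb hD
    have hSa : y (a + 1) = S (x (a + 1)) := hyS a (by simpa using ha.add_one)
    have hTb : y (b + 1) = T (x (b + 1)) := hyT b (by simpa using hb.add_one)
    have h := hc2 (x (a + 1)) (x (b + 1)) (by simpa [hy] using hD)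
    rw [← hSa, ← hTb] at h
    exact h
  -- successive distances
  set d : ℕ → ℝ := fun n => dist (y n) (y (n + 1)) with hd
  have hdnn : ∀ n, 0 ≤ d n := fun n => dist_nonneg
  -- φ 0 = 0 and φ t ≤ t
  have hφ00 : φ 0 = 0 := by
    by_contra h
    have h0 : 0 < φ 0 := lt_of_le_of_ne (hφ0 0 le_rfl) (Ne.symm h)
    have h1 : φ 0 ≤ φ (φ 0) := hφm (Set.mem_Ici.mpr le_rfl) (Set.mem_Ici.mpr h0.le) h0.le
    have h2 : φ (φ 0) < φ 0 := hφlt (φ 0) h0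
    linarith
  have hφle : ∀ t : ℝ, 0 ≤ t → φ t ≤ t := by
    intro t ht
    rcases eq_or_lt_of_le ht with h | h
    · rw [← h, hφ00]
    · exact (hφlt t h).le
  -- main step inequality
  have L1 : ∀ n, d (n + 1) ≤ φ (d n) ∧ d (n + 1) ≤ d n := by
    intro n
    have hmain : d (n + 1) ≤ φ (max (d n) (d (n + 1))) := by
      rcases Nat.even_or_odd n with he | ho
      · -- n even: use pair a = n+1 (odd), b = n (even)
        rcases eq_or_ne (dist (y (n + 1)) (y n)) 0 with h0 | h0
        · have hz := key0 (n + 1) n he.add_one he h0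
          have : d (n + 1) = 0 := by
            simp only [hd]; rw [dist_comm]; exact hz
          rw [this]
          exact hφ0 _ (le_max_of_le_left (hdnn n))
        · have hkey := key (n + 1) n he.add_one he h0
          have e1 : dist (y (n + 1 + 1)) (y (n + 1)) = d (n + 1) := dist_comm _ _
          have e2 : dist (y (n + 1)) (y n) = d n := dist_comm _ _
          rw [e1, dist_self, zero_mul, zero_div, e2] at hkey
          have e3 : dist (y (n + 1)) (y (n + 1 + 1)) * dist (y n) (y (n + 1)) / d n
              = d (n + 1) := by
            have hdn0 : d n ≠ 0 := by rwa [← e2]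
            simp only [hd]
            rw [mul_div_assoc, div_self hdn0, mul_one]
          rw [e3, max_eq_left (hdnn (n + 1))] at hkey
          exact hkey
      · -- n odd: use pair a = n (odd), b = n+1 (even)
        rcases eq_or_ne (dist (y n) (y (n + 1))) 0 with h0 | h0
        · have hz := key0 n (n + 1) ho ho.add_one h0
          have : d (n + 1) = 0 := hz
          rw [this]
          exact hφ0 _ (le_max_of_le_left (hdnn n))
        · have hkey := key n (n + 1) ho ho.add_one h0
          rw [dist_self, mul_zero, zero_div] at hkey
          have e3 : dist (y n) (y (n + 1)) * dist (y (n + 1)) (y (n + 1 + 1)) /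
              dist (y n) (y (n + 1)) = d (n + 1) := by
            rw [mul_comm, mul_div_assoc, div_self h0, mul_one]
          rw [e3, max_eq_left (hdnn (n + 1))] at hkey
          exact hkey
    rcases le_or_gt (d (n + 1)) (d n) with hle | hlt
    · rw [max_eq_left hle] at hmain
      exact ⟨hmain, hle⟩
    · exfalso
      have hpos : 0 < d (n + 1) := lt_of_le_of_lt (hdnn n) hlt
      rw [max_eq_right hlt.le] at hmain
      have := hφlt (d (n + 1)) hpos
      linarith
  -- d tends to 0
  have hAnti : Antitone d := antitone_nat_of_succ_le (fun n => (L1 n).2)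
  have hbdd : BddBelow (Set.range d) := ⟨0, by rintro _ ⟨n, rfl⟩; exact hdnn n⟩
  have htend : Tendsto d atTop (𝓝 (⨅ n, d n)) := tendsto_atTop_ciInf hAnti hbdd
  set r := ⨅ n, d n with hr
  have hr0 : 0 ≤ r := le_ciInf hdnn
  have htphi : Tendsto (fun n => φ (d n)) atTop (𝓝 (φ r)) := by
    have hcw : ContinuousWithinAt φ (Set.Ici 0) r := hφc r hr0
    exact hcw.tendsto.comp
      (tendsto_nhdsWithin_iff.mpr ⟨htend, Eventually.of_forall (fun n => hdnn n)⟩)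
  have hrphi : r ≤ φ r :=
    le_of_tendsto_of_tendsto' (htend.comp (tendsto_add_atTop_nat 1)) htphi
      (fun n => (L1 n).1)
  have hrz : r = 0 := by
    by_contra h
    exact absurd hrphi (not_le.mpr (hφlt r (lt_of_le_of_ne hr0 (Ne.symm h))))
  have hd0 : Tendsto d atTop (𝓝 0) := hrz ▸ htend
  -- Cauchy by contradiction
  rw [Metric.cauchySeq_iff]
  by_contra hcon
  push_neg at hcon
  obtain ⟨ε, hε, hcon⟩ := hcon
  set B := (φ ε + ε) / 2 with hB
  have hφε : φ ε < ε := hφlt ε hε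
  have hφB : φ ε < B := by rw [hB]; linarith
  have hBε : B < ε := by rw [hB]; linarith
  -- continuity of φ at ε
  have hev : ∀ᶠ u in 𝓝[Set.Ici 0] ε, φ u < B :=
    ((hφc ε hε.le).tendsto).eventually_lt_const hφB
  obtain ⟨δ, hδpos, hδsub⟩ := Metric.mem_nhdsWithin_iff.mp hev
  set η := min (δ / 9) (min ((ε - B) / 3) (ε / 6)) with hηdef
  have hηpos : 0 < η := by
    apply lt_min (by linarith)
    exact lt_min (by linarith) (by linarith)
  have hη1 : η ≤ δ / 9 := min_le_left _ _
  have hη2 : η ≤ (ε - B) / 3 := le_trans (min_le_right _ _) (min_le_left _ _)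
  have hη3 : η ≤ ε / 6 := le_trans (min_le_right _ _) (min_le_right _ _)
  obtain ⟨N₀, hN₀⟩ := eventually_atTop.mp (hd0.eventually_lt_const hηpos)
  obtain ⟨m₀, hm₀, n₀, hn₀, hdist⟩ := hcon (N₀ + 2)
  -- arrange m > n
  set nn := min m₀ n₀ with hnn
  have hmn0 : m₀ ≠ n₀ := by
    intro h
    rw [h, dist_self] at hdist
    linarith
  have hex : ∃ k, nn < k ∧ ε ≤ dist (y k) (y nn) := by
    rcases lt_or_gt_of_ne hmn0 with h | h
    · exact ⟨n₀, by omega, by rwa [dist_comm, show nn = m₀ by omega]⟩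
    · exact ⟨m₀, by omega, by rwa [show nn = n₀ by omega]⟩
  set mm := Nat.find hex with hmm
  have hPm : nn < mm ∧ ε ≤ dist (y mm) (y nn) := Nat.find_spec hex
  have hnnN : N₀ + 2 ≤ nn := le_min hm₀ hn₀
  obtain ⟨mp, hmp⟩ : ∃ mp, mm = mp + 1 := ⟨mm - 1, by omega⟩
  have hprev : dist (y mp) (y nn) < ε := by
    rcases eq_or_lt_of_le (Nat.succ_le_of_lt hPm.1) with h | h
    · have : mp = nn := by omega
      rw [this, dist_self]; exact hε
    · have h2 := Nat.find_min hex (m := mp) (by omega)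
      push_neg at h2
      exact lt_of_not_ge (fun hc => absurd (h2 (by omega)) (not_lt.mpr hc))
  have hmpnn : nn ≤ mp := by omega
  have hsmall : ∀ j, N₀ ≤ j → d j < η := fun j hj => hN₀ j hj
  -- the distance dist (y mm) (y nn) is in [ε, ε + η)
  have ht0u : dist (y mm) (y nn) < ε + η := by
    calc dist (y mm) (y nn) ≤ dist (y mm) (y mp) + dist (y mp) (y nn) := dist_triangle _ _ _
    _ = d mp + dist (y mp) (y nn) := by rw [dist_comm (y mm) (y mp), hmp]
    _ < η + ε := by
        have := hsmall mp (by omega)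
        linarith
    _ = ε + η := by ring
  -- choose parity-adjusted indices
  obtain ⟨p, hpe, hpm⟩ : ∃ p, Even p ∧ (p = mm ∨ p = mm + 1) := by
    rcases Nat.even_or_odd mm with h | h
    · exact ⟨mm, h, Or.inl rfl⟩
    · exact ⟨mm + 1, h.add_one, Or.inr rfl⟩
  obtain ⟨q, hqo, hqn⟩ : ∃ q, Odd q ∧ (q = nn ∨ q = nn + 1) := by
    rcases Nat.even_or_odd nn with h | h
    · exact ⟨nn + 1, h.add_one, Or.inr rfl⟩
    · exact ⟨nn, h, Or.inl rfl⟩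
  have hpd : dist (y p) (y mm) < η := by
    rcases hpm with h | h
    · rw [h, dist_self]; exact hηpos
    · rw [h, dist_comm]
      exact hsmall mm (by omega)
  have hqd : dist (y nn) (y q) < η := by
    rcases hqn with h | h
    · rw [h, dist_self]; exact hηpos
    · rw [h]
      exact hsmall nn (by omega)
  obtain ⟨a, rfl⟩ : ∃ a, p = a + 1 := ⟨p - 1, by omega⟩
  obtain ⟨b, rfl⟩ : ∃ b, q = b + 1 := ⟨q - 1, by omega⟩
  have ha : Odd a := by
    rcases Nat.even_or_odd a with h | h
    · exact absurd (h.add_one) (by simpa using hpe)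
    · exact h
  have hb : Even b := by
    rcases Nat.even_or_odd b with h | h
    · exact h
    · exact absurd (h.add_one) (by simpa using hqo)
  have haN : N₀ ≤ a := by omega
  have hbN : N₀ ≤ b := by omega
  have hda : d a < η := hsmall a haN
  have hdb : d b < η := hsmall b hbN
  -- bounds on t := dist (y (a+1)) (y (b+1)) and D := dist (y a) (y b)
  set t := dist (y (a + 1)) (y (b + 1)) with htdef
  set D := dist (y a) (y b) with hDdef
  have htl : ε - 2 * η ≤ t := by
    have h1 : dist (y mm) (y nn) ≤ dist (y mm) (y (a + 1)) + dist (y (a + 1)) (y (b + 1))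
        + dist (y (b + 1)) (y nn) := dist_triangle4 _ _ _ _
    have h2 : dist (y mm) (y (a + 1)) < η := by rwa [dist_comm] at hpd
    have h3 : dist (y (b + 1)) (y nn) < η := by rwa [dist_comm] at hqd
    have := hPm.2
    simp only [← htdef] at h1
    linarith
  have htu : t < ε + 3 * η := by
    have h1 : t ≤ dist (y (a + 1)) (y mm) + dist (y mm) (y nn) + dist (y nn) (y (b + 1)) :=
      dist_triangle4 _ _ _ _
    linarith
  have hDl : ε - 4 * η ≤ D := by
    have h1 : t ≤ dist (y (a + 1)) (y a) + dist (y a) (y b) + dist (y b) (y (b + 1)) :=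
      dist_triangle4 _ _ _ _
    have h2 : dist (y (a + 1)) (y a) = d a := dist_comm _ _
    have h3 : dist (y b) (y (b + 1)) = d b := rfl
    rw [h2, h3, ← hDdef] at h1
    linarith
  have hDu : D < ε + 5 * η := by
    have h1 : D ≤ dist (y a) (y (a + 1)) + dist (y (a + 1)) (y (b + 1))
        + dist (y (b + 1)) (y b) := dist_triangle4 _ _ _ _
    have h2 : dist (y a) (y (a + 1)) = d a := rfl
    have h3 : dist (y (b + 1)) (y b) = d b := dist_comm _ _
    rw [h2, h3, ← htdef] at h1
    linarith
  have hDpos : 0 < D := by linarith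
  have hkey := key a b ha hb (ne_of_gt hDpos)
  rw [← htdef, ← hDdef] at hkey
  -- bound the max term
  have hMle : max D (max (dist (y a) (y (a + 1)) * dist (y b) (y (b + 1)) / D)
      (dist (y a) (y (b + 1)) * dist (y b) (y (a + 1)) / D)) ≤ ε + 8 * η := by
    apply max_le (by linarith)
    apply max_le
    · rw [div_le_iff₀ hDpos]
      have e2 : dist (y a) (y (a + 1)) = d a := rfl
      have e3 : dist (y b) (y (b + 1)) = d b := rfl
      rw [e2, e3]
      have h1 : d a * d b ≤ η * η := mul_le_mul hda.le hdb.le (hdnn b) hηpos.le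
      have h2 : η ≤ D := by linarith
      have h6 : η * η ≤ η * D := mul_le_mul_of_nonneg_left h2 hηpos.le
      have h8 : η * D ≤ (ε + 8 * η) * D := by
        apply mul_le_mul_of_nonneg_right _ hDpos.le
        linarith
      linarith [h1, h6, h8]
    · rw [div_le_iff₀ hDpos]
      have hu : dist (y a) (y (b + 1)) ≤ D + d b := by
        have := dist_triangle (y a) (y b) (y (b + 1))
        simpa [← hDdef] using this
      have hv : dist (y b) (y (a + 1)) ≤ D + d a := by
        have h1 := dist_triangle (y b) (y a) (y (a + 1))
        have h2 : dist (y b) (y a) = D := dist_comm _ _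
        rw [h2] at h1
        exact h1
      have hmul : dist (y a) (y (b + 1)) * dist (y b) (y (a + 1))
          ≤ (D + d b) * (D + d a) :=
        mul_le_mul hu hv dist_nonneg (by linarith [hdnn b])
      have h1 : d a * d b ≤ η * η := mul_le_mul hda.le hdb.le (hdnn b) hηpos.le
      have h2 : η ≤ D := by linarith
      have h3 : D * D ≤ (ε + 5 * η) * D := mul_le_mul_of_nonneg_right hDu.le hDpos.le
      have h4 : D * d a ≤ D * η := mul_le_mul_of_nonneg_left hda.le hDpos.le
      have h5 : D * d b ≤ D * η := mul_le_mul_of_nonneg_left hdb.le hDpos.le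
      have h6 : η * η ≤ η * D := mul_le_mul_of_nonneg_left h2 hηpos.le
      have h7 : (D + d b) * (D + d a) = D * D + D * d a + D * d b + d a * d b := by
        ring
      linarith [hmul, h1, h3, h4, h5, h6, h7]
  have hM0 : (0 : ℝ) ≤ max D (max (dist (y a) (y (a + 1)) * dist (y b) (y (b + 1)) / D)
      (dist (y a) (y (b + 1)) * dist (y b) (y (a + 1)) / D)) :=
    le_trans hDpos.le (le_max_left _ _)
  have hφM : φ (max D (max (dist (y a) (y (a + 1)) * dist (y b) (y (b + 1)) / D)
      (dist (y a) (y (b + 1)) * dist (y b) (y (a + 1)) / D))) ≤ φ (ε + 8 * η) :=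
    hφm (Set.mem_Ici.mpr hM0) (Set.mem_Ici.mpr (by linarith)) hMle
  have hφsmall : φ (ε + 8 * η) < B := by
    apply hδsub
    constructor
    · rw [Metric.mem_ball, Real.dist_eq]
      rw [abs_of_nonneg (by linarith)]
      linarith
    · exact Set.mem_Ici.mpr (by linarith)
  have hfinal : t < B := lt_of_le_of_lt (le_trans hkey hφM) hφsmall
  have hB3 : B ≤ ε - 3 * η := by linarith
  linarith
end

section
/- Let (X,d) be a metric space and S, T, A : X → X. Suppose there exists φ ∈ Φ such that S, T, A satisfy the φ-contractive inequality involving rational expressions, and there exists an (S,T,A)-orbit {xₙ} of some x₀ ∈ X. Assume: (i) X is (S,T,A)-orbitally complete at x₀; (ii) the pairs (A,S) and (A,T) are reciprocally continuous; (iii) the pairs (A,S) and (A,T) are compatible. Then S, T and A have a unique common fixed point, i.e. there is a unique u ∈ X with Su = Tu = Au = u. -/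
open Filter Topology

/-- Under the φ-contractive inequality, existence of an `(S,T,A)`-orbit,
orbital completeness at `x₀`, reciprocal continuity of the pairs `(A,S)` and `(A,T)`,
and compatibility of the pairs `(A,S)` and `(A,T)`, the maps `S`, `T`, `A` have a
unique common fixed point. -/
theorem stmt_2 {X : Type*} [MetricSpace X] (S T A : X → X) (φ : ℝ → ℝ)
    (hφc : ContinuousOn φ (Set.Ici 0))
    (hφm : MonotoneOn φ (Set.Ici 0))
    (hφ0 : ∀ t : ℝ, 0 ≤ t → 0 ≤ φ t)
    (hφlt : ∀ t : ℝ, 0 < t → φ t < t)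
    (hc1 : ∀ x y : X, A x ≠ A y →
      dist (S x) (T y) ≤ φ (max (dist (A x) (A y))
        (max (dist (A x) (S x) * dist (A y) (T y) / dist (A x) (A y))
             (dist (A x) (T y) * dist (A y) (S x) / dist (A x) (A y)))))
    (hc2 : ∀ x y : X, dist (A x) (A y) = 0 → dist (S x) (T y) = 0)
    (x : ℕ → X)
    (horb : ∀ n : ℕ, (Odd (n + 1) → A (x (n + 1)) = S (x n)) ∧
                     (Even (n + 1) → A (x (n + 1)) = T (x n)))
    -- (i) X is (S,T,A)-orbitally complete at x₀
    (hcomp : ∀ u : ℕ → X, (∀ k : ℕ, ∃ n : ℕ, u k = A (x (n + 1))) → CauchySeq u →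
      ∃ l : X, Tendsto u atTop (𝓝 l))
    -- (ii) the pairs (A,S) and (A,T) are reciprocally continuous
    (hrcAS : ∀ (z : ℕ → X) (t : X),
      Tendsto (fun n => A (z n)) atTop (𝓝 t) → Tendsto (fun n => S (z n)) atTop (𝓝 t) →
      Tendsto (fun n => A (S (z n))) atTop (𝓝 (A t)) ∧
      Tendsto (fun n => S (A (z n))) atTop (𝓝 (S t)))
    (hrcAT : ∀ (z : ℕ → X) (t : X),
      Tendsto (fun n => A (z n)) atTop (𝓝 t) → Tendsto (fun n => T (z n)) atTop (𝓝 t) →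
      Tendsto (fun n => A (T (z n))) atTop (𝓝 (A t)) ∧
      Tendsto (fun n => T (A (z n))) atTop (𝓝 (T t)))
    -- (iii) the pairs (A,S) and (A,T) are compatible
    (hcptAS : ∀ (z : ℕ → X) (t : X),
      Tendsto (fun n => A (z n)) atTop (𝓝 t) → Tendsto (fun n => S (z n)) atTop (𝓝 t) →
      Tendsto (fun n => dist (S (A (z n))) (A (S (z n)))) atTop (𝓝 0))
    (hcptAT : ∀ (z : ℕ → X) (t : X),
      Tendsto (fun n => A (z n)) atTop (𝓝 t) → Tendsto (fun n => T (z n)) atTop (𝓝 t) →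
      Tendsto (fun n => dist (T (A (z n))) (A (T (z n)))) atTop (𝓝 0)) :
    ∃! u : X, S u = u ∧ T u = u ∧ A u = u := by
  classical
  -- basic facts about φ
  have hφ00 : φ 0 = 0 := by
    have h1 : 0 ≤ φ 0 := hφ0 0 le_rfl
    rcases h1.eq_or_lt with h | h
    · exact h.symm
    · have h2 : φ 0 ≤ φ (φ 0) := hφm Set.self_mem_Ici h1 h1
      have h3 : φ (φ 0) < φ 0 := hφlt _ h
      linarith
  have hφle : ∀ t : ℝ, 0 ≤ t → φ t ≤ t := by
    intro t ht
    rcases ht.eq_or_lt with h | h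
    · rw [← h, hφ00]
    · exact (hφlt t h).le
  set y : ℕ → X := fun n => A (x (n + 1)) with hy
  have hyS : ∀ n : ℕ, Even n → y n = S (x n) := fun n hn => (horb n).1 hn.add_one
  have hyT : ∀ n : ℕ, Odd n → y n = T (x n) := fun n hn => (horb n).2 hn.add_one
  -- the key contractive inequality along the orbit
  have key : ∀ p q : ℕ, Odd p → Even q → y p ≠ y q →
      dist (y (p + 1)) (y (q + 1)) ≤ φ (max (dist (y p) (y q))
        (max (dist (y p) (y (p + 1)) * dist (y q) (y (q + 1)) / dist (y p) (y q))
             (dist (y p) (y (q + 1)) * dist (y q) (y (p + 1)) / dist (y p) (y q)))) := by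
    intro p q hp hq hne
    have h3 : S (x (p + 1)) = y (p + 1) := (hyS (p + 1) hp.add_one).symm
    have h4 : T (x (q + 1)) = y (q + 1) := (hyT (q + 1) hq.add_one).symm
    have h := hc1 (x (p + 1)) (x (q + 1)) hne
    rw [h3, h4] at h
    exact h
  have key0 : ∀ p q : ℕ, Odd p → Even q → y p = y q → y (p + 1) = y (q + 1) := by
    intro p q hp hq heq
    have h := hc2 (x (p + 1)) (x (q + 1)) (dist_eq_zero.2 heq)
    rw [hyS (p + 1) hp.add_one, hyT (q + 1) hq.add_one]
    exact dist_eq_zero.1 h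
  set e : ℕ → ℝ := fun n => dist (y n) (y (n + 1)) with he
  have hen : ∀ n, 0 ≤ e n := fun n => dist_nonneg
  have estep : ∀ n : ℕ, e (n + 1) ≤ φ (e n) := by
    intro n
    rcases (hen n).eq_or_lt with h0 | h0
    · -- e n = 0
      have hyeq : y n = y (n + 1) := dist_eq_zero.1 h0.symm
      have h1 : e (n + 1) = 0 := by
        rcases Nat.even_or_odd n with hn | hn
        · have h := key0 (n + 1) n hn.add_one hn hyeq.symm
          show dist (y (n + 1)) (y (n + 1 + 1)) = 0
          rw [h, dist_self]
        · have h := key0 n (n + 1) hn hn.add_one hyeq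
          show dist (y (n + 1)) (y (n + 1 + 1)) = 0
          rw [h, dist_self]
      rw [h1]; exact hφ0 _ (hen n)
    · -- 0 < e n
      have hne0 : dist (y n) (y (n + 1)) ≠ 0 := ne_of_gt h0
      have hmain : e (n + 1) ≤ φ (max (e n) (e (n + 1))) := by
        rcases Nat.even_or_odd n with hn | hn
        · have hne : y (n + 1) ≠ y n := fun h => hne0 (dist_eq_zero.2 h.symm)
          have hk := key (n + 1) n hn.add_one hn hne
          rw [dist_self, zero_mul, zero_div, dist_comm (y (n + 1)) (y n),
            mul_div_cancel_right₀ _ hne0, max_eq_left dist_nonneg,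
            dist_comm (y (n + 1 + 1)) (y (n + 1))] at hk
          exact hk
        · have hne : y n ≠ y (n + 1) := fun h => hne0 (dist_eq_zero.2 h)
          have hk := key n (n + 1) hn hn.add_one hne
          rw [dist_self, mul_zero, zero_div, mul_div_cancel_left₀ _ hne0,
            max_eq_left dist_nonneg] at hk
          exact hk
      rcases le_total (e (n + 1)) (e n) with h | h
      · rwa [max_eq_left h] at hmain
      · rcases (hen (n + 1)).eq_or_lt with h1 | h1
        · rw [← h1]; exact hφ0 _ (hen n)
        · rw [max_eq_right h] at hmain
          exact absurd hmain (not_le.2 (hφlt _ h1))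
  have edec : ∀ n, e (n + 1) ≤ e n := fun n => (estep n).trans (hφle _ (hen n))
  have eanti : Antitone e := antitone_nat_of_succ_le edec
  have hetends : Tendsto e atTop (𝓝 0) := by
    have hbdd : BddBelow (Set.range e) := ⟨0, by rintro r ⟨n, rfl⟩; exact hen n⟩
    have htend := tendsto_atTop_ciInf eanti hbdd
    have hL0 : 0 ≤ ⨅ n, e n := le_ciInf fun n => hen n
    have hLle : (⨅ n, e n) ≤ φ (⨅ n, e n) := by
      have h1 : Tendsto (fun n => e (n + 1)) atTop (𝓝 (⨅ n, e n)) :=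
        htend.comp (tendsto_add_atTop_nat 1)
      have h2 : Tendsto (fun n => φ (e n)) atTop (𝓝 (φ (⨅ n, e n))) := by
        have hcw : ContinuousWithinAt φ (Set.Ici 0) (⨅ n, e n) := hφc _ hL0
        exact hcw.tendsto.comp
          (tendsto_nhdsWithin_iff.2 ⟨htend, Eventually.of_forall fun n => hen n⟩)
      exact le_of_tendsto_of_tendsto h1 h2 (Eventually.of_forall estep)
    have hL : (⨅ n, e n) = 0 := by
      rcases hL0.eq_or_lt with h | h
      · exact h.symm
      · exact absurd hLle (not_le.2 (hφlt _ h))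
    rwa [hL] at htend
  -- Cauchy
  have hcauchy : CauchySeq y := by
    rw [Metric.cauchySeq_iff]
    by_contra hnc
    push_neg at hnc
    obtain ⟨ε, hε, hnc⟩ := hnc
    have hsel : ∀ k : ℕ, ∃ n m' : ℕ, k ≤ n ∧ n ≤ m' ∧ ε ≤ dist (y (m' + 1)) (y n) ∧
        dist (y (m' + 1)) (y n) ≤ ε + e k := by
      intro k
      obtain ⟨a, ha, b, hb, hab⟩ := hnc k
      have hne : a ≠ b := by
        rintro rfl
        rw [dist_self] at hab; linarith
      have hex : ∃ m, min a b < m ∧ ε ≤ dist (y m) (y (min a b)) := by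
        refine ⟨max a b, by omega, ?_⟩
        rcases le_total a b with h | h
        · rw [min_eq_left h, max_eq_right h]; rwa [dist_comm]
        · rw [min_eq_right h, max_eq_left h]; exact hab
      obtain ⟨m', hm'1, hm'2, hm'3⟩ : ∃ m', min a b ≤ m' ∧
          ε ≤ dist (y (m' + 1)) (y (min a b)) ∧ dist (y m') (y (min a b)) < ε := by
        have hfs := Nat.find_spec hex
        refine ⟨Nat.find hex - 1, by omega, ?_, ?_⟩
        · have h : Nat.find hex - 1 + 1 = Nat.find hex := by omega
          rw [h]; exact hfs.2
        · rcases eq_or_lt_of_le (Nat.succ_le_of_lt hfs.1) with h | h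
          · have h2 : Nat.find hex - 1 = min a b := by omega
            rw [h2, dist_self]; exact hε
          · by_contra hcon
            push_neg at hcon
            exact Nat.find_min hex (by omega) ⟨by omega, hcon⟩
      refine ⟨min a b, m', le_min ha hb, hm'1, hm'2, ?_⟩
      have h1 : dist (y (m' + 1)) (y (min a b)) ≤
          dist (y (m' + 1)) (y m') + dist (y m') (y (min a b)) := dist_triangle _ _ _
      have h2 : dist (y (m' + 1)) (y m') = e m' := dist_comm _ _
      have h3 : e m' ≤ e k := eanti (le_trans (le_min ha hb) hm'1)
      linarith
    choose nn mm hknn hnm hgeε hub using hsel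
    set P : ℕ → ℕ := fun k => if Odd (mm k + 1) then mm k + 1 else mm k + 2 with hP
    set Q : ℕ → ℕ := fun k => if Even (nn k) then nn k else nn k + 1 with hQ
    have hPodd : ∀ k, Odd (P k) := by
      intro k
      by_cases h : Odd (mm k + 1)
      · simpa only [hP, if_pos h] using h
      · simp only [hP, if_neg h]
        rw [Nat.odd_iff] at h ⊢
        omega
    have hQeven : ∀ k, Even (Q k) := by
      intro k
      by_cases h : Even (nn k)
      · simpa only [hQ, if_pos h] using h
      · simp only [hQ, if_neg h]
        rw [Nat.even_iff] at h ⊢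
        omega
    have hPcases : ∀ k, P k = mm k + 1 ∨ P k = mm k + 2 := by
      intro k; simp only [hP]; split <;> simp
    have hQcases : ∀ k, Q k = nn k ∨ Q k = nn k + 1 := by
      intro k; simp only [hQ]; split <;> simp
    have hkleP : ∀ k, k ≤ mm k + 1 := fun k => by
      have := hknn k; have := hnm k; omega
    have hePk : ∀ k, e (P k) ≤ e k := fun k =>
      eanti (by rcases hPcases k with h | h <;> (have := hkleP k; omega))
    have heQk : ∀ k, e (Q k) ≤ e k := fun k =>
      eanti (by rcases hQcases k with h | h <;> (have := hknn k; omega))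
    have hbP : ∀ k, dist (y (P k)) (y (mm k + 1)) ≤ e k := by
      intro k
      rcases hPcases k with h | h
      · rw [h, dist_self]; exact hen k
      · rw [h]
        have h2 : dist (y (mm k + 2)) (y (mm k + 1)) = e (mm k + 1) := dist_comm _ _
        rw [h2]
        exact eanti (hkleP k)
    have hbQ : ∀ k, dist (y (Q k)) (y (nn k)) ≤ e k := by
      intro k
      rcases hQcases k with h | h
      · rw [h, dist_self]; exact hen k
      · rw [h]
        have h2 : dist (y (nn k + 1)) (y (nn k)) = e (nn k) := dist_comm _ _
        rw [h2]
        exact eanti (hknn k)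
    have hbP1 : ∀ k, dist (y (P k + 1)) (y (mm k + 1)) ≤ 2 * e k := by
      intro k
      rcases hPcases k with h | h
      · rw [h]
        have h2 : dist (y (mm k + 1 + 1)) (y (mm k + 1)) = e (mm k + 1) := dist_comm _ _
        rw [h2]
        have := eanti (hkleP k); have := hen k; linarith
      · rw [h]
        have ht := dist_triangle (y (mm k + 2 + 1)) (y (mm k + 2)) (y (mm k + 1))
        have h2 : dist (y (mm k + 2 + 1)) (y (mm k + 2)) = e (mm k + 2) := dist_comm _ _
        have h3 : dist (y (mm k + 2)) (y (mm k + 1)) = e (mm k + 1) := dist_comm _ _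
        have h4 : e (mm k + 2) ≤ e k := eanti (by have := hkleP k; omega)
        have h5 : e (mm k + 1) ≤ e k := eanti (hkleP k)
        rw [h2, h3] at ht
        linarith
    have hbQ1 : ∀ k, dist (y (Q k + 1)) (y (nn k)) ≤ 2 * e k := by
      intro k
      rcases hQcases k with h | h
      · rw [h]
        have h2 : dist (y (nn k + 1)) (y (nn k)) = e (nn k) := dist_comm _ _
        rw [h2]
        have := eanti (hknn k); have := hen k; linarith
      · rw [h]
        have ht := dist_triangle (y (nn k + 1 + 1)) (y (nn k + 1)) (y (nn k))
        have h2 : dist (y (nn k + 1 + 1)) (y (nn k + 1)) = e (nn k + 1) := dist_comm _ _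
        have h3 : dist (y (nn k + 1)) (y (nn k)) = e (nn k) := dist_comm _ _
        have h4 : e (nn k + 1) ≤ e k := eanti (by have := hknn k; omega)
        have h5 : e (nn k) ≤ e k := eanti (hknn k)
        rw [h2, h3] at ht
        linarith
    have hmain : ∀ k, e k < ε / 8 → ε - 4 * e k ≤ φ ((ε + 4 * e k) ^ 2 / (ε - 2 * e k)) := by
      intro k hk
      have hek := hen k
      have hgek := hgeε k
      have hubk := hub k
      have hBpos : 0 < ε - 2 * e k := by linarith
      have hDlb : ε - 2 * e k ≤ dist (y (P k)) (y (Q k)) := by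
        have t := dist_triangle4 (y (mm k + 1)) (y (P k)) (y (Q k)) (y (nn k))
        have h1 : dist (y (mm k + 1)) (y (P k)) = dist (y (P k)) (y (mm k + 1)) :=
          dist_comm _ _
        have h2 := hbP k; have h3 := hbQ k
        rw [h1] at t
        linarith
      have hDub : dist (y (P k)) (y (Q k)) ≤ ε + 3 * e k := by
        have t := dist_triangle4 (y (P k)) (y (mm k + 1)) (y (nn k)) (y (Q k))
        have h1 : dist (y (nn k)) (y (Q k)) = dist (y (Q k)) (y (nn k)) := dist_comm _ _
        have h2 := hbP k; have h3 := hbQ k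
        rw [h1] at t
        linarith
      have hDpos : 0 < dist (y (P k)) (y (Q k)) := by linarith
      have hyne : y (P k) ≠ y (Q k) := by
        intro h; rw [h, dist_self] at hDpos; exact lt_irrefl _ hDpos
      have hkey := key (P k) (Q k) (hPodd k) (hQeven k) hyne
      have hLHS : ε - 4 * e k ≤ dist (y (P k + 1)) (y (Q k + 1)) := by
        have t := dist_triangle4 (y (mm k + 1)) (y (P k + 1)) (y (Q k + 1)) (y (nn k))
        have h1 : dist (y (mm k + 1)) (y (P k + 1)) = dist (y (P k + 1)) (y (mm k + 1)) :=
          dist_comm _ _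
        have h2 := hbP1 k; have h3 := hbQ1 k
        rw [h1] at t
        linarith
      have ht1 : dist (y (P k)) (y (Q k)) ≤ (ε + 4 * e k) ^ 2 / (ε - 2 * e k) := by
        rw [le_div_iff₀ hBpos]
        nlinarith [hDub, hek, hε]
      have hePQ1 : dist (y (P k)) (y (P k + 1)) = e (P k) := rfl
      have hePQ2 : dist (y (Q k)) (y (Q k + 1)) = e (Q k) := rfl
      have ht2 : dist (y (P k)) (y (P k + 1)) * dist (y (Q k)) (y (Q k + 1)) /
          dist (y (P k)) (y (Q k)) ≤ (ε + 4 * e k) ^ 2 / (ε - 2 * e k) := by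
        apply div_le_div₀ (sq_nonneg _) ?_ hBpos hDlb
        rw [hePQ1, hePQ2]
        nlinarith [hePk k, heQk k, hen (P k), hen (Q k), hek, hε]
      have ht3 : dist (y (P k)) (y (Q k + 1)) * dist (y (Q k)) (y (P k + 1)) /
          dist (y (P k)) (y (Q k)) ≤ (ε + 4 * e k) ^ 2 / (ε - 2 * e k) := by
        apply div_le_div₀ (sq_nonneg _) ?_ hBpos hDlb
        have d1 : dist (y (P k)) (y (Q k + 1)) ≤ ε + 4 * e k := by
          have t := dist_triangle (y (P k)) (y (Q k)) (y (Q k + 1))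
          rw [hePQ2] at t
          have := heQk k
          linarith
        have d2 : dist (y (Q k)) (y (P k + 1)) ≤ ε + 4 * e k := by
          have t := dist_triangle (y (Q k)) (y (P k)) (y (P k + 1))
          have h1 : dist (y (Q k)) (y (P k)) = dist (y (P k)) (y (Q k)) := dist_comm _ _
          rw [h1, hePQ1] at t
          have := hePk k
          linarith
        nlinarith [(dist_nonneg : (0:ℝ) ≤ dist (y (P k)) (y (Q k + 1))),
          (dist_nonneg : (0:ℝ) ≤ dist (y (Q k)) (y (P k + 1))), d1, d2, hek, hε]
      have hmaxB : max (dist (y (P k)) (y (Q k)))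
          (max (dist (y (P k)) (y (P k + 1)) * dist (y (Q k)) (y (Q k + 1)) /
              dist (y (P k)) (y (Q k)))
            (dist (y (P k)) (y (Q k + 1)) * dist (y (Q k)) (y (P k + 1)) /
              dist (y (P k)) (y (Q k)))) ≤ (ε + 4 * e k) ^ 2 / (ε - 2 * e k) :=
        max_le ht1 (max_le ht2 ht3)
      have hφmono := hφm (Set.mem_Ici.2 (le_trans dist_nonneg (le_max_left _ _)))
        (Set.mem_Ici.2 (div_nonneg (sq_nonneg _) hBpos.le)) hmaxB
      exact hLHS.trans (hkey.trans hφmono)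
    have hBtend : Tendsto (fun k => (ε + 4 * e k) ^ 2 / (ε - 2 * e k)) atTop (𝓝 ε) := by
      have h1 : Tendsto (fun k => (ε + 4 * e k) ^ 2) atTop (𝓝 ((ε + 4 * 0) ^ 2)) :=
        (tendsto_const_nhds.add (tendsto_const_nhds.mul hetends)).pow 2
      have h2 : Tendsto (fun k => ε - 2 * e k) atTop (𝓝 (ε - 2 * 0)) :=
        tendsto_const_nhds.sub (tendsto_const_nhds.mul hetends)
      have h3 := h1.div h2 (by rw [mul_zero, sub_zero]; exact ne_of_gt hε)
      rw [show ((ε + 4 * 0) ^ 2 / (ε - 2 * 0) : ℝ) = ε by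
        rw [mul_zero, add_zero, mul_zero, sub_zero, pow_two]
        exact mul_div_cancel_right₀ ε (ne_of_gt hε)] at h3
      exact h3
    have hφBtend : Tendsto (fun k => φ ((ε + 4 * e k) ^ 2 / (ε - 2 * e k))) atTop (𝓝 (φ ε)) := by
      have hcw : ContinuousWithinAt φ (Set.Ici 0) ε := hφc ε (le_of_lt hε)
      apply hcw.tendsto.comp
      rw [tendsto_nhdsWithin_iff]
      refine ⟨hBtend, ?_⟩
      filter_upwards [hBtend.eventually (eventually_gt_nhds (show ε / 2 < ε by linarith))] with k hk
      exact Set.mem_Ici.2 (le_of_lt (lt_trans (half_pos hε) hk))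
    have hLtend : Tendsto (fun k => ε - 4 * e k) atTop (𝓝 ε) := by
      have h2 : Tendsto (fun k => ε - 4 * e k) atTop (𝓝 (ε - 4 * 0)) :=
        tendsto_const_nhds.sub (tendsto_const_nhds.mul hetends)
      rwa [mul_zero, sub_zero] at h2
    have hεφ : ε ≤ φ ε := by
      apply le_of_tendsto_of_tendsto hLtend hφBtend
      filter_upwards [hetends.eventually_lt_const (by positivity : (0:ℝ) < ε / 8)] with k hk
      exact hmain k hk
    exact absurd hεφ (not_le.2 (hφlt ε hε))
  -- limit of the orbit
  obtain ⟨l, hl⟩ := hcomp y (fun k => ⟨k, rfl⟩) hcauchy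
  have h20 : Tendsto (fun k => y (2 * k)) atTop (𝓝 l) :=
    hl.comp (tendsto_atTop_mono (fun k => (by omega : k ≤ 2 * k)) tendsto_id)
  have h21 : Tendsto (fun k => y (2 * k + 1)) atTop (𝓝 l) :=
    hl.comp (tendsto_atTop_mono (fun k => (by omega : k ≤ 2 * k + 1)) tendsto_id)
  have h22 : Tendsto (fun k => y (2 * k + 2)) atTop (𝓝 l) :=
    hl.comp (tendsto_atTop_mono (fun k => (by omega : k ≤ 2 * k + 2)) tendsto_id)
  have hAz : Tendsto (fun k => A (x (2 * k + 2))) atTop (𝓝 l) := h21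
  have hSz : Tendsto (fun k => S (x (2 * k + 2))) atTop (𝓝 l) := by
    have hq : ∀ k : ℕ, y (2 * k + 2) = S (x (2 * k + 2)) :=
      fun k => hyS (2 * k + 2) ⟨k + 1, by ring⟩
    exact h22.congr hq
  have hAw : Tendsto (fun k => A (x (2 * k + 1))) atTop (𝓝 l) := h20
  have hTw : Tendsto (fun k => T (x (2 * k + 1))) atTop (𝓝 l) := by
    have hq : ∀ k : ℕ, y (2 * k + 1) = T (x (2 * k + 1)) :=
      fun k => hyT (2 * k + 1) ⟨k, by ring⟩
    exact h21.congr hq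
  obtain ⟨hASz, hSAz⟩ := hrcAS (fun k => x (2 * k + 2)) l hAz hSz
  have hdS := hcptAS (fun k => x (2 * k + 2)) l hAz hSz
  have hSl : S l = A l :=
    dist_eq_zero.1 (tendsto_nhds_unique (hSAz.dist hASz) hdS)
  obtain ⟨hATw, hTAw⟩ := hrcAT (fun k => x (2 * k + 1)) l hAw hTw
  have hdT := hcptAT (fun k => x (2 * k + 1)) l hAw hTw
  have hTl : T l = A l :=
    dist_eq_zero.1 (tendsto_nhds_unique (hTAw.dist hATw) hdT)
  have hAl : A l = l := by
    by_contra hne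
    have hc : 0 < dist l (A l) := dist_pos.2 (fun h => hne h.symm)
    have ht1 : Tendsto (fun k => dist (A (x (2 * k + 2))) (A l)) atTop (𝓝 (dist l (A l))) :=
      hAz.dist tendsto_const_nhds
    have hev : ∀ᶠ k in atTop, 0 < dist (A (x (2 * k + 2))) (A l) :=
      ht1.eventually (eventually_gt_nhds hc)
    set F : ℕ → ℝ := fun k => max (dist (A (x (2 * k + 2))) (A l))
      (max (dist (A (x (2 * k + 2))) (S (x (2 * k + 2))) * dist (A l) (T l) /
          dist (A (x (2 * k + 2))) (A l))
        (dist (A (x (2 * k + 2))) (T l) * dist (A l) (S (x (2 * k + 2))) /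
          dist (A (x (2 * k + 2))) (A l))) with hF
    have hineq : ∀ᶠ k in atTop, dist (S (x (2 * k + 2))) (T l) ≤ φ (F k) := by
      filter_upwards [hev] with k hk
      exact hc1 _ _ (fun h => by rw [h, dist_self] at hk; exact lt_irrefl _ hk)
    have hATl : dist (A l) (T l) = 0 := by rw [hTl, dist_self]
    have harg : Tendsto F atTop (𝓝 (dist l (A l))) := by
      have hterm2 : Tendsto (fun k => dist (A (x (2 * k + 2))) (S (x (2 * k + 2))) *
          dist (A l) (T l) / dist (A (x (2 * k + 2))) (A l)) atTop (𝓝 0) := by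
        simp only [hATl, mul_zero, zero_div]
        exact tendsto_const_nhds
      have hterm3 : Tendsto (fun k => dist (A (x (2 * k + 2))) (T l) *
          dist (A l) (S (x (2 * k + 2))) / dist (A (x (2 * k + 2))) (A l)) atTop
          (𝓝 (dist l (A l))) := by
        have hn : Tendsto (fun k => dist (A (x (2 * k + 2))) (T l) *
            dist (A l) (S (x (2 * k + 2)))) atTop (𝓝 (dist l (T l) * dist (A l) l)) :=
          (hAz.dist tendsto_const_nhds).mul (tendsto_const_nhds.dist hSz)
        have h := hn.div ht1 (ne_of_gt hc)
        rw [show dist l (T l) * dist (A l) l / dist l (A l) = dist l (A l) by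
          rw [hTl, dist_comm (A l) l]
          exact mul_div_cancel_left₀ _ (ne_of_gt hc)] at h
        exact h
      have h := ht1.max (hterm2.max hterm3)
      rw [show max (dist l (A l)) (max 0 (dist l (A l))) = dist l (A l) by
        rw [max_eq_right hc.le, max_self]] at h
      exact h
    have hφarg : Tendsto (fun k => φ (F k)) atTop (𝓝 (φ (dist l (A l)))) := by
      have hcw : ContinuousWithinAt φ (Set.Ici 0) (dist l (A l)) := hφc _ dist_nonneg
      exact hcw.tendsto.comp (tendsto_nhdsWithin_iff.2 ⟨harg,
        Eventually.of_forall fun k => Set.mem_Ici.2 (le_trans dist_nonneg (le_max_left _ _))⟩)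
    have hLHS2 : Tendsto (fun k => dist (S (x (2 * k + 2))) (T l)) atTop (𝓝 (dist l (T l))) :=
      hSz.dist tendsto_const_nhds
    have hfin : dist l (T l) ≤ φ (dist l (A l)) :=
      le_of_tendsto_of_tendsto hLHS2 hφarg hineq
    rw [hTl] at hfin
    exact absurd hfin (not_le.2 (hφlt _ hc))
  have hSl' : S l = l := by rw [hSl, hAl]
  have hTl' : T l = l := by rw [hTl, hAl]
  refine ⟨l, ⟨hSl', hTl', hAl⟩, ?_⟩
  rintro u ⟨hSu, hTu, hAu⟩
  by_contra hne
  have hAne : A u ≠ A l := by rw [hAu, hAl]; exact hne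
  have hd : 0 < dist u l := dist_pos.2 hne
  have h := hc1 u l hAne
  rw [hSu, hTl', hAu, hAl] at h
  simp only [dist_self, zero_mul, mul_zero, zero_div, dist_comm l u] at h
  rw [mul_div_assoc, div_self (ne_of_gt hd), mul_one,
    max_eq_right dist_nonneg, max_self] at h
  exact absurd h (not_le.2 (hφlt _ hd))
end

section
/- Let (X,d) be a metric space and S, T, A : X → X. Suppose there exists φ ∈ Φ such that S, T, A satisfy the φ-contractive inequality involving rational expressions, and there exists an (S,T,A)-orbit {xₙ} of some x₀ ∈ X. Assume: (i) X is (S,T,A)-orbitally complete at x₀; (ii) the pairs (A,S) and (A,T) are reciprocally continuous; (iii) the pairs (A,S) and (A,T) are compatible of type (A). Then S, T and A have a unique common fixed point, i.e. there is a unique u ∈ X with Su = Tu = Au = u. -/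
open Filter Topology

/-- Under the φ-contractive inequality, existence of an `(S,T,A)`-orbit,
orbital completeness at `x₀`, reciprocal continuity of the pairs `(A,S)` and `(A,T)`,
and compatibility of type (A) of the pairs `(A,S)` and `(A,T)`, the maps `S`, `T`, `A` have a
unique common fixed point. -/
theorem stmt_3 {X : Type*} [MetricSpace X] (S T A : X → X) (φ : ℝ → ℝ)
    (hφc : ContinuousOn φ (Set.Ici 0))
    (hφm : MonotoneOn φ (Set.Ici 0))
    (hφ0 : ∀ t : ℝ, 0 ≤ t → 0 ≤ φ t)
    (hφlt : ∀ t : ℝ, 0 < t → φ t < t)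
    (hc1 : ∀ x y : X, A x ≠ A y →
      dist (S x) (T y) ≤ φ (max (dist (A x) (A y))
        (max (dist (A x) (S x) * dist (A y) (T y) / dist (A x) (A y))
             (dist (A x) (T y) * dist (A y) (S x) / dist (A x) (A y)))))
    (hc2 : ∀ x y : X, dist (A x) (A y) = 0 → dist (S x) (T y) = 0)
    (x : ℕ → X)
    (horb : ∀ n : ℕ, (Odd (n + 1) → A (x (n + 1)) = S (x n)) ∧
                     (Even (n + 1) → A (x (n + 1)) = T (x n)))
    -- (i) X is (S,T,A)-orbitally complete at x₀
    (hcomp : ∀ u : ℕ → X, (∀ k : ℕ, ∃ n : ℕ, u k = A (x (n + 1))) → CauchySeq u →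
      ∃ l : X, Tendsto u atTop (𝓝 l))
    -- (ii) the pairs (A,S) and (A,T) are reciprocally continuous
    (hrcAS : ∀ (z : ℕ → X) (t : X),
      Tendsto (fun n => A (z n)) atTop (𝓝 t) → Tendsto (fun n => S (z n)) atTop (𝓝 t) →
      Tendsto (fun n => A (S (z n))) atTop (𝓝 (A t)) ∧
      Tendsto (fun n => S (A (z n))) atTop (𝓝 (S t)))
    (hrcAT : ∀ (z : ℕ → X) (t : X),
      Tendsto (fun n => A (z n)) atTop (𝓝 t) → Tendsto (fun n => T (z n)) atTop (𝓝 t) →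
      Tendsto (fun n => A (T (z n))) atTop (𝓝 (A t)) ∧
      Tendsto (fun n => T (A (z n))) atTop (𝓝 (T t)))
    -- (iii) the pairs (A,S) and (A,T) are compatible of type (A)
    (htAS : ∀ (z : ℕ → X) (t : X),
      Tendsto (fun n => A (z n)) atTop (𝓝 t) → Tendsto (fun n => S (z n)) atTop (𝓝 t) →
      Tendsto (fun n => dist (A (S (z n))) (S (S (z n)))) atTop (𝓝 0) ∧
      Tendsto (fun n => dist (S (A (z n))) (A (A (z n)))) atTop (𝓝 0))
    (htAT : ∀ (z : ℕ → X) (t : X),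
      Tendsto (fun n => A (z n)) atTop (𝓝 t) → Tendsto (fun n => T (z n)) atTop (𝓝 t) →
      Tendsto (fun n => dist (A (T (z n))) (T (T (z n)))) atTop (𝓝 0) ∧
      Tendsto (fun n => dist (T (A (z n))) (A (A (z n)))) atTop (𝓝 0)) :
    ∃! u : X, S u = u ∧ T u = u ∧ A u = u := by
  classical
  -- S = T pointwise
  have hST : ∀ w : X, S w = T w := fun w => dist_eq_zero.mp (hc2 w w (by simp))
  -- φ facts
  have hφ00 : φ 0 = 0 := by
    by_contra h
    have h0 : 0 < φ 0 := lt_of_le_of_ne (hφ0 0 le_rfl) (Ne.symm h)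
    have h1 : φ 0 ≤ φ (φ 0) := hφm (le_refl (0:ℝ)) (le_of_lt h0) (le_of_lt h0)
    have h2 : φ (φ 0) < φ 0 := hφlt _ h0
    linarith
  have hφle : ∀ t : ℝ, 0 ≤ t → φ t ≤ t := by
    intro t ht
    rcases eq_or_lt_of_le ht with h | h
    · rw [← h, hφ00]
    · exact le_of_lt (hφlt t h)
  have hφtend : ∀ (f : ℕ → ℝ) (L : ℝ), (∀ n, 0 ≤ f n) → 0 ≤ L →
      Tendsto f atTop (𝓝 L) → Tendsto (fun n => φ (f n)) atTop (𝓝 (φ L)) := by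
    intro f L hf hL h
    exact (hφc L hL).tendsto.comp
      (tendsto_nhdsWithin_iff.mpr ⟨h, Eventually.of_forall (fun n => Set.mem_Ici.mpr (hf n))⟩)
  -- the orbit sequence
  set Y : ℕ → X := fun n => A (x (n + 1)) with hYdef
  have hYS : ∀ n, Y n = S (x n) := by
    intro n
    rcases Nat.even_or_odd (n + 1) with h | h
    · rw [hST (x n)]; exact (horb n).2 h
    · exact (horb n).1 h
  have hYT : ∀ n, Y n = T (x n) := fun n => by rw [hYS n, hST]
  have key : ∀ m n : ℕ, Y m ≠ Y n →
      dist (Y (m+1)) (Y (n+1)) ≤ φ (max (dist (Y m) (Y n))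
        (max (dist (Y m) (Y (m+1)) * dist (Y n) (Y (n+1)) / dist (Y m) (Y n))
             (dist (Y m) (Y (n+1)) * dist (Y n) (Y (m+1)) / dist (Y m) (Y n)))) := by
    intro m n h
    have hk := hc1 (x (m+1)) (x (n+1)) h
    rw [← hYS (m+1), ← hYT (n+1)] at hk
    exact hk
  have key0 : ∀ m n : ℕ, Y m = Y n → Y (m+1) = Y (n+1) := by
    intro m n h
    have hk := hc2 (x (m+1)) (x (n+1)) (by rw [show A (x (m+1)) = Y m from rfl,
      show A (x (n+1)) = Y n from rfl, h, dist_self])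
    rw [hYS (m+1), hYT (n+1)]
    exact dist_eq_zero.mp hk
  -- successive distances
  have hdsucc : ∀ n : ℕ, dist (Y (n+1)) (Y (n+1+1)) ≤ φ (dist (Y n) (Y (n+1))) := by
    intro n
    by_cases h : Y (n+1) = Y n
    · have h2 := key0 (n+1) n h
      rw [h2, h, dist_self]
      exact hφ0 0 le_rfl
    · have hk := key (n+1) n h
      have hDpos : 0 < dist (Y (n+1)) (Y n) := dist_pos.mpr h
      have hne : dist (Y n) (Y (n+1)) ≠ 0 := by rw [dist_comm]; exact hDpos.ne'
      rw [dist_self, zero_mul, zero_div, dist_comm (Y (n+1)) (Y n), mul_div_assoc,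
        div_self hne, mul_one, max_eq_left dist_nonneg,
        dist_comm (Y (n+1+1)) (Y (n+1))] at hk
      rcases le_total (dist (Y (n+1)) (Y (n+1+1))) (dist (Y n) (Y (n+1))) with hle | hle
      · rwa [max_eq_left hle] at hk
      · rw [max_eq_right hle] at hk
        rcases eq_or_lt_of_le (dist_nonneg : (0:ℝ) ≤ dist (Y (n+1)) (Y (n+1+1))) with h0 | h0
        · rw [← h0]; exact hφ0 _ dist_nonneg
        · exact absurd hk (not_le.mpr (hφlt _ h0))
  have hanti : Antitone (fun n => dist (Y n) (Y (n+1))) :=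
    antitone_nat_of_succ_le (fun n => (hdsucc n).trans (hφle _ dist_nonneg))
  -- distances tend to zero
  have hdlim0 : Tendsto (fun n => dist (Y n) (Y (n+1))) atTop (𝓝 0) := by
    have hbdd : BddBelow (Set.range (fun n => dist (Y n) (Y (n+1)))) :=
      ⟨0, by rintro y ⟨n, rfl⟩; exact dist_nonneg⟩
    have h1 := tendsto_atTop_ciInf hanti hbdd
    set L := ⨅ n : ℕ, dist (Y n) (Y (n+1)) with hLdef
    have hL0 : 0 ≤ L := le_ciInf (fun n => dist_nonneg)
    have h2 : Tendsto (fun n => dist (Y (n+1)) (Y (n+1+1))) atTop (𝓝 L) :=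
      h1.comp (tendsto_add_atTop_nat 1)
    have h3 : Tendsto (fun n => φ (dist (Y n) (Y (n+1)))) atTop (𝓝 (φ L)) :=
      hφtend _ _ (fun n => dist_nonneg) hL0 h1
    have h4 : L ≤ φ L := le_of_tendsto_of_tendsto' h2 h3 hdsucc
    have hL : L = 0 := by
      rcases eq_or_lt_of_le hL0 with h | h
      · exact h.symm
      · exact absurd h4 (not_le.mpr (hφlt _ h))
    rwa [hL] at h1
  -- Cauchy
  have hcauchy : CauchySeq Y := by
    rw [Metric.cauchySeq_iff]
    by_contra hcon
    push_neg at hcon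
    obtain ⟨ε, hε, hbad⟩ := hcon
    have hpair : ∀ k : ℕ, ∃ m' n' : ℕ, k + 1 ≤ m' ∧ m' < n' ∧ ε ≤ dist (Y m') (Y n') ∧
        dist (Y m') (Y (n' - 1)) < ε := by
      intro k
      obtain ⟨m, hm, n, hn, hdist⟩ := hbad (k + 1)
      have hmn : m ≠ n := by rintro rfl; rw [dist_self] at hdist; linarith
      obtain ⟨m', n', hm', hmn', hd'⟩ : ∃ m' n', k + 1 ≤ m' ∧ m' < n' ∧ ε ≤ dist (Y m') (Y n') := by
        rcases lt_or_gt_of_ne hmn with h | h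
        · exact ⟨m, n, hm, h, hdist⟩
        · exact ⟨n, m, hn, h, by rwa [dist_comm]⟩
      have hex : ∃ j, m' < j ∧ ε ≤ dist (Y m') (Y j) := ⟨n', hmn', hd'⟩
      obtain ⟨hj1, hj2⟩ := Nat.find_spec hex
      refine ⟨m', Nat.find hex, hm', hj1, hj2, ?_⟩
      rcases Nat.lt_or_ge m' (Nat.find hex - 1) with h | h
      · have hmin := Nat.find_min hex (m := Nat.find hex - 1) (by omega)
        push_neg at hmin
        exact hmin h
      · have he : Nat.find hex - 1 = m' := by omega
        rw [he, dist_self]; exact hε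
    choose mf nf h1 h2 h3 h4 using hpair
    have hm1 : ∀ k, 1 ≤ mf k := fun k => le_trans (by omega) (h1 k)
    have hn1 : ∀ k, 1 ≤ nf k := fun k => le_trans (hm1 k) (le_of_lt (h2 k))
    have hmsub : ∀ k, mf k - 1 + 1 = mf k := fun k => Nat.succ_pred_eq_of_pos (hm1 k)
    have hnsub : ∀ k, nf k - 1 + 1 = nf k := fun k => Nat.succ_pred_eq_of_pos (hn1 k)
    have hdm : ∀ k, dist (Y (mf k - 1)) (Y (mf k)) ≤ dist (Y k) (Y (k+1)) := by
      intro k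
      have h : dist (Y (mf k - 1)) (Y ((mf k - 1)+1)) ≤ dist (Y k) (Y (k+1)) :=
        hanti (by have := h1 k; omega)
      rwa [hmsub k] at h
    have hdn : ∀ k, dist (Y (nf k - 1)) (Y (nf k)) ≤ dist (Y k) (Y (k+1)) := by
      intro k
      have h : dist (Y (nf k - 1)) (Y ((nf k - 1)+1)) ≤ dist (Y k) (Y (k+1)) :=
        hanti (by have := h1 k; have := h2 k; omega)
      rwa [hnsub k] at h
    have hdm0 : Tendsto (fun k => dist (Y (mf k - 1)) (Y (mf k))) atTop (𝓝 0) :=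
      tendsto_of_tendsto_of_tendsto_of_le_of_le tendsto_const_nhds hdlim0
        (fun k => dist_nonneg) hdm
    have hdn0 : Tendsto (fun k => dist (Y (nf k - 1)) (Y (nf k))) atTop (𝓝 0) :=
      tendsto_of_tendsto_of_tendsto_of_le_of_le tendsto_const_nhds hdlim0
        (fun k => dist_nonneg) hdn
    have ha : Tendsto (fun k => dist (Y (mf k)) (Y (nf k))) atTop (𝓝 ε) := by
      apply tendsto_of_tendsto_of_tendsto_of_le_of_le (g := fun _ => ε)
        (h := fun k => ε + dist (Y k) (Y (k+1))) tendsto_const_nhds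
        (by simpa using tendsto_const_nhds.add hdlim0) h3
      intro k
      calc dist (Y (mf k)) (Y (nf k))
          ≤ dist (Y (mf k)) (Y (nf k - 1)) + dist (Y (nf k - 1)) (Y (nf k)) := dist_triangle _ _ _
        _ ≤ ε + dist (Y k) (Y (k+1)) := add_le_add (le_of_lt (h4 k)) (hdn k)
    have hb : Tendsto (fun k => dist (Y (mf k - 1)) (Y (nf k - 1))) atTop (𝓝 ε) := by
      apply tendsto_of_tendsto_of_tendsto_of_le_of_le
        (g := fun k => dist (Y (mf k)) (Y (nf k)) - dist (Y (mf k - 1)) (Y (mf k))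
          - dist (Y (nf k - 1)) (Y (nf k)))
        (h := fun k => dist (Y (mf k - 1)) (Y (mf k)) + dist (Y (mf k)) (Y (nf k))
          + dist (Y (nf k - 1)) (Y (nf k)))
        (by simpa using (ha.sub hdm0).sub hdn0)
        (by simpa using (hdm0.add ha).add hdn0)
      · intro k
        beta_reduce
        have t := dist_triangle4 (Y (mf k)) (Y (mf k - 1)) (Y (nf k - 1)) (Y (nf k))
        have c1 := dist_comm (Y (mf k)) (Y (mf k - 1))
        linarith
      · intro k
        beta_reduce
        have t := dist_triangle4 (Y (mf k - 1)) (Y (mf k)) (Y (nf k)) (Y (nf k - 1))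
        have c2 := dist_comm (Y (nf k)) (Y (nf k - 1))
        linarith
    have hcc : Tendsto (fun k => dist (Y (mf k - 1)) (Y (nf k))) atTop (𝓝 ε) := by
      apply tendsto_of_tendsto_of_tendsto_of_le_of_le
        (g := fun k => dist (Y (mf k)) (Y (nf k)) - dist (Y (mf k - 1)) (Y (mf k)))
        (h := fun k => dist (Y (mf k - 1)) (Y (mf k)) + dist (Y (mf k)) (Y (nf k)))
        (by simpa using ha.sub hdm0)
        (by simpa using hdm0.add ha)
      · intro k
        beta_reduce
        have t := dist_triangle (Y (mf k)) (Y (mf k - 1)) (Y (nf k))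
        have c1 := dist_comm (Y (mf k)) (Y (mf k - 1))
        linarith
      · intro k
        beta_reduce
        have t := dist_triangle (Y (mf k - 1)) (Y (mf k)) (Y (nf k))
        linarith
    have hee : Tendsto (fun k => dist (Y (nf k - 1)) (Y (mf k))) atTop (𝓝 ε) := by
      apply tendsto_of_tendsto_of_tendsto_of_le_of_le
        (g := fun k => dist (Y (mf k)) (Y (nf k)) - dist (Y (nf k - 1)) (Y (nf k)))
        (h := fun k => dist (Y (nf k - 1)) (Y (nf k)) + dist (Y (mf k)) (Y (nf k)))
        (by simpa using ha.sub hdn0)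
        (by simpa using hdn0.add ha)
      · intro k
        beta_reduce
        have t := dist_triangle (Y (mf k)) (Y (nf k - 1)) (Y (nf k))
        have c1 := dist_comm (Y (mf k)) (Y (nf k - 1))
        linarith
      · intro k
        beta_reduce
        have t := dist_triangle (Y (nf k - 1)) (Y (nf k)) (Y (mf k))
        have c2 := dist_comm (Y (nf k)) (Y (mf k))
        linarith
    have hbpos : ∀ᶠ k in atTop, 0 < dist (Y (mf k - 1)) (Y (nf k - 1)) :=
      hb.eventually (eventually_gt_nhds hε)
    have hineq : ∀ᶠ k in atTop, dist (Y (mf k)) (Y (nf k)) ≤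
        φ (max (dist (Y (mf k - 1)) (Y (nf k - 1)))
          (max (dist (Y (mf k - 1)) (Y (mf k)) * dist (Y (nf k - 1)) (Y (nf k)) /
              dist (Y (mf k - 1)) (Y (nf k - 1)))
            (dist (Y (mf k - 1)) (Y (nf k)) * dist (Y (nf k - 1)) (Y (mf k)) /
              dist (Y (mf k - 1)) (Y (nf k - 1))))) := by
      refine hbpos.mono (fun k hk => ?_)
      have hne : Y (mf k - 1) ≠ Y (nf k - 1) := dist_pos.mp hk
      have hkk := key (mf k - 1) (nf k - 1) hne
      rwa [hmsub k, hnsub k] at hkk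
    have hMten : Tendsto (fun k => max (dist (Y (mf k - 1)) (Y (nf k - 1)))
          (max (dist (Y (mf k - 1)) (Y (mf k)) * dist (Y (nf k - 1)) (Y (nf k)) /
              dist (Y (mf k - 1)) (Y (nf k - 1)))
            (dist (Y (mf k - 1)) (Y (nf k)) * dist (Y (nf k - 1)) (Y (mf k)) /
              dist (Y (mf k - 1)) (Y (nf k - 1))))) atTop
        (𝓝 (max ε (max (0 * 0 / ε) (ε * ε / ε)))) :=
      hb.max (((hdm0.mul hdn0).div hb hε.ne').max ((hcc.mul hee).div hb hε.ne'))
    have hval : max ε (max ((0:ℝ) * 0 / ε) (ε * ε / ε)) = ε := by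
      rw [zero_mul, zero_div, mul_div_assoc, div_self hε.ne', mul_one,
        max_eq_right hε.le, max_self]
    rw [hval] at hMten
    have hφM := hφtend _ ε (fun k => le_trans dist_nonneg (le_max_left _ _)) hε.le hMten
    have hfin : ε ≤ φ ε := ge_of_tendsto hφM (hineq.mono (fun k hk => le_trans (h3 k) hk))
    linarith [hφlt ε hε]
  -- limit of the orbit
  obtain ⟨u, hu⟩ := hcomp Y (fun k => ⟨k, rfl⟩) hcauchy
  set z : ℕ → X := fun n => x (n + 1) with hzdef
  have hAz : Tendsto (fun n => A (z n)) atTop (𝓝 u) := hu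
  have hSz : Tendsto (fun n => S (z n)) atTop (𝓝 u) :=
    (hu.comp (tendsto_add_atTop_nat 1)).congr (fun n => hYS (n + 1))
  have hTz : Tendsto (fun n => T (z n)) atTop (𝓝 u) := hSz.congr (fun n => hST (z n))
  obtain ⟨hASz, hSAz⟩ := hrcAS z u hAz hSz
  obtain ⟨hdist1, hdist2⟩ := htAS z u hAz hSz
  have hSSz : Tendsto (fun n => S (S (z n))) atTop (𝓝 (A u)) := hASz.congr_dist hdist1
  have hAAz : Tendsto (fun n => A (A (z n))) atTop (𝓝 (S u)) := hSAz.congr_dist hdist2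
  -- main limiting argument
  have main : ∀ (w : ℕ → X) (p : X),
      Tendsto (fun n => A (w n)) atTop (𝓝 p) →
      Tendsto (fun n => S (w n)) atTop (𝓝 p) → p = u := by
    intro w p hAw hSw
    by_contra hne
    have hδ : 0 < dist p u := dist_pos.mpr hne
    have hD : Tendsto (fun n => dist (A (w n)) (A (z n))) atTop (𝓝 (dist p u)) := hAw.dist hAz
    have hev : ∀ᶠ n in atTop, (0:ℝ) < dist (A (w n)) (A (z n)) :=
      hD.eventually (eventually_gt_nhds hδ)
    have hineq : ∀ᶠ n in atTop, dist (S (w n)) (T (z n)) ≤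
        φ (max (dist (A (w n)) (A (z n)))
          (max (dist (A (w n)) (S (w n)) * dist (A (z n)) (T (z n)) / dist (A (w n)) (A (z n)))
            (dist (A (w n)) (T (z n)) * dist (A (z n)) (S (w n)) / dist (A (w n)) (A (z n))))) :=
      hev.mono (fun n hn => hc1 (w n) (z n) (dist_pos.mp hn))
    have hM : Tendsto (fun n => max (dist (A (w n)) (A (z n)))
          (max (dist (A (w n)) (S (w n)) * dist (A (z n)) (T (z n)) / dist (A (w n)) (A (z n)))
            (dist (A (w n)) (T (z n)) * dist (A (z n)) (S (w n)) / dist (A (w n)) (A (z n)))))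
        atTop (𝓝 (max (dist p u) (max (dist p p * dist u u / dist p u)
          (dist p u * dist u p / dist p u)))) :=
      hD.max ((((hAw.dist hSw).mul (hAz.dist hTz)).div hD hδ.ne').max
        (((hAw.dist hTz).mul (hAz.dist hSw)).div hD hδ.ne'))
    have hval : max (dist p u) (max (dist p p * dist u u / dist p u)
        (dist p u * dist u p / dist p u)) = dist p u := by
      rw [dist_self, dist_self, zero_mul, zero_div, dist_comm u p, mul_div_assoc,
        div_self hδ.ne', mul_one, max_eq_right hδ.le, max_self]
    rw [hval] at hM
    have hφM := hφtend _ _ (fun n => le_trans dist_nonneg (le_max_left _ _)) hδ.le hM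
    have hLHS : Tendsto (fun n => dist (S (w n)) (T (z n))) atTop (𝓝 (dist p u)) :=
      hSw.dist hTz
    have hfin : dist p u ≤ φ (dist p u) := le_of_tendsto_of_tendsto hLHS hφM hineq
    linarith [hφlt _ hδ]
  have hSu : S u = u := main (fun n => A (z n)) (S u) hAAz hSAz
  have hAu : A u = u := main (fun n => S (z n)) (A u) hASz hSSz
  have hTu : T u = u := by rw [← hST]; exact hSu
  refine ⟨u, ⟨hSu, hTu, hAu⟩, ?_⟩
  rintro v ⟨hSv, hTv, hAv⟩
  by_contra hne
  have hδ : 0 < dist v u := dist_pos.mpr hne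
  have hAne : A v ≠ A u := by rw [hAv, hAu]; exact hne
  have hk := hc1 v u hAne
  rw [hSv, hTu, hAv, hAu] at hk
  rw [dist_self, dist_self, zero_mul, zero_div, dist_comm u v, mul_div_assoc,
    div_self hδ.ne', mul_one, max_eq_right hδ.le, max_self] at hk
  linarith [hφlt _ hδ]
end

section
/- Let (X,d) be a metric space and S, A : X → X. Suppose there exists φ ∈ Φ such that for all x, y ∈ X: whenever Ax ≠ Ay, d(Sx,Sy) ≤ φ(max{d(Ax,Ay), d(Ax,Sx)·d(Ay,Sy)/d(Ax,Ay), d(Ax,Sy)·d(Ay,Sx)/d(Ax,Ay)}), and whenever d(Ax,Ay) = 0, d(Sx,Sy) = 0. Suppose there exists a sequence {xₙ} in X with Axₙ = Sxₙ₋₁ for all n ≥ 1 (an (S,A)-orbit of x₀). Assume X is (S,S,A)-orbitally complete at x₀, the pair (A,S) is reciprocally continuous, and the pair (A,S) is either compatible or compatible of type (A). Then A and S have a unique common fixed point. -/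
open Filter Topology

/-! Everything rests on one limit principle for the maximum `M` inside `φ`: if
`dist (pₙ, p'ₙ) → 0`, `dist (qₙ, q'ₙ) → 0` and `dist (p'ₙ, q'ₙ) → r`, then also
`M(pₙ, p'ₙ, qₙ, q'ₙ) → r`, so the contractive inequality passes to the limit as `r ≤ φ r`,
which forces `r = 0`.

Along the orbit `yₙ = S xₙ = A xₙ₊₁` the inequality reads `dist (yₙ₊₁, yₙ₊₂) ≤ φ (dist (yₙ, yₙ₊₁))`,
so consecutive distances tend to `0`. If the orbit were not Cauchy, the first index `j ≥ k` at
which it leaves the `ε`-ball around `yₖ₊₁` would give `dist (yⱼ₊₁, yₖ₊₁) → ε`, and the limit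
principle yields `ε = 0`. At the limit `t` of the orbit, compatibility (or compatibility of type
(A)) and reciprocal continuity give `A t = S t`; the limit principle applied along `(xₙ₊₁, t)`
gives `S t = t`, and applied to two common fixed points shows that they coincide. -/

section

variable {X : Type*} [MetricSpace X] {φ : ℝ → ℝ} {S A : X → X}

/-- `contractiveArg (A u) (S u) (A v) (S v)` is the argument of `φ` in the contractive condition. -/
noncomputable def contractiveArg (x x' y y' : X) : ℝ :=
  max (dist x y) (max (dist x x' * dist y y' / dist x y) (dist x y' * dist y x' / dist x y))

lemma contractiveArg_nonneg (x x' y y' : X) : 0 ≤ contractiveArg x x' y y' :=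
  dist_nonneg.trans (le_max_left _ _)

lemma contractiveArg_succ {x y z : X} (h : x ≠ y) :
    contractiveArg x y y z = max (dist x y) (dist y z) := by
  have hxy : dist x y ≠ 0 := dist_ne_zero.2 h
  simp only [contractiveArg, mul_div_cancel_left₀ _ hxy, dist_self, mul_zero, zero_div]
  rw [max_eq_left (a := dist y z) dist_nonneg]

theorem eq_zero_of_le_phi_of_tendsto (hφc : ContinuousOn φ (Set.Ici 0))
    (hφlt : ∀ t : ℝ, 0 < t → φ t < t) {u v : ℕ → ℝ} {r : ℝ} (hv : ∀ n, 0 ≤ v n)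
    (huv : ∀ᶠ n in atTop, u n ≤ φ (v n)) (hu : Tendsto u atTop (𝓝 r))
    (hvr : Tendsto v atTop (𝓝 r)) : r = 0 := by
  have hr : 0 ≤ r := ge_of_tendsto' hvr hv
  have hφv : Tendsto (fun n => φ (v n)) atTop (𝓝 (φ r)) :=
    (hφc r hr).tendsto.comp (tendsto_nhdsWithin_iff.2 ⟨hvr, Eventually.of_forall hv⟩)
  have hrφ : r ≤ φ r := le_of_tendsto_of_tendsto hu hφv huv
  by_contra hne
  exact (hrφ.trans_lt (hφlt r (hr.lt_of_ne' hne))).false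

theorem tendsto_zero_of_succ_le_phi (hφc : ContinuousOn φ (Set.Ici 0))
    (hφlt : ∀ t : ℝ, 0 < t → φ t < t) {d : ℕ → ℝ} (hd : ∀ n, 0 ≤ d n)
    (hpos : ∀ n, 0 < d n → d (n + 1) ≤ φ (d n)) (hzero : ∀ n, d n = 0 → d (n + 1) = 0) :
    Tendsto d atTop (𝓝 0) := by
  have hanti : Antitone d := antitone_nat_of_succ_le fun n => by
    rcases (hd n).eq_or_lt with h | h
    · rw [← h, hzero n h.symm]
    · exact (hpos n h).trans (hφlt _ h).le
  obtain ⟨L, hL⟩ : ∃ L, Tendsto d atTop (𝓝 L) :=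
    ⟨_, tendsto_atTop_ciInf hanti ⟨0, by rintro _ ⟨n, rfl⟩; exact hd n⟩⟩
  suffices L = 0 by rwa [this] at hL
  rcases (ge_of_tendsto' hL hd).eq_or_lt with h | h
  · exact h.symm
  · exact eq_zero_of_le_phi_of_tendsto hφc hφlt hd
      (Eventually.of_forall fun n => hpos n (h.trans_le (hanti.le_of_tendsto hL n)))
      ((tendsto_add_atTop_iff_nat 1).2 hL) hL

lemma tendsto_dist_of_tendsto_dist_zero {a a' b b' : ℕ → X} {r : ℝ}
    (ha : Tendsto (fun n => dist (a n) (a' n)) atTop (𝓝 0))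
    (hb : Tendsto (fun n => dist (b n) (b' n)) atTop (𝓝 0))
    (h : Tendsto (fun n => dist (a' n) (b' n)) atTop (𝓝 r)) :
    Tendsto (fun n => dist (a n) (b n)) atTop (𝓝 r) := by
  have hbound (n : ℕ) :
      dist (dist (a' n) (b' n)) (dist (a n) (b n)) ≤ dist (a n) (a' n) + dist (b n) (b' n) := by
    rw [dist_comm (a n) (a' n), dist_comm (b n) (b' n)]
    exact dist_dist_dist_le (a' n) (b' n) (a n) (b n)
  exact h.congr_dist (squeeze_zero (fun _ => dist_nonneg) hbound (by simpa using ha.add hb))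

theorem eq_zero_of_contractive_of_tendsto (hφc : ContinuousOn φ (Set.Ici 0))
    (hφlt : ∀ t : ℝ, 0 < t → φ t < t) {p p' q q' : ℕ → X} {r : ℝ}
    (hcontr : ∀ n, p n ≠ q n →
      dist (p' n) (q' n) ≤ φ (contractiveArg (p n) (p' n) (q n) (q' n)))
    (hp : Tendsto (fun n => dist (p n) (p' n)) atTop (𝓝 0))
    (hq : Tendsto (fun n => dist (q n) (q' n)) atTop (𝓝 0))
    (hr : Tendsto (fun n => dist (p' n) (q' n)) atTop (𝓝 r)) : r = 0 := by
  by_contra hne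
  have hpq : Tendsto (fun n => dist (p n) (q n)) atTop (𝓝 r) :=
    tendsto_dist_of_tendsto_dist_zero hp hq hr
  have hpq' : Tendsto (fun n => dist (p n) (q' n)) atTop (𝓝 r) :=
    tendsto_dist_of_tendsto_dist_zero (b' := q') hp (by simp) hr
  have hqp' : Tendsto (fun n => dist (q n) (p' n)) atTop (𝓝 r) :=
    tendsto_dist_of_tendsto_dist_zero (b' := p') hq (by simp) (by simpa only [dist_comm] using hr)
  have harg : Tendsto (fun n => contractiveArg (p n) (p' n) (q n) (q' n)) atTop (𝓝 r) := by
    have := hpq.max (((hp.mul hq).div hpq hne).max ((hpq'.mul hqp').div hpq hne))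
    have hr0 : 0 ≤ r := ge_of_tendsto' hr fun _ => dist_nonneg
    rwa [zero_mul, zero_div, mul_self_div_self, max_eq_right hr0, max_self] at this
  have hcontr' : ∀ᶠ n in atTop,
      dist (p' n) (q' n) ≤ φ (contractiveArg (p n) (p' n) (q n) (q' n)) :=
    (hpq.eventually_ne hne).mono fun n hn => hcontr n (dist_ne_zero.1 hn)
  exact hne (eq_zero_of_le_phi_of_tendsto hφc hφlt (fun n => contractiveArg_nonneg _ _ _ _)
    hcontr' hr harg)

lemma exists_dist_crossing_of_not_cauchySeq {y : ℕ → X} (hy : ¬CauchySeq y) :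
    ∃ ε > 0, ∀ k, ∃ j, k ≤ j ∧
      ε ≤ dist (y (j + 1)) (y (k + 1)) ∧ dist (y j) (y (k + 1)) < ε := by
  rw [Metric.cauchySeq_iff'] at hy
  push Not at hy
  obtain ⟨ε, hε, hfar⟩ := hy
  refine ⟨ε, hε, fun k => ?_⟩
  obtain ⟨n, hkn, hn⟩ := hfar (k + 1)
  obtain ⟨s, hs, hs1⟩ := Nat.exists_not_and_succ_of_not_zero_of_exists
    (p := fun s => ε ≤ dist (y (k + 1 + s)) (y (k + 1))) (by simpa using hε)
    ⟨n - (k + 1), by rwa [Nat.add_sub_cancel' hkn]⟩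
  refine ⟨k + 1 + s, by omega, hs1, not_le.1 ?_⟩
  simpa [add_assoc] using hs

theorem tendsto_dist_succ_of_contractive (hφc : ContinuousOn φ (Set.Ici 0))
    (hφlt : ∀ t : ℝ, 0 < t → φ t < t) {y : ℕ → X}
    (hcontr : ∀ n, y n ≠ y (n + 1) → dist (y (n + 1)) (y (n + 1 + 1)) ≤
      φ (contractiveArg (y n) (y (n + 1)) (y (n + 1)) (y (n + 1 + 1))))
    (hz : ∀ n, y n = y (n + 1) → y (n + 1) = y (n + 1 + 1)) :
    Tendsto (fun n => dist (y n) (y (n + 1))) atTop (𝓝 0) := by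
  refine tendsto_zero_of_succ_le_phi hφc hφlt (fun _ => dist_nonneg) (fun n hn => ?_)
    (fun n hn => dist_eq_zero.2 (hz n (dist_eq_zero.1 hn)))
  have hne : y n ≠ y (n + 1) := dist_pos.1 hn
  have H := hcontr n hne
  rw [contractiveArg_succ hne] at H
  have hle : dist (y (n + 1)) (y (n + 1 + 1)) ≤ dist (y n) (y (n + 1)) := by
    by_contra! hlt
    rw [max_eq_right hlt.le] at H
    exact (H.trans_lt (hφlt _ (hn.trans hlt))).false
  rwa [max_eq_left hle] at H

theorem cauchySeq_of_contractive (hφc : ContinuousOn φ (Set.Ici 0))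
    (hφlt : ∀ t : ℝ, 0 < t → φ t < t) {y : ℕ → X}
    (hcontr : ∀ m n, y m ≠ y n →
      dist (y (m + 1)) (y (n + 1)) ≤ φ (contractiveArg (y m) (y (m + 1)) (y n) (y (n + 1))))
    (hz : ∀ m n, y m = y n → y (m + 1) = y (n + 1)) : CauchySeq y := by
  have hstep := tendsto_dist_succ_of_contractive hφc hφlt (fun n => hcontr n (n + 1))
    fun n => hz n (n + 1)
  by_contra hy
  obtain ⟨ε, hε, hcross⟩ := exists_dist_crossing_of_not_cauchySeq hy
  choose j hkj hfar hnear using hcross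
  have hj : Tendsto j atTop atTop := tendsto_atTop_mono hkj tendsto_id
  have hfar_lim : Tendsto (fun k => dist (y (j k + 1)) (y (k + 1))) atTop (𝓝 ε) := by
    refine tendsto_of_tendsto_of_tendsto_of_le_of_le tendsto_const_nhds
      (by simpa using (hstep.comp hj).add_const ε) hfar fun k => ?_
    calc dist (y (j k + 1)) (y (k + 1))
        ≤ dist (y (j k)) (y (j k + 1)) + dist (y (j k)) (y (k + 1)) := dist_triangle_left _ _ _
      _ ≤ dist (y (j k)) (y (j k + 1)) + ε := by linarith [hnear k]
  exact hε.ne' (eq_zero_of_contractive_of_tendsto hφc hφlt (p := fun k => y (j k)) (q := y)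
    (fun k => hcontr (j k) k) (hstep.comp hj) hstep hfar_lim)

theorem apply_eq_apply_of_compatibleTypeA_limits (hφc : ContinuousOn φ (Set.Ici 0))
    (hφlt : ∀ t : ℝ, 0 < t → φ t < t)
    (hc : ∀ x y, A x ≠ A y → dist (S x) (S y) ≤ φ (contractiveArg (A x) (S x) (A y) (S y)))
    {z : ℕ → X} {t : X}
    (hAS : Tendsto (fun n => A (S (z n))) atTop (𝓝 (A t)))
    (hSA : Tendsto (fun n => S (A (z n))) atTop (𝓝 (S t)))
    (hASS : Tendsto (fun n => dist (A (S (z n))) (S (S (z n)))) atTop (𝓝 0))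
    (hSAA : Tendsto (fun n => dist (S (A (z n))) (A (A (z n)))) atTop (𝓝 0)) : S t = A t :=
  dist_eq_zero.1 <| eq_zero_of_contractive_of_tendsto hφc hφlt
    (p := fun n => A (A (z n))) (q := fun n => A (S (z n)))
    (fun n => hc (A (z n)) (S (z n))) (by simpa only [dist_comm] using hSAA) hASS
    (hSA.dist (hAS.congr_dist hASS))

theorem apply_eq_self_of_tendsto_orbit (hφc : ContinuousOn φ (Set.Ici 0))
    (hφlt : ∀ t : ℝ, 0 < t → φ t < t)
    (hc : ∀ x y, A x ≠ A y → dist (S x) (S y) ≤ φ (contractiveArg (A x) (S x) (A y) (S y)))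
    {x : ℕ → X} {t : X} (horb : ∀ n, A (x (n + 1)) = S (x n))
    (hSx : Tendsto (fun n => S (x n)) atTop (𝓝 t)) (hAt : A t = S t) : S t = t := by
  have hSx' : Tendsto (fun n => S (x (n + 1))) atTop (𝓝 t) := (tendsto_add_atTop_iff_nat 1).2 hSx
  have hstep : Tendsto (fun n => dist (A (x (n + 1))) (S (x (n + 1)))) atTop (𝓝 0) := by
    simpa only [horb, dist_self] using hSx.dist hSx'
  exact (dist_eq_zero.1 (eq_zero_of_contractive_of_tendsto hφc hφlt
    (q := fun _ => A t) (q' := fun _ => S t) (fun n => hc (x (n + 1)) t) hstep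
    (by simp [hAt]) (hSx'.dist tendsto_const_nhds))).symm

theorem eq_of_common_fixedPoints (hφc : ContinuousOn φ (Set.Ici 0))
    (hφlt : ∀ t : ℝ, 0 < t → φ t < t)
    (hc : ∀ x y, A x ≠ A y → dist (S x) (S y) ≤ φ (contractiveArg (A x) (S x) (A y) (S y)))
    {u v : X} (hSu : S u = u) (hAu : A u = u) (hSv : S v = v) (hAv : A v = v) : u = v := by
  have hcontr : u ≠ v → dist u v ≤ φ (contractiveArg u u v v) := by
    simpa only [hSu, hAu, hSv, hAv] using hc u v
  exact dist_eq_zero.1 (eq_zero_of_contractive_of_tendsto hφc hφlt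
    (p := fun _ => u) (q := fun _ => v) (fun _ => hcontr) (by simp) (by simp) tendsto_const_nhds)

end

theorem stmt_4_general {X : Type*} [MetricSpace X] (S A : X → X) (φ : ℝ → ℝ)
    (hφc : ContinuousOn φ (Set.Ici 0))
    (hφlt : ∀ t : ℝ, 0 < t → φ t < t)
    (hc1 : ∀ x y : X, A x ≠ A y →
      dist (S x) (S y) ≤ φ (max (dist (A x) (A y))
        (max (dist (A x) (S x) * dist (A y) (S y) / dist (A x) (A y))
             (dist (A x) (S y) * dist (A y) (S x) / dist (A x) (A y)))))
    (hc2 : ∀ x y : X, dist (A x) (A y) = 0 → dist (S x) (S y) = 0)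
    (x : ℕ → X)
    (horb : ∀ n : ℕ, A (x (n + 1)) = S (x n))
    -- X is orbitally complete at x₀
    (hcomp : ∀ u : ℕ → X, (∀ k : ℕ, ∃ n : ℕ, u k = A (x (n + 1))) → CauchySeq u →
      ∃ l : X, Tendsto u atTop (𝓝 l))
    -- the pair (A,S) is reciprocally continuous
    (hrcAS : ∀ (z : ℕ → X) (t : X),
      Tendsto (fun n => A (z n)) atTop (𝓝 t) → Tendsto (fun n => S (z n)) atTop (𝓝 t) →
      Tendsto (fun n => A (S (z n))) atTop (𝓝 (A t)) ∧
      Tendsto (fun n => S (A (z n))) atTop (𝓝 (S t)))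
    -- the pair (A,S) is either compatible or compatible of type (A)
    (hor : (∀ (z : ℕ → X) (t : X),
        Tendsto (fun n => A (z n)) atTop (𝓝 t) → Tendsto (fun n => S (z n)) atTop (𝓝 t) →
        Tendsto (fun n => dist (S (A (z n))) (A (S (z n)))) atTop (𝓝 0)) ∨
      (∀ (z : ℕ → X) (t : X),
        Tendsto (fun n => A (z n)) atTop (𝓝 t) → Tendsto (fun n => S (z n)) atTop (𝓝 t) →
        Tendsto (fun n => dist (A (S (z n))) (S (S (z n)))) atTop (𝓝 0) ∧
        Tendsto (fun n => dist (S (A (z n))) (A (A (z n)))) atTop (𝓝 0))) :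
    ∃! u : X, S u = u ∧ A u = u := by
  have hc : ∀ x y, A x ≠ A y → dist (S x) (S y) ≤ φ (contractiveArg (A x) (S x) (A y) (S y)) :=
    hc1
  have hy : ∀ m n, S (x m) ≠ S (x n) → dist (S (x (m + 1))) (S (x (n + 1))) ≤
      φ (contractiveArg (S (x m)) (S (x (m + 1))) (S (x n)) (S (x (n + 1)))) := fun m n h => by
    simpa only [horb] using hc (x (m + 1)) (x (n + 1)) (by rwa [horb, horb])
  have hz : ∀ m n, S (x m) = S (x n) → S (x (m + 1)) = S (x (n + 1)) := fun m n h =>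
    dist_eq_zero.1 (hc2 _ _ (by rw [horb, horb, h, dist_self]))
  obtain ⟨t, hSx⟩ := hcomp (fun n => S (x n)) (fun k => ⟨k, (horb k).symm⟩)
    (cauchySeq_of_contractive hφc hφlt hy hz)
  have hAx : Tendsto (fun n => A (x n)) atTop (𝓝 t) :=
    (tendsto_add_atTop_iff_nat 1).1 (by simpa only [horb] using hSx)
  obtain ⟨hASx, hSAx⟩ := hrcAS x t hAx hSx
  have hAt : A t = S t := by
    rcases hor with hcompat | htypeA
    · exact (dist_eq_zero.1 (tendsto_nhds_unique (hSAx.dist hASx) (hcompat x t hAx hSx))).symm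
    · obtain ⟨hASS, hSAA⟩ := htypeA x t hAx hSx
      exact (apply_eq_apply_of_compatibleTypeA_limits hφc hφlt hc hASx hSAx hASS hSAA).symm
  have hSt : S t = t := apply_eq_self_of_tendsto_orbit hφc hφlt hc horb hSx hAt
  exact ⟨t, ⟨hSt, hAt.trans hSt⟩, fun v ⟨hSv, hAv⟩ =>
    eq_of_common_fixedPoints hφc hφlt hc hSv hAv hSt (hAt.trans hSt)⟩

/-- The two-map case `S = T`: under the φ-contractive inequality for the
pair `(S,A)`, existence of an `(S,A)`-orbit, orbital completeness at `x₀`, reciprocal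
continuity of `(A,S)`, and `(A,S)` being either compatible or compatible of type (A),
the maps `A` and `S` have a unique common fixed point. -/
theorem stmt_4 {X : Type*} [MetricSpace X] (S A : X → X) (φ : ℝ → ℝ)
    (hφc : ContinuousOn φ (Set.Ici 0))
    (hφm : MonotoneOn φ (Set.Ici 0))
    (hφ0 : ∀ t : ℝ, 0 ≤ t → 0 ≤ φ t)
    (hφlt : ∀ t : ℝ, 0 < t → φ t < t)
    (hc1 : ∀ x y : X, A x ≠ A y →
      dist (S x) (S y) ≤ φ (max (dist (A x) (A y))
        (max (dist (A x) (S x) * dist (A y) (S y) / dist (A x) (A y))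
             (dist (A x) (S y) * dist (A y) (S x) / dist (A x) (A y)))))
    (hc2 : ∀ x y : X, dist (A x) (A y) = 0 → dist (S x) (S y) = 0)
    (x : ℕ → X)
    (horb : ∀ n : ℕ, A (x (n + 1)) = S (x n))
    -- X is orbitally complete at x₀
    (hcomp : ∀ u : ℕ → X, (∀ k : ℕ, ∃ n : ℕ, u k = A (x (n + 1))) → CauchySeq u →
      ∃ l : X, Tendsto u atTop (𝓝 l))
    -- the pair (A,S) is reciprocally continuous
    (hrcAS : ∀ (z : ℕ → X) (t : X),
      Tendsto (fun n => A (z n)) atTop (𝓝 t) → Tendsto (fun n => S (z n)) atTop (𝓝 t) →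
      Tendsto (fun n => A (S (z n))) atTop (𝓝 (A t)) ∧
      Tendsto (fun n => S (A (z n))) atTop (𝓝 (S t)))
    -- the pair (A,S) is either compatible or compatible of type (A)
    (hor : (∀ (z : ℕ → X) (t : X),
        Tendsto (fun n => A (z n)) atTop (𝓝 t) → Tendsto (fun n => S (z n)) atTop (𝓝 t) →
        Tendsto (fun n => dist (S (A (z n))) (A (S (z n)))) atTop (𝓝 0)) ∨
      (∀ (z : ℕ → X) (t : X),
        Tendsto (fun n => A (z n)) atTop (𝓝 t) → Tendsto (fun n => S (z n)) atTop (𝓝 t) →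
        Tendsto (fun n => dist (A (S (z n))) (S (S (z n)))) atTop (𝓝 0) ∧
        Tendsto (fun n => dist (S (A (z n))) (A (A (z n)))) atTop (𝓝 0))) :
    ∃! u : X, S u = u ∧ A u = u :=
  stmt_4_general S A φ hφc hφlt hc1 hc2 x horb hcomp hrcAS hor
end

section
/- Let (X,d) be a metric space, {Sₙ}ₙ₌₁^∞ a sequence of selfmaps of X, and A : X → X. Suppose there exists φ ∈ Φ such that for each j ≥ 1 the triple (S₁, Sⱼ, A) satisfies: for all x, y ∈ X, whenever Ax ≠ Ay, d(S₁x, Sⱼy) ≤ φ(max{d(Ax,Ay), d(Ax,S₁x)·d(Ay,Sⱼy)/d(Ax,Ay), d(Ax,Sⱼy)·d(Ay,S₁x)/d(Ax,Ay)}), and whenever d(Ax,Ay) = 0, d(S₁x, Sⱼy) = 0. Suppose there exists a sequence {xₙ} in X with Axₙ = S₁xₙ₋₁ for all n ≥ 1, X is orbitally complete at x₀, the pair (S₁, A) is reciprocally continuous, and the pair (S₁, A) is either compatible or compatible of type (A). Then there is a unique point z ∈ X such that Az = z and Sₙz = z for all n ≥ 1. -/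
open Filter Topology


lemma phi_limit_aux {φ : ℝ → ℝ} (hφc : ContinuousOn φ (Set.Ici 0))
    (hφlt : ∀ t : ℝ, 0 < t → φ t < t)
    {a b : ℕ → ℝ} {r : ℝ} (hr : 0 ≤ r)
    (hb0 : ∀ᶠ n in atTop, 0 ≤ b n)
    (hab : ∀ᶠ n in atTop, a n ≤ φ (b n))
    (ha : Tendsto a atTop (𝓝 r)) (hb : Tendsto b atTop (𝓝 r)) : r = 0 := by
  by_contra h
  have hr' : 0 < r := lt_of_le_of_ne hr (Ne.symm h)
  have hphib : Tendsto (fun n => φ (b n)) atTop (𝓝 (φ r)) :=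
    (hφc r hr).tendsto.comp (tendsto_nhdsWithin_iff.mpr ⟨hb, hb0⟩)
  have : r ≤ φ r := le_of_tendsto_of_tendsto ha hphib hab
  exact absurd (lt_of_le_of_lt this (hφlt r hr')) (lt_irrefl r)

lemma max_simp_aux {D : ℝ} (hD : 0 < D) : max D (max (0 * 0 / D) (D * D / D)) = D := by
  rw [zero_mul, zero_div, mul_div_assoc, div_self hD.ne', mul_one,
    max_eq_right hD.le, max_self]

lemma orbit_cauchy {X : Type*} [MetricSpace X] (φ : ℝ → ℝ)
    (hφc : ContinuousOn φ (Set.Ici 0))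
    (hφm : MonotoneOn φ (Set.Ici 0))
    (hφ0 : ∀ t : ℝ, 0 ≤ t → 0 ≤ φ t)
    (hφlt : ∀ t : ℝ, 0 < t → φ t < t)
    (y : ℕ → X)
    (key : ∀ m n : ℕ, dist (y m) (y n) ≠ 0 →
      dist (y (m + 1)) (y (n + 1)) ≤ φ (max (dist (y m) (y n))
        (max (dist (y m) (y (m + 1)) * dist (y n) (y (n + 1)) / dist (y m) (y n))
             (dist (y m) (y (n + 1)) * dist (y n) (y (m + 1)) / dist (y m) (y n)))))
    (key0 : ∀ m n : ℕ, dist (y m) (y n) = 0 →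
      dist (y (m + 1)) (y (n + 1)) = 0) :
    CauchySeq y := by
  have hφ00 : φ 0 = 0 := by
    by_contra h
    have h0 : 0 < φ 0 := lt_of_le_of_ne (hφ0 0 le_rfl) (Ne.symm h)
    exact absurd (hφlt _ h0) (not_lt.mpr (hφm (Set.mem_Ici.2 le_rfl)
      (Set.mem_Ici.2 h0.le) (hφ0 0 le_rfl)))
  have hφle : ∀ t : ℝ, 0 ≤ t → φ t ≤ t := by
    intro t ht
    rcases eq_or_lt_of_le ht with h | h
    · rw [← h, hφ00]
    · exact (hφlt t h).le
  set d : ℕ → ℝ := fun n => dist (y n) (y (n + 1)) with hd_def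
  have hdnn : ∀ k, 0 ≤ d k := fun k => dist_nonneg
  have h_d : ∀ n : ℕ, d (n + 1) ≤ φ (d n) := by
    intro n
    by_cases h0 : d n = 0
    · have h1 : d (n + 1) = 0 := key0 n (n + 1) h0
      rw [h1, h0, hφ00]
    · have hk := key n (n + 1) h0
      rw [dist_self, mul_zero, zero_div] at hk
      have hk2 : d (n + 1) ≤ φ (max (d n) (max (d n * d (n + 1) / d n) 0)) := hk
      rw [mul_div_cancel_left₀ _ h0] at hk2
      rw [max_eq_left (hdnn (n + 1))] at hk2
      rcases le_total (d (n + 1)) (d n) with hle | hle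
      · rwa [max_eq_left hle] at hk2
      · rw [max_eq_right hle] at hk2
        have h2 : d (n + 1) = 0 := by
          by_contra hne
          have hpos2 : 0 < d (n + 1) := lt_of_le_of_ne (hdnn _) (Ne.symm hne)
          exact absurd (hk2.trans_lt (hφlt _ hpos2)) (lt_irrefl _)
        rw [h2]
        exact hφ0 _ (hdnn n)
  have h_dec : ∀ n, d (n + 1) ≤ d n := fun n => (h_d n).trans (hφle _ (hdnn n))
  have hanti : Antitone d := antitone_nat_of_succ_le h_dec
  have hbdd : BddBelow (Set.range d) := ⟨0, by rintro r ⟨n, rfl⟩; exact hdnn n⟩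
  have htend : Tendsto d atTop (𝓝 (⨅ i, d i)) := tendsto_atTop_ciInf hanti hbdd
  have hr0 : 0 ≤ ⨅ i, d i := le_ciInf hdnn
  have hzero : (⨅ i, d i) = 0 :=
    phi_limit_aux hφc hφlt hr0 (Eventually.of_forall hdnn) (Eventually.of_forall h_d)
      ((tendsto_add_atTop_iff_nat 1).2 htend) htend
  have hd0 : Tendsto d atTop (𝓝 0) := hzero ▸ htend
  rw [Metric.cauchySeq_iff']
  intro ε hε
  obtain ⟨δ₁, hδ₁pos, hδ₁⟩ : ∃ δ : ℝ, 0 < δ ∧ φ (ε + 3 * δ) + δ < ε := by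
    have hcont : ContinuousWithinAt (fun s : ℝ => φ (ε + 3 * s) + s) (Set.Ici 0) 0 := by
      have hmap : Set.MapsTo (fun s : ℝ => ε + 3 * s) (Set.Ici 0) (Set.Ici 0) := by
        intro s hs
        simp only [Set.mem_Ici] at *
        nlinarith
      have hf : ContinuousWithinAt (fun s : ℝ => ε + 3 * s) (Set.Ici 0) 0 :=
        (continuous_const.add (continuous_const.mul continuous_id)).continuousWithinAt
      have hg : ContinuousWithinAt φ (Set.Ici 0) ((fun s : ℝ => ε + 3 * s) 0) := by
        simp only [mul_zero, add_zero]
        exact hφc ε (Set.mem_Ici.2 hε.le)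
      exact (ContinuousWithinAt.comp (g := φ) (f := fun s : ℝ => ε + 3 * s) hg hf hmap).add
        continuousWithinAt_id
    have hlim : Tendsto (fun s : ℝ => φ (ε + 3 * s) + s) (𝓝[Set.Ici 0] 0) (𝓝 (φ ε)) := by
      have h := hcont.tendsto
      simp only [mul_zero, add_zero] at h
      exact h
    have hev : ∀ᶠ s in 𝓝[Set.Ici (0:ℝ)] 0, φ (ε + 3 * s) + s < ε :=
      hlim.eventually_lt_const (hφlt ε hε)
    have hev' : ∀ᶠ s in 𝓝[Set.Ioi (0:ℝ)] 0, φ (ε + 3 * s) + s < ε :=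
      hev.filter_mono (nhdsWithin_mono 0 Set.Ioi_subset_Ici_self)
    obtain ⟨δ, h1, h2⟩ := (hev'.and eventually_mem_nhdsWithin).exists
    exact ⟨δ, h2, h1⟩
  set δ := min δ₁ (ε / 8) with hδdef
  have hδpos : 0 < δ := lt_min hδ₁pos (by linarith)
  have hδ8 : δ ≤ ε / 8 := min_le_right _ _
  have hδ1le : δ ≤ δ₁ := min_le_left _ _
  have hδkey : φ (ε + 3 * δ) + δ < ε := by
    have h1 : φ (ε + 3 * δ) ≤ φ (ε + 3 * δ₁) :=
      hφm (Set.mem_Ici.2 (by nlinarith)) (Set.mem_Ici.2 (by nlinarith)) (by nlinarith)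
    linarith
  obtain ⟨N, hN'⟩ := eventually_atTop.mp (hd0.eventually_lt_const hδpos)
  have hN : ∀ n, N ≤ n → d n ≤ δ := fun n hn => (hN' n hn).le
  have main : ∀ m : ℕ, dist (y (N + m)) (y N) < ε := by
    intro m
    induction m with
    | zero => simpa using hε
    | succ m ih =>
      show dist (y (N + m + 1)) (y N) < ε
      by_cases hD : dist (y N) (y (N + m)) ≤ δ
      · have h1 : dist (y (N + m + 1)) (y N) ≤
            dist (y (N + m + 1)) (y (N + m)) + dist (y (N + m)) (y N) :=
          dist_triangle _ _ _
        have h2 : dist (y (N + m + 1)) (y (N + m)) = d (N + m) := dist_comm _ _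
        have h3 : d (N + m) ≤ δ := hN _ (Nat.le_add_right N m)
        have h4 : dist (y (N + m)) (y N) ≤ δ := by rw [dist_comm]; exact hD
        linarith
      · push_neg at hD
        have hDpos : 0 < dist (y N) (y (N + m)) := hδpos.trans hD
        have hk := key N (N + m) hDpos.ne'
        have hdN : d N ≤ δ := hN N le_rfl
        have hdm : d (N + m) ≤ δ := hN _ (Nat.le_add_right N m)
        have hihD : dist (y N) (y (N + m)) < ε := by rw [dist_comm]; exact ih
        have harg1 : dist (y N) (y (N + m)) ≤ ε + 3 * δ := by linarith
        have harg2 : dist (y N) (y (N + 1)) * dist (y (N + m)) (y (N + m + 1)) /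
            dist (y N) (y (N + m)) ≤ ε + 3 * δ := by
          rw [div_le_iff₀ hDpos]
          have e1 : dist (y N) (y (N + 1)) = d N := rfl
          have e2 : dist (y (N + m)) (y (N + m + 1)) = d (N + m) := rfl
          rw [e1, e2]
          nlinarith [hdnn N, hdnn (N + m), hδpos, hD, hε]
        have htri1 : dist (y N) (y (N + m + 1)) ≤ dist (y N) (y (N + m)) + δ := by
          have := dist_triangle (y N) (y (N + m)) (y (N + m + 1))
          have e2 : dist (y (N + m)) (y (N + m + 1)) = d (N + m) := rfl
          rw [e2] at this
          linarith
        have htri2 : dist (y (N + m)) (y (N + 1)) ≤ dist (y N) (y (N + m)) + δ := by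
          have := dist_triangle (y (N + m)) (y N) (y (N + 1))
          have e1 : dist (y N) (y (N + 1)) = d N := rfl
          rw [e1, dist_comm (y (N + m)) (y N)] at this
          linarith
        have harg3 : dist (y N) (y (N + m + 1)) * dist (y (N + m)) (y (N + 1)) /
            dist (y N) (y (N + m)) ≤ ε + 3 * δ := by
          rw [div_le_iff₀ hDpos]
          nlinarith [dist_nonneg (x := y N) (y := y (N + m + 1)),
            dist_nonneg (x := y (N + m)) (y := y (N + 1)),
            mul_le_mul htri1 htri2 dist_nonneg (by positivity :
              (0:ℝ) ≤ dist (y N) (y (N + m)) + δ), hihD, hD, hδpos]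
        have hmaxle : max (dist (y N) (y (N + m)))
            (max (dist (y N) (y (N + 1)) * dist (y (N + m)) (y (N + m + 1)) /
                dist (y N) (y (N + m)))
              (dist (y N) (y (N + m + 1)) * dist (y (N + m)) (y (N + 1)) /
                dist (y N) (y (N + m)))) ≤ ε + 3 * δ :=
          max_le harg1 (max_le harg2 harg3)
        have h0M : (0:ℝ) ≤ max (dist (y N) (y (N + m)))
            (max (dist (y N) (y (N + 1)) * dist (y (N + m)) (y (N + m + 1)) /
                dist (y N) (y (N + m)))
              (dist (y N) (y (N + m + 1)) * dist (y (N + m)) (y (N + 1)) /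
                dist (y N) (y (N + m)))) :=
          le_trans dist_nonneg (le_max_left _ _)
        have hφM := hφm (Set.mem_Ici.2 h0M) (Set.mem_Ici.2 (by positivity)) hmaxle
        have hfinal : dist (y (N + 1)) (y (N + m + 1)) ≤ φ (ε + 3 * δ) :=
          hk.trans hφM
        have htri : dist (y (N + m + 1)) (y N) ≤
            dist (y (N + m + 1)) (y (N + 1)) + dist (y (N + 1)) (y N) :=
          dist_triangle _ _ _
        have h5 : dist (y (N + 1)) (y N) ≤ δ := by
          rw [dist_comm]
          exact hN N le_rfl
        rw [dist_comm (y (N + m + 1)) (y (N + 1))] at htri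
        linarith
  refine ⟨N, fun n hn => ?_⟩
  obtain ⟨m, rfl⟩ := Nat.exists_eq_add_of_le hn
  exact main m

/-- A sequence of selfmaps `{Sₙ}` and `A`: if for each `j ≥ 1` the triple
`(S₁, Sⱼ, A)` satisfies the φ-contractive inequality, there is an `(S₁,A)`-orbit of
`x₀`, `X` is orbitally complete at `x₀`, the pair `(S₁,A)` is reciprocally continuous
and either compatible or compatible of type (A), then there is a unique `z` with
`Az = z` and `Sₙz = z` for all `n ≥ 1`. -/
theorem stmt_5 {X : Type*} [MetricSpace X] (Sseq : ℕ → X → X) (A : X → X) (φ : ℝ → ℝ)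
    (hφc : ContinuousOn φ (Set.Ici 0))
    (hφm : MonotoneOn φ (Set.Ici 0))
    (hφ0 : ∀ t : ℝ, 0 ≤ t → 0 ≤ φ t)
    (hφlt : ∀ t : ℝ, 0 < t → φ t < t)
    (hc1 : ∀ j : ℕ, 1 ≤ j → ∀ x y : X, A x ≠ A y →
      dist (Sseq 1 x) (Sseq j y) ≤ φ (max (dist (A x) (A y))
        (max (dist (A x) (Sseq 1 x) * dist (A y) (Sseq j y) / dist (A x) (A y))
             (dist (A x) (Sseq j y) * dist (A y) (Sseq 1 x) / dist (A x) (A y)))))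
    (hc2 : ∀ j : ℕ, 1 ≤ j → ∀ x y : X, dist (A x) (A y) = 0 →
      dist (Sseq 1 x) (Sseq j y) = 0)
    (x : ℕ → X)
    (horb : ∀ n : ℕ, A (x (n + 1)) = Sseq 1 (x n))
    -- X is orbitally complete at x₀
    (hcomp : ∀ u : ℕ → X, (∀ k : ℕ, ∃ n : ℕ, u k = A (x (n + 1))) → CauchySeq u →
      ∃ l : X, Tendsto u atTop (𝓝 l))
    -- the pair (S₁,A) is reciprocally continuous
    (hrc : ∀ (z : ℕ → X) (t : X),
      Tendsto (fun n => A (z n)) atTop (𝓝 t) →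
      Tendsto (fun n => Sseq 1 (z n)) atTop (𝓝 t) →
      Tendsto (fun n => A (Sseq 1 (z n))) atTop (𝓝 (A t)) ∧
      Tendsto (fun n => Sseq 1 (A (z n))) atTop (𝓝 (Sseq 1 t)))
    -- the pair (S₁,A) is either compatible or compatible of type (A)
    (hor : (∀ (z : ℕ → X) (t : X),
        Tendsto (fun n => A (z n)) atTop (𝓝 t) →
        Tendsto (fun n => Sseq 1 (z n)) atTop (𝓝 t) →
        Tendsto (fun n => dist (Sseq 1 (A (z n))) (A (Sseq 1 (z n)))) atTop (𝓝 0)) ∨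
      (∀ (z : ℕ → X) (t : X),
        Tendsto (fun n => A (z n)) atTop (𝓝 t) →
        Tendsto (fun n => Sseq 1 (z n)) atTop (𝓝 t) →
        Tendsto (fun n => dist (A (Sseq 1 (z n))) (Sseq 1 (Sseq 1 (z n)))) atTop (𝓝 0) ∧
        Tendsto (fun n => dist (Sseq 1 (A (z n))) (A (A (z n)))) atTop (𝓝 0))) :
    ∃! z : X, A z = z ∧ ∀ n : ℕ, 1 ≤ n → Sseq n z = z := by
  classical
  -- the contraction along the orbit
  have key : ∀ m n : ℕ, dist (A (x m)) (A (x n)) ≠ 0 →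
      dist (A (x (m + 1))) (A (x (n + 1))) ≤ φ (max (dist (A (x m)) (A (x n)))
        (max (dist (A (x m)) (A (x (m + 1))) * dist (A (x n)) (A (x (n + 1))) /
            dist (A (x m)) (A (x n)))
          (dist (A (x m)) (A (x (n + 1))) * dist (A (x n)) (A (x (m + 1))) /
            dist (A (x m)) (A (x n))))) := by
    intro m n h
    have hne : A (x m) ≠ A (x n) := fun he => h (by rw [he, dist_self])
    have hk := hc1 1 le_rfl (x m) (x n) hne
    rwa [← horb m, ← horb n] at hk
  have key0 : ∀ m n : ℕ, dist (A (x m)) (A (x n)) = 0 →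
      dist (A (x (m + 1))) (A (x (n + 1))) = 0 := by
    intro m n h
    have hk := hc2 1 le_rfl (x m) (x n) h
    rwa [← horb m, ← horb n] at hk
  have hCau : CauchySeq (fun n => A (x n)) :=
    orbit_cauchy φ hφc hφm hφ0 hφlt (fun n => A (x n)) key key0
  have hCau' : CauchySeq (fun k => A (x (k + 1))) :=
    hCau.comp_tendsto (tendsto_add_atTop_nat 1)
  obtain ⟨t, ht⟩ := hcomp (fun k => A (x (k + 1))) (fun k => ⟨k, rfl⟩) hCau'
  have hAx : Tendsto (fun n => A (x n)) atTop (𝓝 t) := (tendsto_add_atTop_iff_nat 1).mp ht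
  have hSx : Tendsto (fun n => Sseq 1 (x n)) atTop (𝓝 t) := by
    simp only [← horb]
    exact ht
  obtain ⟨hAS, hSA⟩ := hrc x t hAx hSx
  -- hAS : A ∘ S₁ ∘ x → A t ;  hSA : S₁ ∘ A ∘ x → S₁ t
  have hst : Sseq 1 t = A t := by
    rcases hor with hcompat | htypeA
    · have h1 := hcompat x t hAx hSx
      have h2 : Tendsto (fun n => dist (Sseq 1 (A (x n))) (A (Sseq 1 (x n)))) atTop
          (𝓝 (dist (Sseq 1 t) (A t))) := hSA.dist hAS
      exact dist_eq_zero.mp (tendsto_nhds_unique h2 h1)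
    · obtain ⟨h1, h2⟩ := htypeA x t hAx hSx
      have hSS : Tendsto (fun n => Sseq 1 (Sseq 1 (x n))) atTop (𝓝 (A t)) := by
        rw [tendsto_iff_dist_tendsto_zero]
        have ha : Tendsto (fun n => dist (Sseq 1 (Sseq 1 (x n))) (A (Sseq 1 (x n)))) atTop
            (𝓝 0) := by simpa [dist_comm] using h1
        have hb : Tendsto (fun n => dist (A (Sseq 1 (x n))) (A t)) atTop (𝓝 0) :=
          tendsto_iff_dist_tendsto_zero.mp hAS
        exact squeeze_zero (fun n => dist_nonneg)
          (fun n => dist_triangle _ (A (Sseq 1 (x n))) _) (by simpa using ha.add hb)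
      have hAA : Tendsto (fun n => A (A (x n))) atTop (𝓝 (Sseq 1 t)) := by
        rw [tendsto_iff_dist_tendsto_zero]
        have ha : Tendsto (fun n => dist (A (A (x n))) (Sseq 1 (A (x n)))) atTop (𝓝 0) := by
          simpa [dist_comm] using h2
        have hb : Tendsto (fun n => dist (Sseq 1 (A (x n))) (Sseq 1 t)) atTop (𝓝 0) :=
          tendsto_iff_dist_tendsto_zero.mp hSA
        exact squeeze_zero (fun n => dist_nonneg)
          (fun n => dist_triangle _ (Sseq 1 (A (x n))) _) (by simpa using ha.add hb)
      have hρ : dist (Sseq 1 t) (A t) = 0 := by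
        by_contra hne
        have hρpos : 0 < dist (Sseq 1 t) (A t) := lt_of_le_of_ne dist_nonneg (Ne.symm hne)
        have hD : Tendsto (fun n => dist (A (A (x n))) (A (Sseq 1 (x n)))) atTop
            (𝓝 (dist (Sseq 1 t) (A t))) := hAA.dist hAS
        have hevD : ∀ᶠ n in atTop, 0 < dist (A (A (x n))) (A (Sseq 1 (x n))) :=
          hD.eventually_const_lt hρpos
        have hab : ∀ᶠ n in atTop,
            dist (Sseq 1 (A (x n))) (Sseq 1 (Sseq 1 (x n))) ≤
            φ (max (dist (A (A (x n))) (A (Sseq 1 (x n))))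
              (max (dist (A (A (x n))) (Sseq 1 (A (x n))) *
                  dist (A (Sseq 1 (x n))) (Sseq 1 (Sseq 1 (x n))) /
                  dist (A (A (x n))) (A (Sseq 1 (x n))))
                (dist (A (A (x n))) (Sseq 1 (Sseq 1 (x n))) *
                  dist (A (Sseq 1 (x n))) (Sseq 1 (A (x n))) /
                  dist (A (A (x n))) (A (Sseq 1 (x n)))))) := by
          filter_upwards [hevD] with n hn
          exact hc1 1 le_rfl (A (x n)) (Sseq 1 (x n))
            (fun he => hn.ne' (by rw [he, dist_self]))
        have l2 : Tendsto (fun n => dist (A (A (x n))) (Sseq 1 (A (x n)))) atTop (𝓝 0) := by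
          simpa using hAA.dist hSA
        have l3 : Tendsto (fun n => dist (A (Sseq 1 (x n))) (Sseq 1 (Sseq 1 (x n)))) atTop
            (𝓝 0) := by simpa using hAS.dist hSS
        have l4 : Tendsto (fun n => dist (A (A (x n))) (Sseq 1 (Sseq 1 (x n)))) atTop
            (𝓝 (dist (Sseq 1 t) (A t))) := hAA.dist hSS
        have l5 : Tendsto (fun n => dist (A (Sseq 1 (x n))) (Sseq 1 (A (x n)))) atTop
            (𝓝 (dist (Sseq 1 t) (A t))) := by
          have := hAS.dist hSA
          simpa [dist_comm] using this
        have hm2 := (l2.mul l3).div hD hρpos.ne'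
        have hm3 := (l4.mul l5).div hD hρpos.ne'
        have hMlim := hD.max (hm2.max hm3)
        rw [max_simp_aux hρpos] at hMlim
        have hlhs : Tendsto (fun n => dist (Sseq 1 (A (x n))) (Sseq 1 (Sseq 1 (x n)))) atTop
            (𝓝 (dist (Sseq 1 t) (A t))) := hSA.dist hSS
        have hM0 : ∀ᶠ n in atTop, (0:ℝ) ≤ max (dist (A (A (x n))) (A (Sseq 1 (x n))))
              (max (dist (A (A (x n))) (Sseq 1 (A (x n))) *
                  dist (A (Sseq 1 (x n))) (Sseq 1 (Sseq 1 (x n))) /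
                  dist (A (A (x n))) (A (Sseq 1 (x n))))
                (dist (A (A (x n))) (Sseq 1 (Sseq 1 (x n))) *
                  dist (A (Sseq 1 (x n))) (Sseq 1 (A (x n))) /
                  dist (A (A (x n))) (A (Sseq 1 (x n))))) :=
          Eventually.of_forall (fun n => le_trans dist_nonneg (le_max_left _ _))
        have := phi_limit_aux hφc hφlt hρpos.le hM0 hab hlhs hMlim
        exact hne this
      exact dist_eq_zero.mp hρ
  -- w := A t satisfies A w = S₁ w
  have hASw : A (A t) = Sseq 1 (A t) := by
    have hAt : Tendsto (fun _ : ℕ => A t) atTop (𝓝 (A t)) := tendsto_const_nhds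
    have hSt : Tendsto (fun _ : ℕ => Sseq 1 t) atTop (𝓝 (A t)) := by
      rw [hst]; exact tendsto_const_nhds
    rcases hor with hcompat | htypeA
    · have h1 := hcompat (fun _ => t) (A t) hAt hSt
      have h2 := tendsto_nhds_unique (tendsto_const_nhds
        (x := dist (Sseq 1 (A t)) (A (Sseq 1 t))) (f := atTop)) h1
      rw [hst] at h2
      exact (dist_eq_zero.mp h2).symm
    · have h2 := (htypeA (fun _ => t) (A t) hAt hSt).2
      have h3 := tendsto_nhds_unique (tendsto_const_nhds
        (x := dist (Sseq 1 (A t)) (A (A t))) (f := atTop)) h2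
      exact (dist_eq_zero.mp h3).symm
  -- A (A t) = A t
  have hAwfix : A (A t) = A t := by
    by_contra hne
    have hne' : A t ≠ A (A t) := fun he => hne he.symm
    have hρpos : 0 < dist (A t) (A (A t)) := dist_pos.mpr hne'
    have hk := hc1 1 le_rfl t (A t) hne'
    rw [hst, ← hASw, dist_self, dist_self, dist_comm (A (A t)) (A t)] at hk
    rw [max_simp_aux hρpos] at hk
    exact absurd (hk.trans_lt (hφlt _ hρpos)) (lt_irrefl _)
  have hSw : Sseq 1 (A t) = A t := by rw [← hASw, hAwfix]
  refine ⟨A t, ⟨hAwfix, fun j hj => ?_⟩, ?_⟩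
  · have h1 := hc2 j hj (A t) (A t) (by rw [dist_self])
    have h2 : Sseq j (A t) = Sseq 1 (A t) := (dist_eq_zero.mp h1).symm
    rw [h2, hSw]
  · rintro z' ⟨hAz', hSz'⟩
    by_contra hne
    have hρpos : 0 < dist z' (A t) := dist_pos.mpr hne
    have hne' : A z' ≠ A (A t) := by rw [hAz', hAwfix]; exact hne
    have hk := hc1 1 le_rfl z' (A t) hne'
    rw [hSz' 1 le_rfl, hSw, hAz', hAwfix, dist_self, dist_self,
      dist_comm (A t) z'] at hk
    rw [max_simp_aux hρpos] at hk
    exact absurd (hk.trans_lt (hφlt _ hρpos)) (lt_irrefl _)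
end

section
/- Let (X,d) be a metric space and S, T, A : X → X continuous selfmaps. Assume there exists λ ∈ [0,1) such that for all x, y ∈ X: whenever Ax ≠ Ay, d(Sx,Ty) ≤ λ·max{d(Ax,Ay), d(Ax,Sx)·d(Ay,Ty)/d(Ax,Ay), d(Ax,Ty)·d(Ay,Sx)/d(Ax,Ay)}, and whenever d(Ax,Ay) = 0, d(Sx,Ty) = 0. Suppose there exists an (S,T,A)-orbit {xₙ} of some x₀ ∈ X. Then the sequence {Axₙ} is a Cauchy sequence. Further, if X is (S,T,A)-orbitally complete at x₀ and the pairs (A,S) and (A,T) are weakly commuting, then S, T and A have a unique common fixed point. -/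
open Filter Topology

/-- For continuous selfmaps `S`, `T`, `A` satisfying the λ-contractive
inequality with rational expressions and admitting an `(S,T,A)`-orbit, the sequence
`{A xₙ}` is Cauchy; further, if `X` is orbitally complete at `x₀` and the pairs
`(A,S)`, `(A,T)` are weakly commuting, then `S`, `T`, `A` have a unique common fixed
point. -/
theorem stmt_6 {X : Type*} [MetricSpace X] (S T A : X → X)
    (hScont : Continuous S) (hTcont : Continuous T) (hAcont : Continuous A)
    (lam : ℝ) (hlam0 : 0 ≤ lam) (hlam1 : lam < 1)
    (hc1 : ∀ x y : X, A x ≠ A y →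
      dist (S x) (T y) ≤ lam * max (dist (A x) (A y))
        (max (dist (A x) (S x) * dist (A y) (T y) / dist (A x) (A y))
             (dist (A x) (T y) * dist (A y) (S x) / dist (A x) (A y))))
    (hc2 : ∀ x y : X, dist (A x) (A y) = 0 → dist (S x) (T y) = 0)
    (x : ℕ → X)
    (horb : ∀ n : ℕ, (Odd (n + 1) → A (x (n + 1)) = S (x n)) ∧
                     (Even (n + 1) → A (x (n + 1)) = T (x n))) :
    CauchySeq (fun n : ℕ => A (x (n + 1))) ∧
    ((∀ u : ℕ → X, (∀ k : ℕ, ∃ n : ℕ, u k = A (x (n + 1))) → CauchySeq u →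
        ∃ l : X, Tendsto u atTop (𝓝 l)) →
      (∀ y : X, dist (S (A y)) (A (S y)) ≤ dist (A y) (S y)) →
      (∀ y : X, dist (T (A y)) (A (T y)) ≤ dist (A y) (T y)) →
      ∃! u : X, S u = u ∧ T u = u ∧ A u = u) := by
  set y : ℕ → X := fun n => A (x (n + 1)) with hy
  have hyS : ∀ n : ℕ, Even n → y n = S (x n) := by
    intro n hn
    exact (horb n).1 hn.add_one
  have hyT : ∀ n : ℕ, Odd n → y n = T (x n) := by
    intro n hn
    exact (horb n).2 hn.add_one
  -- the main contraction step
  have key : ∀ n : ℕ, dist (y (n+1)) (y (n+2)) ≤ lam * dist (y n) (y (n+1)) := by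
    intro n
    have hA1 : A (x (n+1)) = y n := rfl
    have hA2 : A (x (n+2)) = y (n+1) := rfl
    rcases Nat.even_or_odd (n+1) with he | ho
    · -- n+1 even
      have h1 : y (n+1) = S (x (n+1)) := hyS _ he
      have h2 : y (n+2) = T (x (n+2)) := hyT _ he.add_one
      by_cases hne : A (x (n+1)) = A (x (n+2))
      · have h0 : dist (A (x (n+1))) (A (x (n+2))) = 0 := by rw [hne, dist_self]
        have := hc2 (x (n+1)) (x (n+2)) h0
        rw [h1, h2]
        rw [this]
        positivity
      · have hc := hc1 (x (n+1)) (x (n+2)) hne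
        rw [hA1, hA2, ← h1, ← h2] at hc
        have hD : dist (y n) (y (n+1)) ≠ 0 := by
          rw [hA1, hA2] at hne
          exact fun h => hne (dist_eq_zero.mp h)
        set D := dist (y n) (y (n+1)) with hDdef
        set d := dist (y (n+1)) (y (n+2)) with hddef
        have e1 : D * d / D = d := mul_div_cancel_left₀ d hD
        have e2 : dist (y n) (y (n+2)) * dist (y (n+1)) (y (n+1)) / D = 0 := by
          rw [dist_self]; ring
        rw [e1, e2] at hc
        -- hc : d ≤ lam * max D (max d 0)
        have hd0 : (0:ℝ) ≤ d := dist_nonneg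
        have hD0 : (0:ℝ) ≤ D := dist_nonneg
        rw [max_eq_left hd0] at hc
        rcases le_total d D with h' | h'
        · rw [max_eq_left h'] at hc; exact hc
        · rw [max_eq_right h'] at hc
          have : d ≤ 0 := by nlinarith
          have hd : d = 0 := le_antisymm this hd0
          rw [hd]; positivity
    · -- n+1 odd
      have h1 : y (n+1) = T (x (n+1)) := hyT _ ho
      have h2 : y (n+2) = S (x (n+2)) := hyS _ ho.add_one
      by_cases hne : A (x (n+2)) = A (x (n+1))
      · have h0 : dist (A (x (n+2))) (A (x (n+1))) = 0 := by rw [hne, dist_self]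
        have := hc2 (x (n+2)) (x (n+1)) h0
        rw [h1, h2, dist_comm]
        rw [this]
        positivity
      · have hc := hc1 (x (n+2)) (x (n+1)) hne
        rw [hA1, hA2, ← h1, ← h2] at hc
        have hD : dist (y n) (y (n+1)) ≠ 0 := by
          rw [hA1, hA2] at hne
          exact fun h => hne ((dist_eq_zero.mp (by rw [dist_comm]; exact h)))
        rw [dist_comm (y (n+2)) (y (n+1)), dist_comm (y (n+1)) (y n)] at hc
        have e1 : dist (y (n+1)) (y (n+2)) * dist (y n) (y (n+1)) / dist (y n) (y (n+1)) =
            dist (y (n+1)) (y (n+2)) := mul_div_cancel_right₀ _ hD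
        have e2 : dist (y (n+1)) (y (n+1)) * dist (y n) (y (n+2)) / dist (y n) (y (n+1)) = 0 := by
          rw [dist_self]; ring
        rw [e1, e2] at hc
        set D := dist (y n) (y (n+1)) with hDdef
        set d := dist (y (n+1)) (y (n+2)) with hddef
        have hd0 : (0:ℝ) ≤ d := dist_nonneg
        have hD0 : (0:ℝ) ≤ D := dist_nonneg
        rw [max_eq_left hd0] at hc
        rcases le_total d D with h' | h'
        · rw [max_eq_left h'] at hc; exact hc
        · rw [max_eq_right h'] at hc
          have : d ≤ 0 := by nlinarith
          have hd : d = 0 := le_antisymm this hd0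
          rw [hd]; positivity
  have hgeo : ∀ n : ℕ, dist (y n) (y (n+1)) ≤ (dist (y 0) (y 1) + 1) * lam ^ n := by
    intro n
    induction n with
    | zero => simp
    | succ k ih =>
      calc dist (y (k+1)) (y (k+1+1)) ≤ lam * dist (y k) (y (k+1)) := key k
        _ ≤ lam * ((dist (y 0) (y 1) + 1) * lam ^ k) :=
            mul_le_mul_of_nonneg_left ih hlam0
        _ = (dist (y 0) (y 1) + 1) * lam ^ (k+1) := by ring
  have hcauchy : CauchySeq y := cauchySeq_of_le_geometric lam _ hlam1 hgeo
  refine ⟨hcauchy, ?_⟩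
  intro hcomp hwS hwT
  obtain ⟨l, hl⟩ := hcomp y (fun k => ⟨k, rfl⟩) hcauchy
  -- subsequence limits
  have m2k : Tendsto (fun k : ℕ => 2*k) atTop atTop :=
    tendsto_atTop_mono (fun k => by simp only [id_eq]; omega) tendsto_id
  have m2k1 : Tendsto (fun k : ℕ => 2*k+1) atTop atTop :=
    tendsto_atTop_mono (fun k => by simp only [id_eq]; omega) tendsto_id
  have m2k2 : Tendsto (fun k : ℕ => 2*k+2) atTop atTop :=
    tendsto_atTop_mono (fun k => by simp only [id_eq]; omega) tendsto_id
  have t2k : Tendsto (fun k : ℕ => y (2*k)) atTop (𝓝 l) := hl.comp m2k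
  have t2k1 : Tendsto (fun k : ℕ => y (2*k+1)) atTop (𝓝 l) := hl.comp m2k1
  have t2k2 : Tendsto (fun k : ℕ => y (2*k+2)) atTop (𝓝 l) := hl.comp m2k2
  -- S l = A l
  have tS : Tendsto (fun k : ℕ => S (x (2*k+2))) atTop (𝓝 l) :=
    t2k2.congr (fun k => hyS (2*k+2) ⟨k+1, by omega⟩)
  have tAe : Tendsto (fun k : ℕ => A (x (2*k+2))) atTop (𝓝 l) := by
    have : (fun k : ℕ => A (x (2*k+2))) = fun k : ℕ => y (2*k+1) := by
      funext k; show A (x (2*k+2)) = A (x (2*k+1+1)); norm_num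
    rw [this]; exact t2k1
  have hSlAl : S l = A l := by
    have h1 : Tendsto (fun k : ℕ => S (A (x (2*k+2)))) atTop (𝓝 (S l)) :=
      (hScont.tendsto l).comp tAe
    have h2 : Tendsto (fun k : ℕ => A (S (x (2*k+2)))) atTop (𝓝 (A l)) :=
      (hAcont.tendsto l).comp tS
    have h3 : Tendsto (fun k : ℕ => dist (S (A (x (2*k+2)))) (A (S (x (2*k+2)))))
        atTop (𝓝 (dist (S l) (A l))) := h1.dist h2
    have h4 : Tendsto (fun k : ℕ => dist (A (x (2*k+2))) (S (x (2*k+2)))) atTop (𝓝 0) := by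
      simpa using tAe.dist tS
    have h5 : Tendsto (fun k : ℕ => dist (S (A (x (2*k+2)))) (A (S (x (2*k+2)))))
        atTop (𝓝 0) :=
      squeeze_zero (fun k => dist_nonneg) (fun k => hwS (x (2*k+2))) h4
    exact dist_eq_zero.mp (tendsto_nhds_unique h3 h5)
  -- T l = A l
  have tT : Tendsto (fun k : ℕ => T (x (2*k+1))) atTop (𝓝 l) :=
    t2k1.congr (fun k => hyT (2*k+1) ⟨k, by omega⟩)
  have tAo : Tendsto (fun k : ℕ => A (x (2*k+1))) atTop (𝓝 l) := t2k
  have hTlAl : T l = A l := by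
    have h1 : Tendsto (fun k : ℕ => T (A (x (2*k+1)))) atTop (𝓝 (T l)) :=
      (hTcont.tendsto l).comp tAo
    have h2 : Tendsto (fun k : ℕ => A (T (x (2*k+1)))) atTop (𝓝 (A l)) :=
      (hAcont.tendsto l).comp tT
    have h3 : Tendsto (fun k : ℕ => dist (T (A (x (2*k+1)))) (A (T (x (2*k+1)))))
        atTop (𝓝 (dist (T l) (A l))) := h1.dist h2
    have h4 : Tendsto (fun k : ℕ => dist (A (x (2*k+1))) (T (x (2*k+1)))) atTop (𝓝 0) := by
      simpa using tAo.dist tT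
    have h5 : Tendsto (fun k : ℕ => dist (T (A (x (2*k+1)))) (A (T (x (2*k+1)))))
        atTop (𝓝 0) :=
      squeeze_zero (fun k => dist_nonneg) (fun k => hwT (x (2*k+1))) h4
    exact dist_eq_zero.mp (tendsto_nhds_unique h3 h5)
  -- S (A l) = A (A l) and T (A l) = A (A l) via weak commutativity
  have hSw : S (A l) = A (A l) := by
    have h := hwS l
    rw [hSlAl, dist_self] at h
    exact dist_eq_zero.mp (le_antisymm h dist_nonneg)
  have hTw : T (A l) = A (A l) := by
    have h := hwT l
    rw [hTlAl, dist_self] at h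
    exact dist_eq_zero.mp (le_antisymm h dist_nonneg)
  -- A (A l) = A l
  have hAw : A (A l) = A l := by
    by_contra hne
    have hne' : A l ≠ A (A l) := fun h => hne h.symm
    have hc := hc1 l (A l) hne'
    rw [hSlAl, hTw] at hc
    simp only [dist_self, zero_mul, mul_zero, zero_div] at hc
    have hD : dist (A l) (A (A l)) ≠ 0 := fun h => hne' (dist_eq_zero.mp h)
    have e2 : dist (A l) (A (A l)) * dist (A (A l)) (A l) / dist (A l) (A (A l)) =
        dist (A l) (A (A l)) := by
      rw [dist_comm (A (A l)) (A l)]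
      exact mul_div_cancel_left₀ _ hD
    rw [e2] at hc
    have hDpos : 0 < dist (A l) (A (A l)) :=
      lt_of_le_of_ne dist_nonneg (Ne.symm hD)
    have hmax : max (dist (A l) (A (A l))) (max 0 (dist (A l) (A (A l)))) =
        dist (A l) (A (A l)) := by
      rw [max_eq_right (le_of_lt hDpos), max_self]
    rw [hmax] at hc
    nlinarith
  refine ⟨A l, ⟨by rw [hSw, hAw], by rw [hTw, hAw], hAw⟩, ?_⟩
  -- uniqueness
  rintro v ⟨hSv, hTv, hAv⟩
  by_contra hne
  have hne' : A v ≠ A (A l) := by rw [hAv, hAw]; exact fun h => hne h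
  have hc := hc1 v (A l) hne'
  rw [hAv, hAw, hSv, hTw] at hc
  rw [hAw] at hc
  simp only [dist_self, zero_mul, mul_zero, zero_div] at hc
  have hD : dist v (A l) ≠ 0 := fun h => hne (dist_eq_zero.mp h)
  have e2 : dist v (A l) * dist (A l) v / dist v (A l) = dist v (A l) := by
    rw [dist_comm (A l) v]
    exact mul_div_cancel_left₀ _ hD
  rw [e2] at hc
  have hDpos : 0 < dist v (A l) := lt_of_le_of_ne dist_nonneg (Ne.symm hD)
  have hmax : max (dist v (A l)) (max 0 (dist v (A l))) = dist v (A l) := by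
    rw [max_eq_right (le_of_lt hDpos), max_self]
  rw [hmax] at hc
  nlinarith
end

section
/- Let (X,d) be a metric space, {Sₙ}ₙ₌₁^∞ a sequence of selfmaps of X, A : X → X continuous, and for each n let uₙ ∈ X satisfy Sₙuₙ = uₙ and Auₙ = uₙ. Suppose there exists φ ∈ Φ such that for each n and all x, y ∈ X: whenever Ax ≠ Ay, d(Sₙx, Sₙy) ≤ φ(max{d(Ax,Ay), d(Ax,Sₙx)·d(Ay,Sₙy)/d(Ax,Ay), d(Ax,Sₙy)·d(Ay,Sₙx)/d(Ax,Ay)}), and whenever d(Ax,Ay) = 0, d(Sₙx, Sₙy) = 0. Suppose {Sₙ} converges pointwise to a selfmap S of X. If uₙ → u as n → ∞, then Au = u and Su = u. -/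
open Filter Topology

/-! Since `A` is continuous and fixes every `uₙ`, it fixes the limit `u`. Applying the
contractive inequality to the pair `(u, uₙ)` collapses the maximum to
`max (d(u,uₙ)) (d(uₙ,Sₙu))`, and `φ t < t` then forces `d(Sₙu, uₙ) ≤ d(u, uₙ)`; letting
`n → ∞` gives `d(Su, u) ≤ 0`. -/

theorem dist_apply_le_of_isFixedPt {X : Type*} [MetricSpace X] {T A : X → X} {φ : ℝ → ℝ}
    (hφ : ∀ t : ℝ, 0 < t → φ t < t)
    (hT : ∀ x y : X, A x ≠ A y →
      dist (T x) (T y) ≤ φ (max (dist (A x) (A y))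
        (max (dist (A x) (T x) * dist (A y) (T y) / dist (A x) (A y))
             (dist (A x) (T y) * dist (A y) (T x) / dist (A x) (A y)))))
    {v w : X} (hTv : T v = v) (hAv : A v = v) (hAw : A w = w) :
    dist (T w) v ≤ dist w v := by
  rcases eq_or_ne w v with rfl | hwv
  · rw [hTv]
  have hpos : 0 < dist w v := dist_pos.2 hwv
  have h := hT w v (by rwa [hAw, hAv])
  rw [hAw, hAv, hTv, dist_self, mul_zero, zero_div, mul_div_cancel_left₀ _ hpos.ne',
    max_eq_right dist_nonneg, dist_comm v] at h
  have hlt : dist (T w) v < max (dist w v) (dist (T w) v) :=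
    h.trans_lt (hφ _ (lt_max_of_lt_left hpos))
  exact ((lt_max_iff.1 hlt).resolve_right (lt_irrefl _)).le

theorem stmt_7_general {X : Type*} [MetricSpace X] (Sseq : ℕ → X → X) (S A : X → X)
    (hAcont : Continuous A)
    (u : ℕ → X)
    (hfixS : ∀ n : ℕ, Sseq n (u n) = u n)
    (hfixA : ∀ n : ℕ, A (u n) = u n)
    (φ : ℝ → ℝ)
    (hφlt : ∀ t : ℝ, 0 < t → φ t < t)
    (hc1 : ∀ n : ℕ, ∀ x y : X, A x ≠ A y →
      dist (Sseq n x) (Sseq n y) ≤ φ (max (dist (A x) (A y))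
        (max (dist (A x) (Sseq n x) * dist (A y) (Sseq n y) / dist (A x) (A y))
             (dist (A x) (Sseq n y) * dist (A y) (Sseq n x) / dist (A x) (A y)))))
    (hptwise : ∀ y : X, Tendsto (fun n => Sseq n y) atTop (𝓝 (S y)))
    (w : X) (hconv : Tendsto u atTop (𝓝 w)) :
    A w = w ∧ S w = w := by
  have hAw : A w = w :=
    (isClosed_fixedPoints hAcont).mem_of_tendsto hconv (Eventually.of_forall hfixA)
  have hdist : Tendsto (fun n => dist w (u n)) atTop (𝓝 0) := by
    simpa using (tendsto_const_nhds (x := w)).dist hconv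
  refine ⟨hAw, dist_le_zero.1 <| le_of_tendsto_of_tendsto' ((hptwise w).dist hconv) hdist
    fun n => ?_⟩
  exact dist_apply_le_of_isFixedPt hφlt (hc1 n) (hfixS n) (hfixA n) hAw

/-- If each `Sₙ` together with continuous `A` satisfies the φ-contractive
inequality, `uₙ` is a common fixed point of `Sₙ` and `A`, `{Sₙ}` converges pointwise to
`S`, and `uₙ → u`, then `Au = u` and `Su = u`. -/
theorem stmt_7 {X : Type*} [MetricSpace X] (Sseq : ℕ → X → X) (S A : X → X)
    (hAcont : Continuous A)
    (u : ℕ → X)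
    (hfixS : ∀ n : ℕ, Sseq n (u n) = u n)
    (hfixA : ∀ n : ℕ, A (u n) = u n)
    (φ : ℝ → ℝ)
    (hφc : ContinuousOn φ (Set.Ici 0))
    (hφm : MonotoneOn φ (Set.Ici 0))
    (hφ0 : ∀ t : ℝ, 0 ≤ t → 0 ≤ φ t)
    (hφlt : ∀ t : ℝ, 0 < t → φ t < t)
    (hc1 : ∀ n : ℕ, ∀ x y : X, A x ≠ A y →
      dist (Sseq n x) (Sseq n y) ≤ φ (max (dist (A x) (A y))
        (max (dist (A x) (Sseq n x) * dist (A y) (Sseq n y) / dist (A x) (A y))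
             (dist (A x) (Sseq n y) * dist (A y) (Sseq n x) / dist (A x) (A y)))))
    (hc2 : ∀ n : ℕ, ∀ x y : X, dist (A x) (A y) = 0 → dist (Sseq n x) (Sseq n y) = 0)
    (hptwise : ∀ y : X, Tendsto (fun n => Sseq n y) atTop (𝓝 (S y)))
    (w : X) (hconv : Tendsto u atTop (𝓝 w)) :
    A w = w ∧ S w = w :=
  stmt_7_general Sseq S A hAcont u hfixS hfixA φ hφlt hc1 hptwise w hconv
end

section
/- Let S and T be two selfmaps of a complete metric space (X,d) satisfying: (i) there exist α, β ∈ [0,1) with α + β < 1 such that d(Sx,Ty) ≤ α·(d(x,Sx)·d(y,Ty))/d(x,y) + β·d(x,y) for all x, y ∈ X with x ≠ y; (ii) the composition S∘T is continuous on X; (iii) there exists x₀ ∈ X such that the sequence {xₙ} defined by xₙ = Sxₙ₋₁ when n is odd and xₙ = Txₙ₋₁ when n is even satisfies xₙ ≠ xₙ₊₁ for all n. Then S and T have a unique common fixed point, i.e. there is a unique u ∈ X with Su = u and Tu = u. -/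
open Filter Topology

/-- Jaggi: Let `S`, `T` be selfmaps of a complete metric space with
`d(Sx,Ty) ≤ α·d(x,Sx)·d(y,Ty)/d(x,y) + β·d(x,y)` for `x ≠ y` (with `α, β ∈ [0,1)`,
`α + β < 1`), `S ∘ T` continuous, and an alternating iteration sequence from some `x₀`
whose consecutive terms are distinct. Then `S` and `T` have a unique common fixed
point. -/
theorem stmt_11 {X : Type*} [MetricSpace X] [CompleteSpace X] (S T : X → X)
    (α β : ℝ) (hα0 : 0 ≤ α) (hα1 : α < 1) (hβ0 : 0 ≤ β) (hβ1 : β < 1)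
    (hαβ : α + β < 1)
    (hc : ∀ x y : X, x ≠ y →
      dist (S x) (T y) ≤ α * (dist x (S x) * dist y (T y)) / dist x y + β * dist x y)
    (hST : Continuous (S ∘ T))
    (x : ℕ → X)
    (horb : ∀ n : ℕ, (Odd (n + 1) → x (n + 1) = S (x n)) ∧
                     (Even (n + 1) → x (n + 1) = T (x n)))
    (hne : ∀ n : ℕ, x n ≠ x (n + 1)) :
    ∃! u : X, S u = u ∧ T u = u := by
  have hα1' : 0 < 1 - α := by linarith
  set k : ℝ := β / (1 - α) with hkdef
  have hk0 : 0 ≤ k := div_nonneg hβ0 hα1'.le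
  have hk1 : k < 1 := (div_lt_one hα1').mpr (by linarith)
  -- step contraction
  have step : ∀ n, dist (x (n+1)) (x (n+2)) ≤ k * dist (x n) (x (n+1)) := by
    intro n
    have hpos : 0 < dist (x n) (x (n+1)) := dist_pos.mpr (hne n)
    have key : dist (x (n+1)) (x (n+2)) ≤
        α * dist (x (n+1)) (x (n+2)) + β * dist (x n) (x (n+1)) := by
      rcases Nat.even_or_odd (n+1) with he | ho
      · have h1 : x (n+1) = T (x n) := (horb n).2 he
        have h2 : x (n+2) = S (x (n+1)) := (horb (n+1)).1 he.add_one
        have hthis := hc (x (n+1)) (x n) (hne n).symm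
        rw [← h2, ← h1] at hthis
        have hpos' : 0 < dist (x (n+1)) (x n) := by rw [dist_comm]; exact hpos
        calc dist (x (n+1)) (x (n+2)) = dist (x (n+2)) (x (n+1)) := dist_comm _ _
          _ ≤ α * (dist (x (n+1)) (x (n+2)) * dist (x n) (x (n+1))) / dist (x (n+1)) (x n)
              + β * dist (x (n+1)) (x n) := hthis
          _ = α * dist (x (n+1)) (x (n+2)) + β * dist (x n) (x (n+1)) := by
              rw [dist_comm (x (n+1)) (x n)]
              field_simp
      · have h1 : x (n+1) = S (x n) := (horb n).1 ho
        have h2 : x (n+2) = T (x (n+1)) := (horb (n+1)).2 ho.add_one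
        have hthis := hc (x n) (x (n+1)) (hne n)
        rw [← h1, ← h2] at hthis
        calc dist (x (n+1)) (x (n+2))
            ≤ α * (dist (x n) (x (n+1)) * dist (x (n+1)) (x (n+2))) / dist (x n) (x (n+1))
              + β * dist (x n) (x (n+1)) := hthis
          _ = α * dist (x (n+1)) (x (n+2)) + β * dist (x n) (x (n+1)) := by
              field_simp
    rw [hkdef, div_mul_eq_mul_div, le_div_iff₀ hα1']
    nlinarith [key]
  -- geometric estimate
  have geo : ∀ n, dist (x n) (x (n+1)) ≤ dist (x 0) (x 1) * k ^ n := by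
    intro n
    induction n with
    | zero => simp
    | succ m ih =>
        calc dist (x (m+1)) (x (m+2)) ≤ k * dist (x m) (x (m+1)) := step m
          _ ≤ k * (dist (x 0) (x 1) * k ^ m) := by
              exact mul_le_mul_of_nonneg_left ih hk0
          _ = dist (x 0) (x 1) * k ^ (m+1) := by ring
  have hcauchy : CauchySeq x := cauchySeq_of_le_geometric k (dist (x 0) (x 1)) hk1 geo
  obtain ⟨u, hu⟩ := cauchySeq_tendsto_of_complete hcauchy
  -- subsequence along odd indices
  have hodd : Tendsto (fun m => x (2*m+1)) atTop (𝓝 u) :=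
    hu.comp (tendsto_atTop_atTop.mpr fun b => ⟨b, fun a ha => by omega⟩)
  have hodd3 : Tendsto (fun m => x (2*m+3)) atTop (𝓝 u) :=
    hu.comp (tendsto_atTop_atTop.mpr fun b => ⟨b, fun a ha => by omega⟩)
  have hrec : ∀ m, x (2*m+3) = (S ∘ T) (x (2*m+1)) := by
    intro m
    have h1 : x (2*m+2) = T (x (2*m+1)) := (horb (2*m+1)).2 ⟨m+1, by ring⟩
    have h2 : x (2*m+3) = S (x (2*m+2)) := (horb (2*m+2)).1 ⟨m+1, by ring⟩
    simp [h2, h1, Function.comp]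
  have hSTu : S (T u) = u := by
    have h1 : Tendsto (fun m => (S ∘ T) (x (2*m+1))) atTop (𝓝 ((S ∘ T) u)) :=
      (hST.tendsto u).comp hodd
    have heq : (fun m => (S ∘ T) (x (2*m+1))) = fun m => x (2*m+3) :=
      funext fun m => (hrec m).symm
    have h2 : Tendsto (fun m => (S ∘ T) (x (2*m+1))) atTop (𝓝 u) := by
      rw [heq]; exact hodd3
    exact tendsto_nhds_unique h1 h2
  -- T u = u
  have hTu : T u = u := by
    by_contra hTu
    have hpos : 0 < dist u (T u) := by
      rw [dist_comm]; exact dist_pos.mpr hTu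
    have hthis := hc (T u) u hTu
    rw [hSTu] at hthis
    rw [dist_comm (T u) u] at hthis
    have hd : dist u (T u) ≤ (α + β) * dist u (T u) := by
      calc dist u (T u)
          ≤ α * (dist u (T u) * dist u (T u)) / dist u (T u) + β * dist u (T u) := hthis
        _ = (α + β) * dist u (T u) := by
            field_simp
    nlinarith
  have hSu : S u = u := by rw [hTu] at hSTu; exact hSTu
  refine ⟨u, ⟨hSu, hTu⟩, ?_⟩
  rintro w ⟨hSw, hTw⟩
  by_contra hwu
  have hpos : 0 < dist w u := dist_pos.mpr hwu
  have hthis := hc w u hwu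
  rw [hSw, hTu] at hthis
  simp at hthis
  nlinarith
end

section
/- Let A, S, T be continuous selfmaps of a metric space (X,d) and suppose there exist nonnegative reals α, β, γ with α + β < 1 and α + γ < 1 such that for all x, y ∈ X: whenever Ax ≠ Ay, d(Sx,Ty) ≤ α·d(Ax,Ay) + β·(d(Ax,Sx)·d(Ay,Ty))/d(Ax,Ay) + γ·(d(Ax,Ty)·d(Ay,Sx))/d(Ax,Ay), and whenever d(Ax,Ay) = 0, d(Sx,Ty) = 0. Suppose there exists an (S,T,A)-orbit {xₙ} of some x₀ ∈ X. Then the sequence {Axₙ} is a Cauchy sequence. -/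
open Filter Topology

/-- For continuous selfmaps `A`, `S`, `T` satisfying the (α,β,γ)-rational
contractive condition and admitting an `(S,T,A)`-orbit of some `x₀`, the sequence
`{A xₙ}` is Cauchy. -/
theorem stmt_12 {X : Type*} [MetricSpace X] (S T A : X → X)
    (hScont : Continuous S) (hTcont : Continuous T) (hAcont : Continuous A)
    (α β γ : ℝ) (hα : 0 ≤ α) (hβ : 0 ≤ β) (hγ : 0 ≤ γ)
    (hαβ : α + β < 1) (hαγ : α + γ < 1)
    (hc1 : ∀ x y : X, A x ≠ A y →
      dist (S x) (T y) ≤ α * dist (A x) (A y)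
        + β * (dist (A x) (S x) * dist (A y) (T y)) / dist (A x) (A y)
        + γ * (dist (A x) (T y) * dist (A y) (S x)) / dist (A x) (A y))
    (hc2 : ∀ x y : X, dist (A x) (A y) = 0 → dist (S x) (T y) = 0)
    (x : ℕ → X)
    (horb : ∀ n : ℕ, (Odd (n + 1) → A (x (n + 1)) = S (x n)) ∧
                     (Even (n + 1) → A (x (n + 1)) = T (x n))) :
    CauchySeq (fun n : ℕ => A (x (n + 1))) := by
  set D : ℕ → ℝ := fun n => dist (A (x n)) (A (x (n + 1))) with hD
  have hβ1 : (0:ℝ) < 1 - β := by linarith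
  set r : ℝ := α / (1 - β) with hr
  have hr0 : 0 ≤ r := div_nonneg hα hβ1.le
  have hr1 : r < 1 := by
    rw [hr, div_lt_one hβ1]; linarith
  have key : ∀ n, D (n + 1) ≤ r * D n := by
    intro n
    rcases Nat.even_or_odd n with hn | hn
    · -- n even : A x_{n+1} = S x_n, A x_{n+2} = T x_{n+1}
      have h1 : A (x (n + 1)) = S (x n) := (horb n).1 hn.add_one
      have h2 : A (x (n + 2)) = T (x (n + 1)) := (horb (n + 1)).2 (hn.add even_two)
      by_cases hne : A (x n) = A (x (n + 1))
      · have h0 : D (n + 1) = 0 := by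
          have := hc2 (x n) (x (n + 1)) (by rw [hne, dist_self])
          simpa [hD, h1, h2] using this
        rw [h0]
        exact mul_nonneg hr0 dist_nonneg
      · have hDn : D n ≠ 0 := by
          simpa [hD, dist_eq_zero] using hne
        have hDn0 : 0 < D n := lt_of_le_of_ne dist_nonneg (Ne.symm hDn)
        have hle := hc1 (x n) (x (n + 1)) hne
        rw [← h1, ← h2] at hle
        have e1 : dist (A (x n)) (A (x (n + 1))) = D n := rfl
        have e2 : dist (A (x (n + 1))) (A (x (n + 2))) = D (n + 1) := rfl
        have e3 : dist (A (x (n + 1))) (A (x (n + 1))) = 0 := dist_self _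
        rw [e1, e2, e3] at hle
        have hle' : D (n + 1) ≤ α * D n + β * D (n + 1) := by
          have hβeq : β * (D n * D (n + 1)) / D n = β * D (n + 1) := by
            field_simp
          calc D (n + 1) ≤ α * D n + β * (D n * D (n + 1)) / D n
                + γ * (dist (A (x n)) (A (x (n + 2))) * 0) / D n := hle
            _ = α * D n + β * D (n + 1) := by rw [hβeq]; ring
        rw [hr, div_mul_eq_mul_div, le_div_iff₀ hβ1]
        nlinarith
    · -- n odd : A x_{n+1} = T x_n, A x_{n+2} = S x_{n+1}
      have h1 : A (x (n + 1)) = T (x n) := (horb n).2 hn.add_one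
      have h2 : A (x (n + 2)) = S (x (n + 1)) := (horb (n + 1)).1 (by
        rcases hn with ⟨k, hk⟩; exact ⟨k + 1, by omega⟩)
      by_cases hne : A (x (n + 1)) = A (x n)
      · have h0 : D (n + 1) = 0 := by
          have := hc2 (x (n + 1)) (x n) (by rw [hne, dist_self])
          rw [← h1, ← h2] at this
          show dist (A (x (n + 1))) (A (x (n + 2))) = 0
          rw [dist_comm]; exact this
        rw [h0]
        exact mul_nonneg hr0 dist_nonneg
      · have hDn : D n ≠ 0 := by
          intro h
          have h' : dist (A (x n)) (A (x (n + 1))) = 0 := h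
          exact hne (dist_eq_zero.mp h').symm
        have hDn0 : 0 < D n := lt_of_le_of_ne dist_nonneg (Ne.symm hDn)
        have hle := hc1 (x (n + 1)) (x n) hne
        rw [← h1, ← h2] at hle
        have e1 : dist (A (x (n + 1))) (A (x n)) = D n := dist_comm _ _
        have e2 : dist (A (x (n + 1))) (A (x (n + 2))) = D (n + 1) := rfl
        have e3 : dist (A (x (n + 1))) (A (x (n + 1))) = 0 := dist_self _
        have e4 : dist (A (x n)) (A (x (n + 1))) = D n := rfl
        have e5 : dist (A (x (n + 2))) (A (x (n + 1))) = D (n + 1) := dist_comm _ _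
        rw [e1, e2, e3, e4, e5] at hle
        have hle' : D (n + 1) ≤ α * D n + β * D (n + 1) := by
          have hβeq : β * (D (n + 1) * D n) / D n = β * D (n + 1) := by
            field_simp
          calc D (n + 1) ≤ α * D n + β * (D (n + 1) * D n) / D n
                + γ * (0 * dist (A (x n)) (A (x (n + 2)))) / D n := hle
            _ = α * D n + β * D (n + 1) := by rw [hβeq]; ring
        rw [hr, div_mul_eq_mul_div, le_div_iff₀ hβ1]
        nlinarith
  have geom : ∀ n, D (n + 1) ≤ D 1 * r ^ n := by
    intro n
    induction n with
    | zero => simp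
    | succ k ih =>
      calc D (k + 2) ≤ r * D (k + 1) := key (k + 1)
        _ ≤ r * (D 1 * r ^ k) := by
            exact mul_le_mul_of_nonneg_left ih hr0
        _ = D 1 * r ^ (k + 1) := by ring
  exact cauchySeq_of_le_geometric r (D 1) hr1 (fun n => geom n)
end

section
/- Let A, S, T be continuous selfmaps of a metric space (X,d) and suppose there exist nonnegative reals α, β, γ with α + β < 1 and α + γ < 1 such that for all x, y ∈ X: whenever Ax ≠ Ay, d(Sx,Ty) ≤ α·d(Ax,Ay) + β·(d(Ax,Sx)·d(Ay,Ty))/d(Ax,Ay) + γ·(d(Ax,Ty)·d(Ay,Sx))/d(Ax,Ay), and whenever d(Ax,Ay) = 0, d(Sx,Ty) = 0. Suppose there exists an (S,T,A)-orbit {xₙ} of some x₀ ∈ X, X is (S,T,A)-orbitally complete at x₀, and the pairs (A,S) and (A,T) are weakly commuting. Then A, S and T have a unique common fixed point, i.e. there is a unique u ∈ X with Au = Su = Tu = u. -/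
open Filter Topology

/-- For continuous selfmaps `A`, `S`, `T` satisfying the (α,β,γ)-rational
contractive condition, admitting an `(S,T,A)`-orbit of some `x₀`, with `X` orbitally
complete at `x₀` and the pairs `(A,S)`, `(A,T)` weakly commuting, the maps `A`, `S`,
`T` have a unique common fixed point. -/
theorem stmt_13 {X : Type*} [MetricSpace X] (S T A : X → X)
    (hScont : Continuous S) (hTcont : Continuous T) (hAcont : Continuous A)
    (α β γ : ℝ) (hα : 0 ≤ α) (hβ : 0 ≤ β) (hγ : 0 ≤ γ)
    (hαβ : α + β < 1) (hαγ : α + γ < 1)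
    (hc1 : ∀ x y : X, A x ≠ A y →
      dist (S x) (T y) ≤ α * dist (A x) (A y)
        + β * (dist (A x) (S x) * dist (A y) (T y)) / dist (A x) (A y)
        + γ * (dist (A x) (T y) * dist (A y) (S x)) / dist (A x) (A y))
    (hc2 : ∀ x y : X, dist (A x) (A y) = 0 → dist (S x) (T y) = 0)
    (x : ℕ → X)
    (horb : ∀ n : ℕ, (Odd (n + 1) → A (x (n + 1)) = S (x n)) ∧
                     (Even (n + 1) → A (x (n + 1)) = T (x n)))
    -- X is (S,T,A)-orbitally complete at x₀
    (hcomp : ∀ u : ℕ → X, (∀ k : ℕ, ∃ n : ℕ, u k = A (x (n + 1))) → CauchySeq u →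
      ∃ l : X, Tendsto u atTop (𝓝 l))
    -- the pairs (A,S) and (A,T) are weakly commuting
    (hwcAS : ∀ y : X, dist (S (A y)) (A (S y)) ≤ dist (A y) (S y))
    (hwcAT : ∀ y : X, dist (T (A y)) (A (T y)) ≤ dist (A y) (T y)) :
    ∃! u : X, A u = u ∧ S u = u ∧ T u = u := by
  set y : ℕ → X := fun n => A (x (n + 1)) with hy_def
  have hS : ∀ n : ℕ, Even n → y n = S (x n) := fun n hn => (horb n).1 hn.add_one
  have hT : ∀ n : ℕ, Odd n → y n = T (x n) := fun n hn => (horb n).2 hn.add_one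
  have hβ1 : β < 1 := by linarith
  have hpos : (0:ℝ) < 1 - β := by linarith
  set h : ℝ := α / (1 - β) with hh
  have hh0 : 0 ≤ h := div_nonneg hα hpos.le
  have hh1 : h < 1 := (div_lt_one hpos).mpr (by linarith)
  have key : ∀ n : ℕ, dist (y (n + 1)) (y (n + 2)) ≤ h * dist (y n) (y (n + 1)) := by
    intro n
    rcases Nat.even_or_odd n with he | ho
    · -- n even: use contraction with x := x (n+2), y := x (n+1)
      have e1 : A (x (n + 2)) = y (n + 1) := rfl
      have e2 : A (x (n + 1)) = y n := rfl
      have e3 : S (x (n + 2)) = y (n + 2) := by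
        obtain ⟨k, hk⟩ := he
        exact (hS (n + 2) ⟨k + 1, by omega⟩).symm
      have e4 : T (x (n + 1)) = y (n + 1) := by
        obtain ⟨k, hk⟩ := he
        exact (hT (n + 1) ⟨k, by omega⟩).symm
      by_cases hne : A (x (n + 2)) = A (x (n + 1))
      · have h0 := hc2 (x (n + 2)) (x (n + 1)) (by rw [hne, dist_self])
        rw [e3, e4] at h0
        rw [dist_comm] at h0
        rw [h0]
        exact mul_nonneg hh0 dist_nonneg
      · have hineq := hc1 (x (n + 2)) (x (n + 1)) hne
        rw [e1, e2, e3, e4] at hineq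
        have hdne : dist (y (n + 1)) (y n) ≠ 0 := by
          rw [← e1, ← e2]
          exact dist_ne_zero.mpr hne
        have hdpos : 0 < dist (y (n + 1)) (y n) :=
          lt_of_le_of_ne dist_nonneg (Ne.symm hdne)
        have hb : β * (dist (y (n + 1)) (y (n + 2)) * dist (y n) (y (n + 1))) /
            dist (y (n + 1)) (y n) = β * dist (y (n + 1)) (y (n + 2)) := by
          rw [dist_comm (y n) (y (n + 1))]
          field_simp
        rw [dist_self, hb] at hineq
        simp only [zero_mul, mul_zero, zero_div, add_zero] at hineq
        rw [dist_comm (y (n + 1)) (y (n + 2))] at hineq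
        rw [dist_comm (y (n + 1)) (y (n + 2)), dist_comm (y n) (y (n + 1)), hh,
          div_mul_eq_mul_div, le_div_iff₀ hpos]
        nlinarith [hineq]
    · -- n odd: use contraction with x := x (n+1), y := x (n+2)
      have e1 : A (x (n + 1)) = y n := rfl
      have e2 : A (x (n + 2)) = y (n + 1) := rfl
      have e3 : S (x (n + 1)) = y (n + 1) := by
        obtain ⟨k, hk⟩ := ho
        exact (hS (n + 1) ⟨k + 1, by omega⟩).symm
      have e4 : T (x (n + 2)) = y (n + 2) := by
        obtain ⟨k, hk⟩ := ho
        exact (hT (n + 2) ⟨k + 1, by omega⟩).symm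
      by_cases hne : A (x (n + 1)) = A (x (n + 2))
      · have h0 := hc2 (x (n + 1)) (x (n + 2)) (by rw [hne, dist_self])
        rw [e3, e4] at h0
        rw [h0]
        exact mul_nonneg hh0 dist_nonneg
      · have hineq := hc1 (x (n + 1)) (x (n + 2)) hne
        rw [e1, e2, e3, e4] at hineq
        have hdne : dist (y n) (y (n + 1)) ≠ 0 := by
          rw [← e1, ← e2]
          exact dist_ne_zero.mpr hne
        have hdpos : 0 < dist (y n) (y (n + 1)) :=
          lt_of_le_of_ne dist_nonneg (Ne.symm hdne)
        have hb : β * (dist (y n) (y (n + 1)) * dist (y (n + 1)) (y (n + 2))) /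
            dist (y n) (y (n + 1)) = β * dist (y (n + 1)) (y (n + 2)) := by
          field_simp
        rw [dist_self, hb] at hineq
        simp only [mul_zero, zero_div, add_zero] at hineq
        rw [hh, div_mul_eq_mul_div, le_div_iff₀ hpos]
        nlinarith [hineq]
  have hgeo : ∀ n : ℕ, dist (y n) (y (n + 1)) ≤ dist (y 0) (y 1) * h ^ n := by
    intro n
    induction n with
    | zero => simp
    | succ n ih =>
      calc dist (y (n + 1)) (y (n + 2)) ≤ h * dist (y n) (y (n + 1)) := key n
        _ ≤ h * (dist (y 0) (y 1) * h ^ n) := mul_le_mul_of_nonneg_left ih hh0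
        _ = dist (y 0) (y 1) * h ^ (n + 1) := by ring
  have hcau : CauchySeq y := cauchySeq_of_le_geometric h (dist (y 0) (y 1)) hh1 hgeo
  obtain ⟨z, hz⟩ := hcomp y (fun k => ⟨k, rfl⟩) hcau
  have h2 : Tendsto (fun k : ℕ => 2 * k) atTop atTop :=
    StrictMono.tendsto_atTop (fun a b hab => by omega)
  have h21 : Tendsto (fun k : ℕ => 2 * k + 1) atTop atTop :=
    StrictMono.tendsto_atTop (fun a b hab => by omega)
  have h22 : Tendsto (fun k : ℕ => 2 * k + 2) atTop atTop :=
    StrictMono.tendsto_atTop (fun a b hab => by omega)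
  have hy2 : Tendsto (fun k => y (2 * k)) atTop (𝓝 z) := hz.comp h2
  have hy21 : Tendsto (fun k => y (2 * k + 1)) atTop (𝓝 z) := hz.comp h21
  have hy22 : Tendsto (fun k => y (2 * k + 2)) atTop (𝓝 z) := hz.comp h22
  have hAy : Tendsto (fun n => A (y n)) atTop (𝓝 (A z)) := (hAcont.tendsto z).comp hz
  have hd0 : Tendsto (fun n => dist (y n) (y (n + 1))) atTop (𝓝 0) := by
    have h1 : Tendsto (fun n => y (n + 1)) atTop (𝓝 z) := hz.comp (tendsto_add_atTop_nat 1)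
    simpa using hz.dist h1
  have hSz : S z = A z := by
    have t1 : Tendsto (fun k => S (y (2 * k + 1))) atTop (𝓝 (S z)) :=
      (hScont.tendsto z).comp hy21
    have t2 : Tendsto (fun k => S (y (2 * k + 1))) atTop (𝓝 (A z)) := by
      apply Filter.Tendsto.congr_dist (hAy.comp h22)
      apply squeeze_zero (fun k => dist_nonneg) (fun k => ?_) (hd0.comp h21)
      have e2 : y (2 * k + 2) = S (x (2 * k + 2)) := hS (2 * k + 2) ⟨k + 1, by omega⟩
      calc dist (A (y (2 * k + 2))) (S (y (2 * k + 1)))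
          = dist (S (A (x (2 * k + 2)))) (A (S (x (2 * k + 2)))) := by
            rw [dist_comm, e2]
        _ ≤ dist (A (x (2 * k + 2))) (S (x (2 * k + 2))) := hwcAS (x (2 * k + 2))
        _ = dist (y (2 * k + 1)) (y (2 * k + 1 + 1)) := by rw [e2]
    exact tendsto_nhds_unique t1 t2
  have hTz : T z = A z := by
    have t1 : Tendsto (fun k => T (y (2 * k))) atTop (𝓝 (T z)) :=
      (hTcont.tendsto z).comp hy2
    have t2 : Tendsto (fun k => T (y (2 * k))) atTop (𝓝 (A z)) := by
      apply Filter.Tendsto.congr_dist (hAy.comp h21)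
      apply squeeze_zero (fun k => dist_nonneg) (fun k => ?_) (hd0.comp h2)
      have e2 : y (2 * k + 1) = T (x (2 * k + 1)) := hT (2 * k + 1) ⟨k, by omega⟩
      calc dist (A (y (2 * k + 1))) (T (y (2 * k)))
          = dist (T (A (x (2 * k + 1)))) (A (T (x (2 * k + 1)))) := by
            rw [dist_comm, e2]
        _ ≤ dist (A (x (2 * k + 1))) (T (x (2 * k + 1))) := hwcAT (x (2 * k + 1))
        _ = dist (y (2 * k)) (y (2 * k + 1)) := by rw [e2]
    exact tendsto_nhds_unique t1 t2
  have hAz : A z = z := by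
    by_contra hzz
    have hzp : 0 < dist (A z) z := dist_pos.mpr hzz
    obtain ⟨N, hN⟩ := Metric.tendsto_atTop.mp hy2 (dist (A z) z) hzp
    have hev : ∀ k ≥ N, dist (A z) (y (2 * k + 1)) ≤
        α * dist (A z) (y (2 * k)) + γ * dist (A z) (y (2 * k + 1)) := by
      intro k hk
      have hne : A z ≠ A (x (2 * k + 1)) := by
        intro hcon
        have h5 := hN k hk
        rw [show y (2 * k) = A z from hcon.symm] at h5
        exact absurd h5 (lt_irrefl _)
      have hineq := hc1 z (x (2 * k + 1)) hne
      have eA : A (x (2 * k + 1)) = y (2 * k) := rfl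
      have eT : T (x (2 * k + 1)) = y (2 * k + 1) := (hT (2 * k + 1) ⟨k, by omega⟩).symm
      rw [eA, eT, hSz] at hineq
      have hdne : dist (A z) (y (2 * k)) ≠ 0 := by
        rw [← eA]; exact dist_ne_zero.mpr hne
      have hg : γ * (dist (A z) (y (2 * k + 1)) * dist (y (2 * k)) (A z)) /
          dist (A z) (y (2 * k)) = γ * dist (A z) (y (2 * k + 1)) := by
        rw [dist_comm (y (2 * k)) (A z)]
        field_simp
      rw [dist_self, hg] at hineq
      simpa using hineq
    have L1 : Tendsto (fun k => dist (A z) (y (2 * k + 1))) atTop (𝓝 (dist (A z) z)) :=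
      tendsto_const_nhds.dist hy21
    have L2 : Tendsto (fun k => α * dist (A z) (y (2 * k)) + γ * dist (A z) (y (2 * k + 1)))
        atTop (𝓝 (α * dist (A z) z + γ * dist (A z) z)) :=
      ((tendsto_const_nhds.dist hy2).const_mul α).add
        ((tendsto_const_nhds.dist hy21).const_mul γ)
    have hfin : dist (A z) z ≤ α * dist (A z) z + γ * dist (A z) z :=
      le_of_tendsto_of_tendsto L1 L2 (eventually_atTop.mpr ⟨N, hev⟩)
    nlinarith
  have hSzz : S z = z := hSz.trans hAz
  have hTzz : T z = z := hTz.trans hAz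
  refine ⟨z, ⟨hAz, hSzz, hTzz⟩, ?_⟩
  rintro v ⟨hAv, hSv, hTv⟩
  by_contra hvz
  have hvzp : 0 < dist v z := dist_pos.mpr hvz
  have hne : A v ≠ A z := by rw [hAv, hAz]; exact hvz
  have hineq := hc1 v z hne
  rw [hAv, hAz, hSv, hTzz] at hineq
  have hg : γ * (dist v z * dist z v) / dist v z = γ * dist v z := by
    rw [dist_comm z v]; field_simp
  rw [dist_self, hg] at hineq
  simp only [mul_zero, zero_mul, zero_div, add_zero] at hineq
  nlinarith
end

section
/- Let {Sₙ}ₙ₌₁^∞ be a sequence of selfmaps of a metric space (X,d) with Sₙuₙ = uₙ for each n. Assume: (i) there exist α, β ∈ [0,1) with α + β < 1 such that d(Sₙx, Sₙy) ≤ α·(d(x,Sₙx)·d(y,Sₙy))/d(x,y) + β·d(x,y) for all x, y ∈ X with x ≠ y and all n; (ii) {Sₙ} converges pointwise to a selfmap S of X. Then for u ∈ X: uₙ → u as n → ∞ if and only if Su = u. -/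
open Filter Topology

/-- Jaggi, Theorem 5: Let `{Sₙ}` be selfmaps of a metric space with
`Sₙuₙ = uₙ`, satisfying the rational contractive condition with constants
`α, β ∈ [0,1)`, `α + β < 1`, and converging pointwise to `S`. Then `uₙ → u` if and
only if `Su = u`. -/
theorem stmt_14 {X : Type*} [MetricSpace X] (Sseq : ℕ → X → X) (S : X → X)
    (u : ℕ → X) (hfix : ∀ n : ℕ, Sseq n (u n) = u n)
    (α β : ℝ) (hα0 : 0 ≤ α) (hα1 : α < 1) (hβ0 : 0 ≤ β) (hβ1 : β < 1)
    (hαβ : α + β < 1)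
    (hc : ∀ n : ℕ, ∀ x y : X, x ≠ y →
      dist (Sseq n x) (Sseq n y) ≤
        α * (dist x (Sseq n x) * dist y (Sseq n y)) / dist x y + β * dist x y)
    (hptwise : ∀ y : X, Tendsto (fun n => Sseq n y) atTop (𝓝 (S y))) :
    ∀ w : X, Tendsto u atTop (𝓝 w) ↔ S w = w := by
  have key : ∀ (n : ℕ) (w : X), dist (u n) (Sseq n w) ≤ β * dist (u n) w := by
    intro n w
    by_cases h : u n = w
    · have : Sseq n w = u n := by rw [← h, hfix n]
      simp [this, h]
    · have h2 := hc n (u n) w h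
      rw [hfix n] at h2
      simpa using h2
  intro w
  constructor
  · intro hu
    have hdu : Tendsto (fun n => dist (u n) w) atTop (𝓝 0) :=
      tendsto_iff_dist_tendsto_zero.mp hu
    have hdS : Tendsto (fun n => dist (Sseq n w) (S w)) atTop (𝓝 0) :=
      tendsto_iff_dist_tendsto_zero.mp (hptwise w)
    have hbound : ∀ n : ℕ,
        dist w (S w) ≤ (1 + β) * dist (u n) w + dist (Sseq n w) (S w) := by
      intro n
      calc dist w (S w) ≤ dist w (u n) + dist (u n) (Sseq n w) + dist (Sseq n w) (S w) :=
            dist_triangle4 _ _ _ _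
        _ ≤ dist w (u n) + β * dist (u n) w + dist (Sseq n w) (S w) := by
            linarith [key n w]
        _ = (1 + β) * dist (u n) w + dist (Sseq n w) (S w) := by
            rw [dist_comm w (u n)]; ring
    have hlim : Tendsto (fun n => (1 + β) * dist (u n) w + dist (Sseq n w) (S w))
        atTop (𝓝 0) := by
      have := ((hdu.const_mul (1 + β)).add hdS)
      simpa using this
    have : dist w (S w) ≤ 0 := ge_of_tendsto' hlim hbound
    have : dist w (S w) = 0 := le_antisymm this dist_nonneg
    rw [dist_comm] at this
    exact dist_eq_zero.mp this
  · intro hSw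
    have hdS : Tendsto (fun n => dist (Sseq n w) w) atTop (𝓝 0) := by
      have := tendsto_iff_dist_tendsto_zero.mp (hptwise w)
      rwa [hSw] at this
    have hbound : ∀ n : ℕ, dist (u n) w ≤ dist (Sseq n w) w / (1 - β) := by
      intro n
      have h1 : dist (u n) w ≤ dist (u n) (Sseq n w) + dist (Sseq n w) w :=
        dist_triangle _ _ _
      have h2 := key n w
      have h3 : (1 - β) * dist (u n) w ≤ dist (Sseq n w) w := by linarith
      rw [le_div_iff₀ (by linarith : (0:ℝ) < 1 - β)]
      linarith
    have hlim : Tendsto (fun n => dist (Sseq n w) w / (1 - β)) atTop (𝓝 0) := by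
      have := hdS.div_const (1 - β)
      simpa using this
    have : Tendsto (fun n => dist (u n) w) atTop (𝓝 0) :=
      squeeze_zero (fun n => dist_nonneg) hbound hlim
    exact tendsto_iff_dist_tendsto_zero.mpr this
end

section
/- Let (X,d) be a metric space and S, T, A : X → X. Suppose there exists φ ∈ Φ such that S, T, A satisfy the φ-contractive inequality involving rational expressions, and there exists an (S,T,A)-orbit {xₙ} of some x₀ ∈ X with Ax_{2n} = Ax_{2n+1} for some n. Then Ax_{2n} = Ax_{2n+k} for every k ≥ 1; in particular the sequence {Axₘ}_{m ≥ 2n} is constant. -/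
open Filter Topology

/-- Under the φ-contractive inequality and an `(S,T,A)`-orbit, if
`A x_{2n} = A x_{2n+1}` for some `n`, then `A x_{2n} = A x_{2n+k}` for all `k ≥ 1`;
in particular the sequence `{A xₘ}` is constant from index `2n` on. -/
theorem stmt_15 {X : Type*} [MetricSpace X] (S T A : X → X) (φ : ℝ → ℝ)
    (hφc : ContinuousOn φ (Set.Ici 0))
    (hφm : MonotoneOn φ (Set.Ici 0))
    (hφ0 : ∀ t : ℝ, 0 ≤ t → 0 ≤ φ t)
    (hφlt : ∀ t : ℝ, 0 < t → φ t < t)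
    (hc1 : ∀ x y : X, A x ≠ A y →
      dist (S x) (T y) ≤ φ (max (dist (A x) (A y))
        (max (dist (A x) (S x) * dist (A y) (T y) / dist (A x) (A y))
             (dist (A x) (T y) * dist (A y) (S x) / dist (A x) (A y)))))
    (hc2 : ∀ x y : X, dist (A x) (A y) = 0 → dist (S x) (T y) = 0)
    (x : ℕ → X)
    (horb : ∀ n : ℕ, (Odd (n + 1) → A (x (n + 1)) = S (x n)) ∧
                     (Even (n + 1) → A (x (n + 1)) = T (x n)))
    (n : ℕ) (heq : A (x (2 * n)) = A (x (2 * n + 1))) :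
    (∀ k : ℕ, 1 ≤ k → A (x (2 * n)) = A (x (2 * n + k))) ∧
    (∀ m : ℕ, 2 * n ≤ m → A (x m) = A (x (2 * n))) := by
  have step : ∀ m : ℕ, A (x m) = A (x (m+1)) → A (x (m+1)) = A (x (m+2)) := by
    intro m h
    rcases Nat.even_or_odd (m+1) with he | ho
    · have h1 : A (x (m+1)) = T (x m) := (horb m).2 he
      have h2 : A (x (m+2)) = S (x (m+1)) := (horb (m+1)).1 he.add_one
      have h3 := hc2 (x (m+1)) (x m) (by rw [dist_eq_zero]; exact h.symm)
      rw [dist_eq_zero] at h3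
      rw [h1, h2, h3]
    · have h1 : A (x (m+1)) = S (x m) := (horb m).1 ho
      have h2 : A (x (m+2)) = T (x (m+1)) := (horb (m+1)).2 ho.add_one
      have h3 := hc2 (x m) (x (m+1)) (by rw [dist_eq_zero]; exact h)
      rw [dist_eq_zero] at h3
      rw [h1, h2, h3]
  have key : ∀ k : ℕ, A (x (2*n + k)) = A (x (2*n)) ∧ A (x (2*n + k + 1)) = A (x (2*n)) := by
    intro k
    induction k with
    | zero => exact ⟨rfl, heq.symm⟩
    | succ k ih =>
      refine ⟨ih.2, ?_⟩
      have hs := step (2*n + k) (ih.1.trans ih.2.symm)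
      have h2 : A (x (2*n + (k+1) + 1)) = A (x (2*n + k + 1)) := by
        rw [show 2*n + (k+1) + 1 = 2*n + k + 2 by ring]
        exact hs.symm
      exact h2.trans ih.2
  constructor
  · intro k _; exact (key k).1.symm
  · intro m hm
    obtain ⟨k, rfl⟩ := Nat.exists_eq_add_of_le hm
    exact (key k).1
end

section
/- Let (X,d) be a metric space and S, T, A : X → X. Suppose there exists φ ∈ Φ such that S, T, A satisfy the φ-contractive inequality involving rational expressions, and there exists an (S,T,A)-orbit {xₙ} of some x₀ ∈ X with Axₙ ≠ Axₙ₊₁ for all n. Then d(Axₙ₊₁, Axₙ₊₂) ≤ φ(d(Axₙ, Axₙ₊₁)) for all n ≥ 1; consequently the sequence of real numbers {d(Axₙ, Axₙ₊₁)} is decreasing and d(Axₙ, Axₙ₊₁) → 0 as n → ∞. -/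
open Filter Topology

/-- Under the φ-contractive inequality and an `(S,T,A)`-orbit with
`A xₙ ≠ A xₙ₊₁` for all `n`, we have
`d(Axₙ₊₁, Axₙ₊₂) ≤ φ(d(Axₙ, Axₙ₊₁))` for all `n ≥ 1`; consequently the sequence
`{d(Axₙ, Axₙ₊₁)}` is decreasing and tends to `0`. -/
theorem stmt_16 {X : Type*} [MetricSpace X] (S T A : X → X) (φ : ℝ → ℝ)
    (hφc : ContinuousOn φ (Set.Ici 0))
    (hφm : MonotoneOn φ (Set.Ici 0))
    (hφ0 : ∀ t : ℝ, 0 ≤ t → 0 ≤ φ t)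
    (hφlt : ∀ t : ℝ, 0 < t → φ t < t)
    (hc1 : ∀ x y : X, A x ≠ A y →
      dist (S x) (T y) ≤ φ (max (dist (A x) (A y))
        (max (dist (A x) (S x) * dist (A y) (T y) / dist (A x) (A y))
             (dist (A x) (T y) * dist (A y) (S x) / dist (A x) (A y)))))
    (hc2 : ∀ x y : X, dist (A x) (A y) = 0 → dist (S x) (T y) = 0)
    (x : ℕ → X)
    (horb : ∀ n : ℕ, (Odd (n + 1) → A (x (n + 1)) = S (x n)) ∧
                     (Even (n + 1) → A (x (n + 1)) = T (x n)))
    (hne : ∀ n : ℕ, A (x n) ≠ A (x (n + 1))) :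
    (∀ n : ℕ, 1 ≤ n →
      dist (A (x (n + 1))) (A (x (n + 2))) ≤ φ (dist (A (x n)) (A (x (n + 1))))) ∧
    (∀ n : ℕ, 1 ≤ n →
      dist (A (x (n + 1))) (A (x (n + 2))) ≤ dist (A (x n)) (A (x (n + 1)))) ∧
    Tendsto (fun n : ℕ => dist (A (x n)) (A (x (n + 1)))) atTop (𝓝 0) := by
  have hdpos : ∀ n : ℕ, 0 < dist (A (x n)) (A (x (n + 1))) := fun n =>
    dist_pos.mpr (hne n)
  have key : ∀ n : ℕ,
      dist (A (x (n + 1))) (A (x (n + 2))) ≤ φ (dist (A (x n)) (A (x (n + 1)))) := by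
    intro n
    have hd0 : dist (A (x n)) (A (x (n + 1))) ≠ 0 := (hdpos n).ne'
    rcases Nat.even_or_odd n with he | ho
    · have h1 : A (x (n + 1)) = S (x n) := (horb n).1 (Even.add_one he)
      have h2 : A (x (n + 2)) = T (x (n + 1)) := (horb (n + 1)).2 ((Even.add_one he).add_one)
      have h := hc1 (x n) (x (n + 1)) (hne n)
      rw [← h1, ← h2] at h
      rw [dist_self, mul_zero, zero_div, mul_div_assoc] at h
      have e1 : dist (A (x n)) (A (x (n + 1))) *
          (dist (A (x (n + 1))) (A (x (n + 2))) / dist (A (x n)) (A (x (n + 1))))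
          = dist (A (x (n + 1))) (A (x (n + 2))) := by field_simp
      rw [e1, max_eq_left dist_nonneg] at h
      rcases le_or_gt (dist (A (x (n + 1))) (A (x (n + 2)))) (dist (A (x n)) (A (x (n + 1)))) with hle | hlt
      · rwa [max_eq_left hle] at h
      · rw [max_eq_right hlt.le] at h
        exact absurd h (not_le.mpr (hφlt _ (hdpos (n + 1))))
    · have h1 : A (x (n + 1)) = T (x n) := (horb n).2 (Odd.add_one ho)
      have h2 : A (x (n + 2)) = S (x (n + 1)) := by
        refine (horb (n + 1)).1 ?_
        rcases ho with ⟨k, hk⟩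
        exact ⟨k + 1, by omega⟩
      have h := hc1 (x (n + 1)) (x n) (hne n).symm
      rw [← h1, ← h2] at h
      rw [dist_self, zero_mul, zero_div, dist_comm (A (x (n + 2))), dist_comm (A (x (n + 1))) (A (x n))] at h
      have e2 : dist (A (x (n + 1))) (A (x (n + 2))) * dist (A (x n)) (A (x (n + 1)))
          / dist (A (x n)) (A (x (n + 1))) = dist (A (x (n + 1))) (A (x (n + 2))) := by
        field_simp
      rw [e2, max_eq_left dist_nonneg] at h
      rcases le_or_gt (dist (A (x (n + 1))) (A (x (n + 2)))) (dist (A (x n)) (A (x (n + 1)))) with hle | hlt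
      · rwa [max_eq_left hle] at h
      · rw [max_eq_right hlt.le] at h
        exact absurd h (not_le.mpr (hφlt _ (hdpos (n + 1))))
  have dec : ∀ n : ℕ,
      dist (A (x (n + 1))) (A (x (n + 2))) ≤ dist (A (x n)) (A (x (n + 1))) := fun n =>
    (key n).trans (hφlt _ (hdpos n)).le
  refine ⟨fun n _ => key n, fun n _ => dec n, ?_⟩
  set d : ℕ → ℝ := fun n => dist (A (x n)) (A (x (n + 1))) with hd
  have hanti : Antitone d := antitone_nat_of_succ_le dec
  have hbdd : BddBelow (Set.range d) := ⟨0, by rintro _ ⟨n, rfl⟩; exact dist_nonneg⟩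
  have htend : Tendsto d atTop (𝓝 (⨅ n, d n)) := tendsto_atTop_ciInf hanti hbdd
  have hL0 : 0 ≤ ⨅ n, d n := le_ciInf fun n => dist_nonneg
  have hLeq : (⨅ n, d n) = 0 := by
    by_contra hLne
    have hLpos : 0 < ⨅ n, d n := lt_of_le_of_ne hL0 (Ne.symm hLne)
    have htend' : Tendsto d atTop (𝓝[Set.Ici 0] (⨅ n, d n)) :=
      tendsto_nhdsWithin_of_tendsto_nhds_of_eventually_within _ htend
        (Filter.Eventually.of_forall fun n => dist_nonneg)
    have hφt : Tendsto (fun n => φ (d n)) atTop (𝓝 (φ (⨅ n, d n))) :=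
      (hφc _ hL0).tendsto.comp htend'
    have ht1 : Tendsto (fun n => d (n + 1)) atTop (𝓝 (⨅ n, d n)) :=
      htend.comp (tendsto_add_atTop_nat 1)
    have hle : (⨅ n, d n) ≤ φ (⨅ n, d n) :=
      le_of_tendsto_of_tendsto' ht1 hφt fun n => key n
    exact absurd hle (not_le.mpr (hφlt _ hLpos))
  rw [hLeq] at htend
  exact htend
end

section
/- Let (X,d) be a metric space and S, T, A : X → X. Suppose there exists φ ∈ Φ such that S, T, A satisfy the φ-contractive inequality involving rational expressions, there exists an (S,T,A)-orbit {xₙ} of some x₀ ∈ X, X is (S,T,A)-orbitally complete at x₀, the pairs (A,S) and (A,T) are reciprocally continuous, and the pairs (A,S) and (A,T) are compatible. Then the sequence {Axₙ} is Cauchy, Axₙ converges to the unique common fixed point u of A, S and T, and u lies in the closure of O_STA(x₀). -/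
open Filter Topology

/-- Remark 2.4: Under the hypotheses of Theorem 3.2 (φ-contractive
inequality, `(S,T,A)`-orbit, orbital completeness at `x₀`, reciprocal continuity and
compatibility of the pairs `(A,S)` and `(A,T)`), the sequence `{A xₙ}` is Cauchy and
converges to the unique common fixed point `u` of `A`, `S`, `T`, and `u` lies in the
closure of the orbit `O_STA(x₀)`. -/
theorem stmt_18 {X : Type*} [MetricSpace X] (S T A : X → X) (φ : ℝ → ℝ)
    (hφc : ContinuousOn φ (Set.Ici 0))
    (hφm : MonotoneOn φ (Set.Ici 0))
    (hφ0 : ∀ t : ℝ, 0 ≤ t → 0 ≤ φ t)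
    (hφlt : ∀ t : ℝ, 0 < t → φ t < t)
    (hc1 : ∀ x y : X, A x ≠ A y →
      dist (S x) (T y) ≤ φ (max (dist (A x) (A y))
        (max (dist (A x) (S x) * dist (A y) (T y) / dist (A x) (A y))
             (dist (A x) (T y) * dist (A y) (S x) / dist (A x) (A y)))))
    (hc2 : ∀ x y : X, dist (A x) (A y) = 0 → dist (S x) (T y) = 0)
    (x : ℕ → X)
    (horb : ∀ n : ℕ, (Odd (n + 1) → A (x (n + 1)) = S (x n)) ∧
                     (Even (n + 1) → A (x (n + 1)) = T (x n)))
    -- (i) X is (S,T,A)-orbitally complete at x₀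
    (hcomp : ∀ u : ℕ → X, (∀ k : ℕ, ∃ n : ℕ, u k = A (x (n + 1))) → CauchySeq u →
      ∃ l : X, Tendsto u atTop (𝓝 l))
    -- (ii) the pairs (A,S) and (A,T) are reciprocally continuous
    (hrcAS : ∀ (z : ℕ → X) (t : X),
      Tendsto (fun n => A (z n)) atTop (𝓝 t) → Tendsto (fun n => S (z n)) atTop (𝓝 t) →
      Tendsto (fun n => A (S (z n))) atTop (𝓝 (A t)) ∧
      Tendsto (fun n => S (A (z n))) atTop (𝓝 (S t)))
    (hrcAT : ∀ (z : ℕ → X) (t : X),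
      Tendsto (fun n => A (z n)) atTop (𝓝 t) → Tendsto (fun n => T (z n)) atTop (𝓝 t) →
      Tendsto (fun n => A (T (z n))) atTop (𝓝 (A t)) ∧
      Tendsto (fun n => T (A (z n))) atTop (𝓝 (T t)))
    -- (iii) the pairs (A,S) and (A,T) are compatible
    (hcptAS : ∀ (z : ℕ → X) (t : X),
      Tendsto (fun n => A (z n)) atTop (𝓝 t) → Tendsto (fun n => S (z n)) atTop (𝓝 t) →
      Tendsto (fun n => dist (S (A (z n))) (A (S (z n)))) atTop (𝓝 0))
    (hcptAT : ∀ (z : ℕ → X) (t : X),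
      Tendsto (fun n => A (z n)) atTop (𝓝 t) → Tendsto (fun n => T (z n)) atTop (𝓝 t) →
      Tendsto (fun n => dist (T (A (z n))) (A (T (z n)))) atTop (𝓝 0)) :
    CauchySeq (fun n : ℕ => A (x (n + 1))) ∧
    ∃ u : X,
      Tendsto (fun n : ℕ => A (x (n + 1))) atTop (𝓝 u) ∧
      (S u = u ∧ T u = u ∧ A u = u) ∧
      (∀ v : X, S v = v ∧ T v = v ∧ A v = v → v = u) ∧
      u ∈ closure {y : X | ∃ n : ℕ, y = A (x (n + 1))} := by
  
  classical
  obtain ⟨y, hy⟩ : ∃ y : ℕ → X, ∀ n, y n = A (x (n + 1)) := ⟨_, fun _ => rfl⟩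
  have hyfun : (fun n : ℕ => A (x (n + 1))) = y := funext fun n => (hy n).symm
  have hS : ∀ p : ℕ, Even p → y p = S (x p) := fun p hp => (hy p).trans ((horb p).1 hp.add_one)
  have hT : ∀ q : ℕ, Odd q → y q = T (x q) := fun q hq => (hy q).trans ((horb q).2 hq.add_one)
  have hφ00 : φ 0 = 0 := by
    rcases eq_or_lt_of_le (hφ0 0 le_rfl) with h | h
    · exact h.symm
    · have h1 : φ 0 ≤ φ (φ 0) := hφm Set.self_mem_Ici (Set.mem_Ici.mpr h.le) h.le
      have h2 := hφlt (φ 0) h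
      linarith
  have hφle : ∀ t : ℝ, 0 ≤ t → φ t ≤ t := by
    intro t ht
    rcases eq_or_lt_of_le ht with h | h
    · rw [← h, hφ00]
    · exact (hφlt t h).le
  have key : ∀ a b : ℕ, Even (a + 1) → Odd (b + 1) → y a ≠ y b →
      dist (y (a + 1)) (y (b + 1)) ≤ φ (max (dist (y a) (y b))
        (max (dist (y a) (y (a + 1)) * dist (y b) (y (b + 1)) / dist (y a) (y b))
             (dist (y a) (y (b + 1)) * dist (y b) (y (a + 1)) / dist (y a) (y b)))) := by
    intro a b hea hob hne
    rw [hS (a + 1) hea, hT (b + 1) hob, hy a, hy b]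
    refine hc1 (x (a + 1)) (x (b + 1)) ?_
    rw [← hy a, ← hy b]; exact hne
  have key0 : ∀ a b : ℕ, Even (a + 1) → Odd (b + 1) → y a = y b → y (a + 1) = y (b + 1) := by
    intro a b hea hob heq
    rw [hS (a + 1) hea, hT (b + 1) hob, ← dist_eq_zero]
    refine hc2 (x (a + 1)) (x (b + 1)) ?_
    rw [← hy a, ← hy b, heq, dist_self]
  have hdd : ∀ n : ℕ, dist (y (n + 1)) (y (n + 2)) ≤ φ (dist (y n) (y (n + 1))) := by
    intro n
    by_cases h0 : y n = y (n + 1)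
    · have h1 : dist (y (n + 1)) (y (n + 2)) = 0 := by
        rcases Nat.even_or_odd n with he | ho
        · exact dist_eq_zero.mpr ((key0 (n + 1) n (he.add even_two) he.add_one h0.symm).symm)
        · exact dist_eq_zero.mpr (key0 n (n + 1) ho.add_one (ho.add_even even_two) h0)
      rw [h1]
      exact hφ0 _ dist_nonneg
    · have hDpos : 0 < dist (y n) (y (n + 1)) := dist_pos.mpr h0
      have hb : dist (y (n + 1)) (y (n + 2)) ≤
          φ (max (dist (y n) (y (n + 1))) (dist (y (n + 1)) (y (n + 2)))) := by
        rcases Nat.even_or_odd n with he | ho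
        · have hk := key (n + 1) n (he.add even_two) he.add_one (fun h => h0 h.symm)
          rw [dist_comm (y (n + 1)) (y n), dist_comm (y (n + 2)) (y (n + 1)), dist_self,
            zero_mul, zero_div, mul_div_assoc, div_self hDpos.ne', mul_one,
            max_eq_left dist_nonneg] at hk
          exact hk
        · have hk := key n (n + 1) ho.add_one (ho.add_even even_two) h0
          rw [dist_self, mul_zero, zero_div, mul_comm, mul_div_assoc, div_self hDpos.ne',
            mul_one, max_eq_left dist_nonneg] at hk
          exact hk
      rcases le_or_gt (dist (y (n + 1)) (y (n + 2))) (dist (y n) (y (n + 1))) with hle | hlt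
      · rwa [max_eq_left hle] at hb
      · exfalso
        rw [max_eq_right hlt.le] at hb
        have := hφlt _ (hDpos.trans hlt)
        linarith
  have hmono : ∀ n, dist (y (n + 1)) (y (n + 2)) ≤ dist (y n) (y (n + 1)) :=
    fun n => (hdd n).trans (hφle _ dist_nonneg)
  have hanti : Antitone (fun n => dist (y n) (y (n + 1))) :=
    antitone_nat_of_succ_le fun n => hmono n
  have hd0 : Tendsto (fun n => dist (y n) (y (n + 1))) atTop (𝓝 0) := by
    have hbdd : BddBelow (Set.range fun n => dist (y n) (y (n + 1))) :=
      ⟨0, by rintro r ⟨n, rfl⟩; exact dist_nonneg⟩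
    have hconv : Tendsto (fun n => dist (y n) (y (n + 1))) atTop
        (𝓝 (⨅ n, dist (y n) (y (n + 1)))) := tendsto_atTop_ciInf hanti hbdd
    have hδ0 : 0 ≤ ⨅ n, dist (y n) (y (n + 1)) := le_ciInf fun n => dist_nonneg
    have hδle : ∀ n, (⨅ n, dist (y n) (y (n + 1))) ≤ dist (y n) (y (n + 1)) :=
      fun n => ciInf_le hbdd n
    rcases eq_or_lt_of_le hδ0 with h | h
    · rwa [← h] at hconv
    · exfalso
      have hwithin : Tendsto (fun n => dist (y n) (y (n + 1))) atTop
          (𝓝[Set.Ici 0] ⨅ n, dist (y n) (y (n + 1))) :=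
        tendsto_nhdsWithin_of_tendsto_nhds_of_eventually_within _ hconv
          (Eventually.of_forall fun n => dist_nonneg)
      have hφd : Tendsto (fun n => φ (dist (y n) (y (n + 1)))) atTop
          (𝓝 (φ (⨅ n, dist (y n) (y (n + 1))))) :=
        ((hφc _ (Set.mem_Ici.mpr hδ0)).tendsto).comp hwithin
      have h1 : (⨅ n, dist (y n) (y (n + 1))) ≤ φ (⨅ n, dist (y n) (y (n + 1))) :=
        ge_of_tendsto' hφd fun n => (hδle (n + 1)).trans (hdd n)
      exact absurd h1 (not_le.mpr (hφlt _ h))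
  have hcauchy : CauchySeq y := by
    rw [Metric.cauchySeq_iff]
    by_contra hnc
    push_neg at hnc
    obtain ⟨ε, hε, hnc⟩ := hnc
    have hφε := hφlt ε hε
    -- modulus of continuity at ε
    obtain ⟨δ', hδ'pos, hδ'⟩ : ∃ δ' > 0, ∀ t : ℝ, 0 ≤ t → |t - ε| < δ' →
        φ t < (ε + φ ε) / 2 := by
      have hcw := hφc ε (Set.mem_Ici.mpr hε.le)
      rw [Metric.continuousWithinAt_iff] at hcw
      obtain ⟨δ', h1, h2⟩ := hcw ((ε - φ ε) / 2) (by linarith)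
      refine ⟨δ', h1, fun t ht hlt => ?_⟩
      have h3 := h2 (Set.mem_Ici.mpr ht) (by rwa [Real.dist_eq])
      rw [Real.dist_eq] at h3
      have h4 := abs_lt.mp h3
      linarith [h4.1, h4.2]
    obtain ⟨η, hηpos, hη8, hηδ, hη5⟩ :
        ∃ η : ℝ, 0 < η ∧ η ≤ ε / 8 ∧ η ≤ δ' / 9 ∧ η ≤ (ε - φ ε) / 5 :=
      ⟨min (ε / 8) (min (δ' / 9) ((ε - φ ε) / 5)),
        lt_min (by linarith) (lt_min (by linarith) (by linarith)),
        min_le_left _ _, (min_le_right _ _).trans (min_le_left _ _),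
        (min_le_right _ _).trans (min_le_right _ _)⟩
    have hB : φ (ε + 8 * η) < ε - 2 * η := by
      have h1 := hδ' (ε + 8 * η) (by linarith)
        (by rw [show ε + 8 * η - ε = 8 * η by ring, abs_of_pos (by linarith)]; linarith)
      linarith
    obtain ⟨N₀, hN₀⟩ : ∃ N₀, ∀ k ≥ N₀, dist (y k) (y (k + 1)) < η := by
      obtain ⟨N₀, h⟩ := Metric.tendsto_atTop.mp hd0 η hηpos
      exact ⟨N₀, fun k hk => by
        have := h k hk
        rwa [Real.dist_eq, sub_zero, abs_of_nonneg dist_nonneg] at this⟩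
    obtain ⟨m₀, hm₀, n₀, hn₀, hbad⟩ := hnc (N₀ + 1)
    have hne0 : m₀ ≠ n₀ := by
      rintro rfl; rw [dist_self] at hbad; linarith
    obtain ⟨n, m', hn1, hnm, hdist⟩ :
        ∃ n m', N₀ + 1 ≤ n ∧ n < m' ∧ ε ≤ dist (y n) (y m') := by
      rcases lt_or_gt_of_ne hne0 with h | h
      · exact ⟨m₀, n₀, hm₀, h, hbad⟩
      · exact ⟨n₀, m₀, hn₀, h, by rwa [dist_comm]⟩
    have hex : ∃ j, n < j ∧ ε ≤ dist (y n) (y j) := ⟨m', hnm, hdist⟩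
    obtain ⟨M, hMspec, hMmin⟩ :
        ∃ M, (n < M ∧ ε ≤ dist (y n) (y M)) ∧ ∀ j < M, ¬(n < j ∧ ε ≤ dist (y n) (y j)) :=
      ⟨Nat.find hex, Nat.find_spec hex, fun j hj => Nat.find_min hex hj⟩
    have hMn2 : n + 2 ≤ M := by
      rcases Nat.lt_or_ge M (n + 2) with h | h
      · exfalso
        have hMeq : M = n + 1 := by omega
        rw [hMeq] at hMspec
        have := hN₀ n (by omega)
        linarith [hMspec.2]
      · exact h
    obtain ⟨m1, rfl⟩ : ∃ m1, M = m1 + 1 := ⟨M - 1, by omega⟩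
    have hεm : ε ≤ dist (y n) (y (m1 + 1)) := hMspec.2
    have hm1lt : dist (y n) (y m1) < ε := by
      by_contra h'
      exact hMmin m1 (by omega) ⟨by omega, le_of_not_gt h'⟩
    obtain ⟨p, hpe, hpn⟩ : ∃ p, Even p ∧ (p = n ∨ p = n + 1) := by
      rcases Nat.even_or_odd n with h | h
      exacts [⟨n, h, Or.inl rfl⟩, ⟨n + 1, h.add_one, Or.inr rfl⟩]
    obtain ⟨q, hqo, hqm⟩ : ∃ q, Odd q ∧ (q = m1 ∨ q = m1 + 1) := by
      rcases Nat.even_or_odd m1 with h | h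
      exacts [⟨m1 + 1, h.add_one, Or.inr rfl⟩, ⟨m1, h, Or.inl rfl⟩]
    obtain ⟨a, rfl⟩ : ∃ a, p = a + 1 := ⟨p - 1, by rcases hpn with h | h <;> omega⟩
    obtain ⟨b, rfl⟩ : ∃ b, q = b + 1 := ⟨q - 1, by rcases hqm with h | h <;> omega⟩
    have hda : dist (y a) (y (a + 1)) < η := hN₀ a (by rcases hpn with h | h <;> omega)
    have hdb : dist (y b) (y (b + 1)) < η := hN₀ b (by rcases hqm with h | h <;> omega)
    have hnp : dist (y n) (y (a + 1)) < η := by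
      rcases hpn with h | h
      · rw [h, dist_self]; exact hηpos
      · rw [h]; exact hN₀ n (by omega)
    have hqm' : dist (y (b + 1)) (y (m1 + 1)) < η := by
      rcases hqm with h | h
      · rw [h]; exact hN₀ m1 (by omega)
      · rw [h, dist_self]; exact hηpos
    have han : dist (y a) (y n) < η := by
      rcases hpn with h | h
      · rw [← h]; exact hda
      · have : a = n := by omega
        rw [this, dist_self]; exact hηpos
    have hbm1 : dist (y m1) (y b) < η := by
      rcases hqm with h | h
      · have : b + 1 = m1 := h
        rw [← this, dist_comm]; exact hdb
      · have : b = m1 := by omega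
        rw [this, dist_self]; exact hηpos
    have hlow : ε - 2 * η ≤ dist (y (a + 1)) (y (b + 1)) := by
      have h1 := dist_triangle4 (y n) (y (a + 1)) (y (b + 1)) (y (m1 + 1))
      linarith
    have hDub : dist (y a) (y b) < ε + 2 * η := by
      have h1 := dist_triangle4 (y a) (y n) (y m1) (y b)
      linarith
    have hDlb : ε / 2 ≤ dist (y a) (y b) := by
      have h1 := dist_triangle4 (y (a + 1)) (y a) (y b) (y (b + 1))
      have h2 : dist (y (a + 1)) (y a) = dist (y a) (y (a + 1)) := dist_comm _ _
      linarith
    have hDpos : 0 < dist (y a) (y b) := by linarith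
    have hne : y a ≠ y b := fun h => by
      rw [h, dist_self] at hDpos; exact lt_irrefl _ hDpos
    have hk := key a b hpe hqo hne
    have ht2 : dist (y a) (y (a + 1)) * dist (y b) (y (b + 1)) / dist (y a) (y b)
        ≤ ε + 8 * η := by
      rw [div_le_iff₀ hDpos]
      have h1 : dist (y a) (y (a + 1)) * dist (y b) (y (b + 1)) ≤ η * η :=
        mul_le_mul hda.le hdb.le dist_nonneg hηpos.le
      nlinarith
    have ht3 : dist (y a) (y (b + 1)) * dist (y b) (y (a + 1)) / dist (y a) (y b)
        ≤ ε + 8 * η := by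
      rw [div_le_iff₀ hDpos]
      have hu : dist (y a) (y (b + 1)) ≤ dist (y a) (y b) + η := by
        have := dist_triangle (y a) (y b) (y (b + 1)); linarith
      have hv : dist (y b) (y (a + 1)) ≤ dist (y a) (y b) + η := by
        have h1 := dist_triangle (y b) (y a) (y (a + 1))
        have h2 : dist (y b) (y a) = dist (y a) (y b) := dist_comm _ _
        linarith
      have huv : dist (y a) (y (b + 1)) * dist (y b) (y (a + 1)) ≤
          (dist (y a) (y b) + η) * (dist (y a) (y b) + η) :=
        mul_le_mul hu hv dist_nonneg (by linarith)
      nlinarith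
    have hkk : dist (y (a + 1)) (y (b + 1)) ≤ φ (ε + 8 * η) := by
      refine hk.trans (hφm (Set.mem_Ici.mpr ?_) (Set.mem_Ici.mpr (by linarith)) ?_)
      · exact le_trans dist_nonneg (le_max_left _ _)
      · exact max_le (by linarith) (max_le ht2 ht3)
    linarith only [hlow, hkk, hB]
  obtain ⟨l, hl⟩ := hcomp y (fun k => ⟨k, hy k⟩) hcauchy
  have h20 : Tendsto (fun k => y (2 * k)) atTop (𝓝 l) :=
    hl.comp (tendsto_atTop_mono (fun k => (by omega : k ≤ 2 * k)) tendsto_id)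
  have h21 : Tendsto (fun k => y (2 * k + 1)) atTop (𝓝 l) :=
    hl.comp (tendsto_atTop_mono (fun k => (by omega : k ≤ 2 * k + 1)) tendsto_id)
  have h22 : Tendsto (fun k => y (2 * k + 2)) atTop (𝓝 l) :=
    hl.comp (tendsto_atTop_mono (fun k => (by omega : k ≤ 2 * k + 2)) tendsto_id)
  have hAz : Tendsto (fun k => A (x (2 * k + 2))) atTop (𝓝 l) := by
    have h : ∀ k : ℕ, A (x (2 * k + 1 + 1)) = y (2 * k + 1) := fun k => (hy (2 * k + 1)).symm
    simp only [show ∀ k : ℕ, 2 * k + 2 = 2 * k + 1 + 1 from fun k => rfl, h]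
    exact h21
  have hSz : Tendsto (fun k => S (x (2 * k + 2))) atTop (𝓝 l) := by
    have h : ∀ k : ℕ, S (x (2 * k + 2)) = y (2 * k + 2) := fun k =>
      (hS (2 * k + 2) ⟨k + 1, by ring⟩).symm
    simp only [h]
    exact h22
  have hSA : S l = A l := by
    have hAS := hrcAS (fun k => x (2 * k + 2)) l hAz hSz
    have hd1 := hcptAS (fun k => x (2 * k + 2)) l hAz hSz
    exact dist_eq_zero.mp (tendsto_nhds_unique (hAS.2.dist hAS.1) hd1)
  have hAz' : Tendsto (fun k => A (x (2 * k + 1))) atTop (𝓝 l) := by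
    have h : ∀ k : ℕ, A (x (2 * k + 1)) = y (2 * k) := fun k => (hy (2 * k)).symm
    simp only [h]
    exact h20
  have hTz' : Tendsto (fun k => T (x (2 * k + 1))) atTop (𝓝 l) := by
    have h : ∀ k : ℕ, T (x (2 * k + 1)) = y (2 * k + 1) := fun k =>
      (hT (2 * k + 1) ⟨k, by ring⟩).symm
    simp only [h]
    exact h21
  have hTA : T l = A l := by
    have hAT := hrcAT (fun k => x (2 * k + 1)) l hAz' hTz'
    have hd2 := hcptAT (fun k => x (2 * k + 1)) l hAz' hTz'
    exact dist_eq_zero.mp (tendsto_nhds_unique (hAT.2.dist hAT.1) hd2)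
  have hconstA : Tendsto (fun _ : ℕ => A l) atTop (𝓝 (A l)) := tendsto_const_nhds
  have hSAl : S (A l) = A (S l) := by
    have hcS := hcptAS (fun _ => l) (A l) hconstA (by rw [← hSA]; exact tendsto_const_nhds)
    exact dist_eq_zero.mp (tendsto_nhds_unique tendsto_const_nhds hcS)
  have hTAl : T (A l) = A (T l) := by
    have hcT := hcptAT (fun _ => l) (A l) hconstA (by rw [← hTA]; exact tendsto_const_nhds)
    exact dist_eq_zero.mp (tendsto_nhds_unique tendsto_const_nhds hcT)
  have hSw : S (A l) = A (A l) := by rw [hSAl, hSA]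
  have hTw : T (A l) = A (A l) := by rw [hTAl, hTA]
  have hAA : A (A l) = A l := by
    by_contra hne'
    have hDpos : 0 < dist (A l) (A (A l)) := dist_pos.mpr fun h => hne' h.symm
    have h1 := hc1 l (A l) (fun h : A l = A (A l) => hne' h.symm)
    rw [hSA, hTw] at h1
    simp only [dist_self, mul_zero, zero_mul, zero_div] at h1
    rw [dist_comm (A (A l)) (A l), mul_div_assoc, div_self hDpos.ne', mul_one,
      max_eq_right hDpos.le, max_self] at h1
    exact absurd h1 (not_le.mpr (hφlt _ hDpos))
  have hfixT : T (A l) = A l := by rw [hTw, hAA]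
  have hlAl : l = A l := by
    by_contra hne'
    have hcpos : 0 < dist l (A l) := dist_pos.mpr hne'
    obtain ⟨η', hη'pos, hφc'⟩ : ∃ η' > 0, φ (dist l (A l) + η') < dist l (A l) := by
      have hcw := hφc (dist l (A l)) (Set.mem_Ici.mpr hcpos.le)
      rw [Metric.continuousWithinAt_iff] at hcw
      obtain ⟨δ', hδ'pos, h2⟩ := hcw (dist l (A l) - φ (dist l (A l)))
        (by linarith [hφlt _ hcpos])
      refine ⟨δ' / 2, by linarith, ?_⟩
      have h3 := h2 (Set.mem_Ici.mpr (by positivity : (0:ℝ) ≤ dist l (A l) + δ' / 2))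
        (by rw [Real.dist_eq, show dist l (A l) + δ' / 2 - dist l (A l) = δ' / 2 by ring,
          abs_of_pos (by linarith)]; linarith)
      rw [Real.dist_eq] at h3
      have h4 := abs_lt.mp h3
      linarith [h4.2]
    have hq1 : Tendsto (fun k => dist (y (2 * k + 1)) (A l)) atTop (𝓝 (dist l (A l))) :=
      h21.dist tendsto_const_nhds
    have hq2 : Tendsto (fun k => dist (y (2 * k + 2)) (A l)) atTop (𝓝 (dist l (A l))) :=
      h22.dist tendsto_const_nhds
    have hev : ∀ᶠ k in atTop, dist (y (2 * k + 2)) (A l) ≤ φ (dist l (A l) + η') := by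
      filter_upwards [hq1.eventually_lt_const (by linarith : dist l (A l) < dist l (A l) + η'),
        hq1.eventually_const_lt hcpos,
        hq2.eventually_lt_const (by linarith : dist l (A l) < dist l (A l) + η')]
        with k h1 h0 h2
      have hne2 : A (x (2 * k + 1 + 1)) ≠ A (A l) := by
        intro h
        rw [← hy (2 * k + 1), hAA] at h
        rw [h, dist_self] at h0
        exact lt_irrefl _ h0
      have h3 := hc1 (x (2 * k + 1 + 1)) (A l) hne2
      rw [show S (x (2 * k + 1 + 1)) = y (2 * k + 2) from (hS (2 * k + 2) ⟨k + 1, by ring⟩).symm,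
        hfixT, ← hy (2 * k + 1), hAA] at h3
      simp only [dist_self, mul_zero, zero_div] at h3
      rw [mul_comm (dist (y (2 * k + 1)) (A l)) (dist (A l) (y (2 * k + 2))),
        mul_div_assoc, div_self (ne_of_gt h0), mul_one] at h3
      refine h3.trans (hφm (Set.mem_Ici.mpr (le_trans dist_nonneg (le_max_left _ _)))
        (Set.mem_Ici.mpr (by linarith)) ?_)
      refine max_le h1.le (max_le (by linarith) ?_)
      rw [dist_comm]
      exact h2.le
    have hle := le_of_tendsto hq2 hev
    linarith
  have hAl : A l = l := hlAl.symm
  have hSl : S l = l := by rw [hSA, hAl]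
  have hTl : T l = l := by rw [hTA, hAl]
  refine ⟨by rw [hyfun]; exact hcauchy, l, by rw [hyfun]; exact hl, ⟨hSl, hTl, hAl⟩, ?_, ?_⟩
  · intro v ⟨hvS, hvT, hvA⟩
    by_contra hne'
    have hDpos : 0 < dist v l := dist_pos.mpr hne'
    have h := hc1 v l (by rw [hvA, hAl]; exact hne')
    rw [hvS, hTl, hvA, hAl] at h
    simp only [dist_self, zero_mul, mul_zero, zero_div] at h
    rw [dist_comm l v, mul_div_assoc, div_self hDpos.ne', mul_one,
      max_eq_right dist_nonneg, max_self] at h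
    exact absurd h (not_le.mpr (hφlt _ hDpos))
  · exact mem_closure_of_tendsto hl (Eventually.of_forall fun n => ⟨n, hy n⟩)
end
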